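/- arXiv:math/0309124 — 8 statements merged into one kernel-verified Lean document; each statement's English description precedes it below -/
import Mathlib

section
/- Let K be a differential field of characteristic p, let F be a differential field extension of K, let N₁, N₂ > 1 be integers, and let q be a positive integer with N₂ ≤ q. Suppose L₁(Y) and L₂(Y) are nonzero homogeneous linear differential polynomials of orders N₁ and N₂ respectively with coefficients in K, and suppose either p = 0 or p > (q+1)(N₁−1) − 1. If y ∈ F is nonzero and satisfies L₁(y) = 0 and L₂(y^q) = 0, then D^j y / y is algebraic over K for every integer j ≥ 1. -/
open Finset Polynomial

section DerivAux

variable {F : Type*} [Field F] {D : F → F}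

lemma D_zero' (Dadd : ∀ x z : F, D (x + z) = D x + D z) : D 0 = 0 := by
  have := Dadd 0 0
  simpa using this

lemma D_sum' (Dadd : ∀ x z : F, D (x + z) = D x + D z) {ι : Type*} (s : Finset ι) (f : ι → F) :
    D (∑ i ∈ s, f i) = ∑ i ∈ s, D (f i) := by
  classical
  induction s using Finset.induction with
  | empty => simpa using D_zero' Dadd
  | insert _ _ h ih => rw [Finset.sum_insert h, Dadd, ih, Finset.sum_insert h]

lemma D_nsmul' (Dadd : ∀ x z : F, D (x + z) = D x + D z) (n : ℕ) (x : F) :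
    D (n • x) = n • D x := by
  induction n with
  | zero => simpa using D_zero' Dadd
  | succ n ih => rw [succ_nsmul, succ_nsmul, Dadd, ih]

lemma D_leibniz (Dadd : ∀ x z : F, D (x + z) = D x + D z)
    (Dmul : ∀ x z : F, D (x * z) = x * D z + z * D x) (x z : F) (n : ℕ) :
    D^[n] (x * z) = ∑ k ∈ range (n + 1), n.choose k • (D^[n - k] x * D^[k] z) := by
  induction n with
  | zero => simp
  | succ n IH =>
    calc
      D^[n + 1] (x * z) =
          D (∑ k ∈ range n.succ, n.choose k • (D^[n - k] x * D^[k] z)) := by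
        rw [Function.iterate_succ_apply', IH]
      _ = (∑ k ∈ range n.succ, n.choose k • (D^[n - k + 1] x * D^[k] z)) +
          ∑ k ∈ range n.succ, n.choose k • (D^[n - k] x * D^[k + 1] z) := by
        rw [D_sum' Dadd, ← sum_add_distrib]
        refine sum_congr rfl fun k _ => ?_
        rw [D_nsmul' Dadd, Dmul, Function.iterate_succ_apply', Function.iterate_succ_apply',
          ← smul_add]
        ring_nf
      _ = (∑ k ∈ range n.succ,
                n.choose k.succ • (D^[n - k] x * D^[k + 1] z)) +
              1 • (D^[n + 1] x * D^[0] z) +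
            ∑ k ∈ range n.succ, n.choose k • (D^[n - k] x * D^[k + 1] z) := ?_
      _ = ((∑ k ∈ range n.succ, n.choose k • (D^[n - k] x * D^[k + 1] z)) +
              ∑ k ∈ range n.succ,
                n.choose k.succ • (D^[n - k] x * D^[k + 1] z)) +
            1 • (D^[n + 1] x * D^[0] z) := by
        rw [add_comm, add_assoc]
      _ = (∑ i ∈ range n.succ,
              (n + 1).choose (i + 1) • (D^[n + 1 - (i + 1)] x * D^[i + 1] z)) +
            1 • (D^[n + 1] x * D^[0] z) := by
        simp_rw [Nat.choose_succ_succ, Nat.succ_sub_succ, add_smul, sum_add_distrib]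
      _ = ∑ k ∈ range n.succ.succ, n.succ.choose k • (D^[n.succ - k] x * D^[k] z) := by
        rw [sum_range_succ' _ n.succ, Nat.choose_zero_right, tsub_zero]
    congr
    refine (sum_range_succ' _ _).trans (congr_arg₂ (· + ·) ?_ ?_)
    · rw [sum_range_succ, Nat.choose_succ_self, zero_smul, add_zero]
      refine sum_congr rfl fun k hk => ?_
      rw [mem_range] at hk
      congr
      omega
    · rw [Nat.choose_zero_right, tsub_zero]

end DerivAux

lemma span_iterate {K F : Type*} [Field K] [Field F] [Algebra K F]
    (D : F → F) (Dadd : ∀ x z : F, D (x + z) = D x + D z)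
    (Dmul : ∀ x z : F, D (x * z) = x * D z + z * D x)
    (DK : K → K) (Dcomp : ∀ c : K, D (algebraMap K F c) = algebraMap K F (DK c))
    (N : ℕ) (hN : 0 < N) (a : ℕ → K) (haN : a N ≠ 0) (x : F)
    (hrel : ∑ i ∈ Finset.range (N + 1), algebraMap K F (a i) * D^[i] x = 0) (n : ℕ) :
    ∃ c : ℕ → K, D^[n] x = ∑ i ∈ Finset.range N, algebraMap K F (c i) * D^[i] x := by
  set S : Submodule K F := Submodule.span K (Set.range fun i : Fin N => D^[(i : ℕ)] x) with hS
  have hbase : ∀ i : ℕ, i < N → D^[i] x ∈ S := fun i hi =>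
    Submodule.subset_span ⟨⟨i, hi⟩, rfl⟩
  have htop : D^[N] x ∈ S := by
    have h1 : algebraMap K F (a N) * D^[N] x =
        - ∑ i ∈ Finset.range N, algebraMap K F (a i) * D^[i] x := by
      rw [Finset.sum_range_succ] at hrel
      linear_combination hrel
    have h2 : D^[N] x = (a N)⁻¹ • (algebraMap K F (a N) * D^[N] x) := by
      rw [Algebra.smul_def, ← mul_assoc, ← map_mul, inv_mul_cancel₀ haN, map_one, one_mul]
    rw [h2, h1]
    refine Submodule.smul_mem _ _ (Submodule.neg_mem _ (Submodule.sum_mem _ fun i hi => ?_))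
    rw [Finset.mem_range] at hi
    rw [← Algebra.smul_def]
    exact Submodule.smul_mem _ _ (hbase i hi)
  have hstep : ∀ i : ℕ, i < N → D (D^[i] x) ∈ S := by
    intro i hi
    rw [show D (D^[i] x) = D^[i+1] x from (Function.iterate_succ_apply' D i x).symm]
    rcases lt_or_eq_of_le (Nat.succ_le_of_lt hi) with h | h
    · exact hbase _ h
    · rw [show i + 1 = N from h]; exact htop
  have hstable : ∀ w ∈ S, D w ∈ S := by
    intro w hw
    induction hw using Submodule.span_induction with
    | mem w hw => obtain ⟨i, rfl⟩ := hw; exact hstep i i.2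
    | zero => rw [D_zero' Dadd]; exact Submodule.zero_mem _
    | add u v hu hv hu' hv' => rw [Dadd]; exact Submodule.add_mem _ hu' hv'
    | smul c u hu hu' =>
      have : D (c • u) = (DK c) • u + c • D u := by
        rw [Algebra.smul_def, Dmul, Dcomp, Algebra.smul_def, Algebra.smul_def, mul_comm u]
        ring
      rw [this]
      exact Submodule.add_mem _ (Submodule.smul_mem _ _ hu) (Submodule.smul_mem _ _ hu')
  have hall : ∀ j : ℕ, D^[j] x ∈ S := by
    intro j
    induction j with
    | zero => exact hbase 0 hN
    | succ j ih => rw [Function.iterate_succ_apply']; exact hstable _ ih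
  obtain ⟨c, hc⟩ := (Submodule.mem_span_range_iff_exists_fun K).1 (hall n)
  refine ⟨fun i => if h : i < N then c ⟨i, h⟩ else 0, ?_⟩
  rw [← hc, ← Fin.sum_univ_eq_sum_range]
  refine Finset.sum_congr rfl fun i _ => ?_
  have hdif : (fun j => if h : j < N then c ⟨j, h⟩ else 0) (i : ℕ) = c i := by
    simp [i.2]
  rw [hdif, Algebra.smul_def]

lemma exists_valuationSubring_lt {K L : Type*} [Field K] [Field L] [Algebra K L]
    {t : L} (ht : Transcendental K t) :
    ∃ B : ValuationSubring L, (∀ c : K, algebraMap K L c ∈ B) ∧ t ∉ B := by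
  classical
  have ht0 : t ≠ 0 := by rintro rfl; exact ht isAlgebraic_zero
  have hs : Transcendental K t⁻¹ := by
    intro h
    exact ht (by simpa using h.inv)
  set s : L := t⁻¹ with hsdef
  set f : Polynomial K →+* L := (Polynomial.aeval s : Polynomial K →ₐ[K] L).toRingHom with hf
  have hinj : Function.Injective f := transcendental_iff_injective.mp hs
  set A₀ : Subring L := f.range with hA₀
  have hmemK : ∀ c : K, algebraMap K L c ∈ A₀ := fun c => ⟨Polynomial.C c, by simp [hf]⟩
  have hmems : s ∈ A₀ := ⟨Polynomial.X, by simp [hf]⟩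
  have hbij : Function.Bijective f.rangeRestrict :=
    ⟨fun a b hab => hinj (congrArg Subtype.val hab), f.rangeRestrict_surjective⟩
  set e : Polynomial K ≃+* A₀ := RingEquiv.ofBijective f.rangeRestrict hbij with he
  set Ψ : Polynomial K →+* K := Polynomial.evalRingHom 0 with hΨ
  set ψ : A₀ →+* K := Ψ.comp e.symm.toRingHom with hψ
  set P : Ideal A₀ := RingHom.ker ψ with hP
  haveI hPprime : P.IsPrime := RingHom.ker_isPrime ψ
  have hsP : (⟨s, hmems⟩ : A₀) ∈ P := by
    have h1 : e Polynomial.X = ⟨s, hmems⟩ := by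
      apply Subtype.ext
      simp [he, hf]
    have h2 : e.symm ⟨s, hmems⟩ = Polynomial.X := by rw [← h1, RingEquiv.symm_apply_apply]
    simp [hP, RingHom.mem_ker, hψ, h2, hΨ]
  obtain ⟨B, hle, hloc⟩ := (LocalSubring.ofPrime A₀ P).exists_le_valuationSubring
  refine ⟨B, fun c => hle (LocalSubring.le_ofPrime A₀ P (hmemK c)), ?_⟩
  intro htB
  have hnonunit : ¬ IsUnit (Subring.inclusion (LocalSubring.le_ofPrime A₀ P) ⟨s, hmems⟩ :
      (LocalSubring.ofPrime A₀ P).toSubring) := by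
    intro hu
    have := (IsLocalization.AtPrime.isUnit_to_map_iff
      (LocalSubring.ofPrime A₀ P).toSubring P (⟨s, hmems⟩ : A₀)).mp hu
    exact this hsP
  have hnonunitB : ¬ IsUnit (Subring.inclusion hle
      (Subring.inclusion (LocalSubring.le_ofPrime A₀ P) ⟨s, hmems⟩)) := by
    intro hu
    exact hnonunit (hloc.1 _ hu)
  apply hnonunitB
  refine isUnit_iff_exists_inv.mpr ⟨⟨t, htB⟩, ?_⟩
  apply Subtype.ext
  show t⁻¹ * t = 1
  exact inv_mul_cancel₀ ht0

section GammaAux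
variable {Γ : Type*} [LinearOrderedCommGroupWithZero Γ]

lemma pow_lt_pow_left_gwz {a b : Γ} (hab : a < b) {n : ℕ} (hn : n ≠ 0) : a ^ n < b ^ n := by
  rcases eq_or_ne a 0 with rfl | ha
  · rw [zero_pow hn]
    have hb : b ≠ 0 := (zero_le'.trans_lt hab).ne'
    exact zero_lt_iff.mpr (pow_ne_zero _ hb)
  · have hb : b ≠ 0 := (lt_of_le_of_lt zero_le' hab).ne'
    have h1 : a / b < 1 := by
      rw [div_lt_iff₀ (zero_lt_iff.mpr hb), one_mul]
      exact hab
    have h2 : (a / b) ^ n < 1 := pow_lt_one_iff hn |>.mpr h1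
    rw [div_pow] at h2
    rw [div_lt_iff₀ (zero_lt_iff.mpr (pow_ne_zero _ hb)), one_mul] at h2
    exact h2

lemma pow_le_pow_cancel {a b : Γ} {n : ℕ} (hn : n ≠ 0) (h : a ^ n ≤ b ^ n) : a ≤ b := by
  by_contra hba
  exact absurd h (not_le.mpr (pow_lt_pow_left_gwz (not_le.mp hba) hn))

lemma exists_max_root_ratio (f : ℕ → Γ) (m : ℕ) (hm : 1 ≤ m) :
    ∃ j, 1 ≤ j ∧ j ≤ m ∧ ∀ i, 1 ≤ i → i ≤ m → (f i) ^ j ≤ (f j) ^ i := by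
  induction m with
  | zero => omega
  | succ m IH =>
    rcases Nat.lt_or_ge 1 (m+1) with hm1 | hm1
    · have hm' : 1 ≤ m := by omega
      obtain ⟨j, hj1, hjm, hj⟩ := IH hm'
      rcases le_or_gt ((f (m+1)) ^ j) ((f j) ^ (m+1)) with hc | hc
      · exact ⟨j, hj1, by omega, fun i hi1 him => by
          rcases Nat.lt_or_ge i (m+1) with h | h
          · exact hj i hi1 (by omega)
          · have : i = m + 1 := by omega
            subst this; exact hc⟩
      · refine ⟨m+1, by omega, le_rfl, fun i hi1 him => ?_⟩
        rcases Nat.lt_or_ge i (m+1) with h | h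
        · have h1 : (f i) ^ j ≤ (f j) ^ i := hj i hi1 (by omega)
          have h2 : (f j) ^ (m+1) ≤ (f (m+1)) ^ j := le_of_lt hc
          have h3 : ((f i) ^ (m+1)) ^ j ≤ ((f (m+1)) ^ i) ^ j := by
            calc ((f i) ^ (m+1)) ^ j = ((f i) ^ j) ^ (m+1) := by
                  rw [← pow_mul, ← pow_mul, Nat.mul_comm]
              _ ≤ ((f j) ^ i) ^ (m+1) := pow_le_pow_left' h1 _
              _ = ((f j) ^ (m+1)) ^ i := by rw [← pow_mul, ← pow_mul, Nat.mul_comm]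
              _ ≤ ((f (m+1)) ^ j) ^ i := pow_le_pow_left' h2 _
              _ = ((f (m+1)) ^ i) ^ j := by rw [← pow_mul, ← pow_mul, Nat.mul_comm]
          exact pow_le_pow_cancel (by omega : j ≠ 0) h3
        · have : i = m + 1 := by omega
          subst this; exact le_rfl
    · have : m = 0 := by omega
      subst this
      exact ⟨1, le_rfl, le_rfl, fun i hi1 him => by
        have : i = 1 := by omega
        subst this; exact le_rfl⟩

end GammaAux

lemma isAlgebraic_finsetSum {K F : Type*} [Field K] [Field F] [Algebra K F]
    {ι : Type*} (s : Finset ι) (f : ι → F) (h : ∀ i ∈ s, IsAlgebraic K (f i)) :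
    IsAlgebraic K (∑ i ∈ s, f i) := by
  rw [isAlgebraic_iff_isIntegral]
  exact IsIntegral.sum f fun i hi => isAlgebraic_iff_isIntegral.mp (h i hi)

lemma isAlgebraic_mul' {K F : Type*} [Field K] [Field F] [Algebra K F]
    {x z : F} (hx : IsAlgebraic K x) (hz : IsAlgebraic K z) : IsAlgebraic K (x * z) := by
  rw [isAlgebraic_iff_isIntegral]
  exact (isAlgebraic_iff_isIntegral.mp hx).mul (isAlgebraic_iff_isIntegral.mp hz)

set_option maxHeartbeats 2000000 in
/-- **Hillar, Theorem 1.2 (2), algebraicity.**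
If `K` has characteristic `p` with `p = 0` or `p > (q+1)(N₁−1) − 1`, where
`N₂ ≤ q`, and a nonzero `y` satisfies `L₁(y) = 0` and `L₂(y^q) = 0`, then
`Dʲy/y` is algebraic over `K` for every `j ≥ 1`. -/
theorem iter_logderiv_algebraic_of_pow
    (K F : Type*) [Field K] [Field F] [Algebra K F]
    (D : F → F)
    (Dadd : ∀ x z : F, D (x + z) = D x + D z)
    (Dmul : ∀ x z : F, D (x * z) = x * D z + z * D x)
    (DK : K → K)
    (DKadd : ∀ x z : K, DK (x + z) = DK x + DK z)
    (DKmul : ∀ x z : K, DK (x * z) = x * DK z + z * DK x)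
    (Dcomp : ∀ x : K, D (algebraMap K F x) = algebraMap K F (DK x))
    (N₁ N₂ : ℕ) (hN₁ : 1 < N₁) (hN₂ : 1 < N₂)
    (q : ℕ) (hq : 0 < q) (hqN : N₂ ≤ q)
    (p : ℕ) (hp : CharP K p) (hpbig : p = 0 ∨ (q + 1) * (N₁ - 1) - 1 < p)
    (a b : ℕ → K) (haN : a N₁ ≠ 0) (hbN : b N₂ ≠ 0)
    (y : F) (hy : y ≠ 0)
    (h₁ : ∑ i ∈ Finset.range (N₁ + 1), algebraMap K F (a i) * D^[i] y = 0)
    (h₂ : ∑ i ∈ Finset.range (N₂ + 1), algebraMap K F (b i) * D^[i] (y ^ q) = 0) :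
    ∀ j : ℕ, 1 ≤ j → IsAlgebraic K (D^[j] y / y) := by
  classical
  set m := N₁ - 1 with hmdef
  have hm1 : 1 ≤ m := by omega
  have hN₁m : N₁ = m + 1 := by omega
  -- coefficients expressing all derivatives in terms of the first few
  have hcex := span_iterate D Dadd Dmul DK Dcomp N₁ (by omega) a haN y h₁
  choose c hc using hcex
  have hdex := span_iterate D Dadd Dmul DK Dcomp N₂ (by omega) b hbN (y ^ q) h₂
  choose dc hd using hdex
  set u : ℕ → F := fun n => D^[n] y / y with hudef
  have hurel : ∀ n, u n = ∑ i ∈ Finset.range N₁, algebraMap K F (c n i) * u i := by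
    intro n
    show D^[n] y / y = _
    rw [hc n, Finset.sum_div]
    exact Finset.sum_congr rfl fun i _ => (mul_div_assoc _ _ _)
  have hu0 : u 0 = 1 := div_self hy
  -- main claim: u i is algebraic for all i ≤ m
  have key : ∀ i : ℕ, i ≤ m → IsAlgebraic K (u i) := by
    by_contra hcon
    push_neg at hcon
    obtain ⟨i₀, hi₀m, hi₀⟩ := hcon
    have hi₀1 : 1 ≤ i₀ := by
      rcases Nat.eq_zero_or_pos i₀ with h | h
      · exfalso; apply hi₀; rw [h, hu0]; exact isAlgebraic_one
      · exact h
    -- move to the algebraic closure of F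
    set L := AlgebraicClosure F with hLdef
    set ι2 : F →+* L := algebraMap F L with hι2
    set κ : K →+* L := algebraMap K L with hκ
    have hκι2 : ∀ x : K, ι2 (algebraMap K F x) = κ x := fun x =>
      (IsScalarTower.algebraMap_apply K F L x).symm
    set U : ℕ → L := fun n => ι2 (u n) with hUdef
    have hUtrans : Transcendental K (U i₀) := by
      intro halg
      exact hi₀ ((isAlgebraic_algebraMap_iff (algebraMap F L).injective).mp halg)
    obtain ⟨B, hKB, htB⟩ := exists_valuationSubring_lt hUtrans
    set v := B.valuation with hv
    have hvκ : ∀ x : K, v (κ x) ≤ 1 := fun x =>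
      (ValuationSubring.valuation_le_one_iff B _).2 (hKB x)
    have hvUi₀ : 1 < v (U i₀) :=
      lt_of_not_ge fun h => htB ((ValuationSubring.valuation_le_one_iff B _).1 h)
    -- pick the index with maximal "root-normalized" valuation
    obtain ⟨R, hR1, hRm, hRmax⟩ := exists_max_root_ratio (fun i => v (U i)) m hm1
    have hΛ : 1 < v (U R) := by
      by_contra h
      have h2 : v (U R) ^ i₀ ≤ 1 := (pow_le_one_iff (by omega : i₀ ≠ 0)).mpr (not_lt.mp h)
      have h3 : (1 : _) < v (U i₀) ^ R := (one_lt_pow_iff (by omega : R ≠ 0)).mpr hvUi₀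
      exact absurd ((hRmax i₀ hi₀1 hi₀m).trans h2) h3.not_ge
    have hUR0 : U R ≠ 0 := by
      intro h
      rw [h, map_zero] at hΛ
      exact absurd hΛ (not_lt.mpr zero_le')
    obtain ⟨w, hw⟩ := IsAlgClosed.exists_pow_nat_eq (U R) (show 0 < R by omega)
    set σ := v w with hσdef
    have hσR : σ ^ R = v (U R) := by rw [hσdef, ← map_pow, hw]
    have hσ : 1 < σ := by
      have h1 : (1:_) < σ ^ R := by rw [hσR]; exact hΛ
      exact (one_lt_pow_iff (by omega : R ≠ 0)).mp h1
    have hσ0 : σ ≠ 0 := (zero_lt_one.trans hσ).ne'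
    have hw0 : w ≠ 0 := by
      intro h
      rw [hσdef, h, map_zero] at hσ
      exact absurd hσ (not_lt.mpr zero_le')
    have hUrel : ∀ n, U n = ∑ i ∈ Finset.range N₁, κ (c n i) * U i := by
      intro n
      rw [hUdef]
      show ι2 (u n) = _
      rw [hurel n, map_sum]
      exact Finset.sum_congr rfl fun i _ => by rw [map_mul, hκι2]
    have hU0 : U 0 = 1 := by rw [hUdef]; show ι2 (u 0) = 1; rw [hu0, map_one]
    have hvUle : ∀ n, n ≤ m → v (U n) ≤ σ ^ n := by
      intro n hn
      rcases Nat.eq_zero_or_pos n with rfl | hn1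
      · rw [hU0, map_one, pow_zero]
      · have h1 : v (U n) ^ R ≤ (v (U R)) ^ n := hRmax n hn1 hn
        have h2 : (v (U R)) ^ n = (σ ^ n) ^ R := by
          rw [← hσR, ← pow_mul, ← pow_mul, Nat.mul_comm]
        rw [h2] at h1
        exact pow_le_pow_cancel (by omega : R ≠ 0) h1
    have hvU : ∀ n, v (U n) ≤ σ ^ n := by
      intro n
      rcases le_or_gt n m with hn | hn
      · exact hvUle n hn
      · rw [hUrel n]
        apply v.map_sum_le
        intro i hi
        rw [Finset.mem_range] at hi
        rw [v.map_mul]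
        calc v (κ (c n i)) * v (U i) ≤ 1 * σ ^ i :=
              mul_le_mul' (hvκ _) (hvUle i (by omega))
          _ = σ ^ i := one_mul _
          _ ≤ σ ^ n := pow_le_pow_right' hσ.le (by omega)
    have hvUstrict : ∀ n, m < n → v (U n) < σ ^ n := by
      intro n hn
      have h1 : v (U n) ≤ σ ^ m := by
        rw [hUrel n]
        apply v.map_sum_le
        intro i hi
        rw [Finset.mem_range] at hi
        rw [v.map_mul]
        calc v (κ (c n i)) * v (U i) ≤ 1 * σ ^ i :=
              mul_le_mul' (hvκ _) (hvUle i (by omega))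
          _ = σ ^ i := one_mul _
          _ ≤ σ ^ m := pow_le_pow_right' hσ.le (by omega)
      exact h1.trans_lt (pow_lt_pow_right₀ hσ hn)
    -- the residue map
    set Res := IsLocalRing.ResidueField B with hRes
    set ρ : B →+* Res := IsLocalRing.residue B with hρ
    set r : L → Res := fun x => if h : x ∈ B then ρ ⟨x, h⟩ else 0 with hrdef
    have hr_def : ∀ (x : L) (h : x ∈ B), r x = ρ ⟨x, h⟩ := fun x h => dif_pos h
    have r_add : ∀ x z : L, x ∈ B → z ∈ B → r (x + z) = r x + r z := by
      intro x z hx hz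
      rw [hr_def x hx, hr_def z hz, hr_def (x + z) (add_mem hx hz), ← map_add]
      rfl
    have r_mul : ∀ x z : L, x ∈ B → z ∈ B → r (x * z) = r x * r z := by
      intro x z hx hz
      rw [hr_def x hx, hr_def z hz, hr_def (x * z) (mul_mem hx hz), ← map_mul]
      rfl
    have r_natCast : ∀ C : ℕ, r ((C : L)) = (C : Res) := by
      intro C
      have hmem : ((C : ℕ) : L) ∈ B := by
        exact_mod_cast natCast_mem B.toSubring C
      rw [hr_def _ hmem]
      have h1 : (⟨(C : L), hmem⟩ : B) = (C : B) := by
        apply Subtype.ext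
        push_cast
        rfl
      rw [h1, map_natCast]
    have r_one : r 1 = 1 := by
      have := r_natCast 1
      simpa using this
    have r_sum : ∀ (s : Finset ℕ) (f : ℕ → L), (∀ i ∈ s, f i ∈ B) →
        r (∑ i ∈ s, f i) = ∑ i ∈ s, r (f i) := by
      intro s f hf
      induction s using Finset.induction with
      | empty =>
        rw [Finset.sum_empty, Finset.sum_empty, hr_def 0 (zero_mem _)]
        show ρ 0 = 0
        exact map_zero ρ
      | @insert a s ha ih =>
        rw [Finset.sum_insert ha, Finset.sum_insert ha,
          r_add _ _ (hf a (Finset.mem_insert_self a s))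
            (sum_mem fun i hi => hf i (Finset.mem_insert_of_mem hi)),
          ih fun i hi => hf i (Finset.mem_insert_of_mem hi)]
    have r_zero_of_lt : ∀ x : L, v x < 1 → r x = 0 := by
      intro x hx
      have hmem : x ∈ B := (ValuationSubring.valuation_le_one_iff B _).1 hx.le
      rw [hr_def x hmem]
      exact Ideal.Quotient.eq_zero_iff_mem.mpr
        ((ValuationSubring.valuation_lt_one_iff B _).mpr hx)
    have r_v_eq_one : ∀ x : L, v x ≤ 1 → r x ≠ 0 → v x = 1 := by
      intro x hle hne
      rcases lt_or_eq_of_le hle with h | h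
      · exact absurd (r_zero_of_lt x h) hne
      · exact h
    -- memberships
    have hUmem : ∀ n, U n / w ^ n ∈ B := by
      intro n
      apply B.mem_of_valuation_le_one
      rw [map_div₀, map_pow]
      rw [div_le_one₀ (zero_lt_iff.mpr (pow_ne_zero _ hσ0))]
      exact hvU n
    -- the double sequence
    set Wt : ℕ → ℕ → L := fun t n => ι2 (D^[n] (y ^ t) / y ^ t) with hWtdef
    have hWt1 : ∀ n, Wt 1 n = U n := by
      intro n
      rw [hWtdef, hUdef]
      show ι2 (D^[n] (y ^ 1) / y ^ 1) = ι2 (u n)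
      rw [pow_one]
    have hWrec : ∀ t n, Wt (t+1) n =
        ∑ k ∈ Finset.range (n+1), n.choose k • (Wt t (n - k) * U k) := by
      intro t n
      have hyt : y ^ t ≠ 0 := pow_ne_zero _ hy
      have hL := D_leibniz Dadd Dmul (y ^ t) y n
      have hps : y ^ (t+1) = y ^ t * y := pow_succ y t
      have hstep : D^[n] (y ^ (t+1)) / y ^ (t+1) =
          ∑ k ∈ Finset.range (n+1),
            n.choose k • ((D^[n - k] (y ^ t) / y ^ t) * (D^[k] y / y)) := by
        rw [hps, hL, Finset.sum_div]
        refine Finset.sum_congr rfl fun k _ => ?_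
        rw [nsmul_eq_mul, nsmul_eq_mul, mul_div_assoc, mul_div_mul_comm]
      show ι2 (D^[n] (y ^ (t+1)) / y ^ (t+1)) = _
      rw [hstep, map_sum]
      refine Finset.sum_congr rfl fun k _ => ?_
      rw [nsmul_eq_mul, nsmul_eq_mul, map_mul, map_mul, map_natCast]
    have hWv : ∀ t, 1 ≤ t → ∀ n, v (Wt t n) ≤ σ ^ n := by
      refine Nat.le_induction ?_ ?_
      · intro n; rw [hWt1 n]; exact hvU n
      · intro t ht IH n
        rw [hWrec t n]
        apply v.map_sum_le
        intro k hk
        rw [Finset.mem_range] at hk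
        rw [nsmul_eq_mul, v.map_mul, v.map_mul]
        have hC : v ((n.choose k : ℕ) : L) ≤ 1 := by
          rw [show ((n.choose k : ℕ) : L) = κ ((n.choose k : ℕ) : K) from
            (map_natCast κ _).symm]
          exact hvκ _
        calc v ((n.choose k : ℕ) : L) * (v (Wt t (n - k)) * v (U k))
            ≤ 1 * (σ ^ (n - k) * σ ^ k) :=
              mul_le_mul' hC (mul_le_mul' (IH (n - k)) (hvU k))
          _ = σ ^ n := by rw [one_mul, ← pow_add]; congr 1; omega
    have hWmem : ∀ t, 1 ≤ t → ∀ n, Wt t n / w ^ n ∈ B := by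
      intro t ht n
      apply B.mem_of_valuation_le_one
      rw [map_div₀, map_pow]
      rw [div_le_one₀ (zero_lt_iff.mpr (pow_ne_zero _ hσ0))]
      exact hWv t ht n
    -- residues
    set η : ℕ → Res := fun n => r (U n / w ^ n) with hηdef
    set θ : ℕ → ℕ → Res := fun t n => r (Wt t n / w ^ n) with hθdef
    have hθ1 : ∀ n, θ 1 n = η n := by
      intro n
      rw [hθdef, hηdef]
      show r (Wt 1 n / w ^ n) = r (U n / w ^ n)
      rw [hWt1 n]
    have hηR : η R = 1 := by
      rw [hηdef]
      show r (U R / w ^ R) = 1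
      rw [hw, div_self hUR0, r_one]
    have hηbig : ∀ n, m < n → η n = 0 := by
      intro n hn
      rw [hηdef]
      show r (U n / w ^ n) = 0
      apply r_zero_of_lt
      rw [map_div₀, map_pow]
      rw [div_lt_iff₀ (zero_lt_iff.mpr (pow_ne_zero _ hσ0)), one_mul]
      exact hvUstrict n hn
    have hθrec : ∀ t, 1 ≤ t → ∀ n, θ (t+1) n =
        ∑ k ∈ Finset.range (n+1), ((n.choose k : ℕ) : Res) * (θ t (n - k) * η k) := by
      intro t ht n
      have hiden : Wt (t+1) n / w ^ n =
          ∑ k ∈ Finset.range (n+1),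
            ((n.choose k : ℕ) : L) * ((Wt t (n - k) / w ^ (n - k)) * (U k / w ^ k)) := by
        rw [hWrec t n, Finset.sum_div]
        refine Finset.sum_congr rfl fun k hk => ?_
        rw [Finset.mem_range] at hk
        rw [nsmul_eq_mul, mul_div_assoc, div_mul_div_comm, ← pow_add,
          show n - k + k = n by omega]
      rw [hθdef]
      show r (Wt (t+1) n / w ^ n) = _
      rw [hiden, r_sum _ _ (fun k hk => by
        rw [Finset.mem_range] at hk
        exact mul_mem (by exact_mod_cast natCast_mem B.toSubring (n.choose k))
          (mul_mem (hWmem t ht (n - k)) (hUmem k)))]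
      refine Finset.sum_congr rfl fun k hk => ?_
      rw [Finset.mem_range] at hk
      rw [r_mul _ _ (by exact_mod_cast natCast_mem B.toSubring (n.choose k))
          (mul_mem (hWmem t ht (n - k)) (hUmem k)),
        r_mul _ _ (hWmem t ht (n - k)) (hUmem k), r_natCast]
    -- characteristic and factorials of the residue field
    haveI : IsDomain Res := inferInstance
    set χ : K →+* Res := ρ.comp ((algebraMap K L).codRestrict B.toSubring hKB) with hχ
    haveI : CharP Res p := charP_of_injective_ringHom χ.injective p
    have hqmp : q * m ≤ (q + 1) * m - 1 := by
      have h1 : (q + 1) * m = q * m + m := by ring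
      omega
    have hfact : ∀ A : ℕ, A ≤ q * m → ((A.factorial : Res)) ≠ 0 := by
      intro A hA
      rcases hpbig with hp0 | hpb
      · subst hp0
        haveI : CharZero Res := CharP.charP_to_charZero Res
        exact_mod_cast A.factorial_ne_zero
      · have hppos : p ≠ 0 := by
          intro h
          rw [h] at hpb
          omega
        have hprime : p.Prime := by
          rcases CharP.char_is_prime_or_zero K p with h | h
          · exact h
          · exact absurd h hppos
        intro hA0
        rw [CharP.cast_eq_zero_iff Res p] at hA0
        have hpA : p ≤ A := (Nat.Prime.dvd_factorial hprime).mp hA0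
        omega
    -- the generating polynomial
    set fp : Polynomial Res := ∑ i ∈ Finset.range (m+1),
      Polynomial.C (η i * ((i.factorial : Res))⁻¹) * Polynomial.X ^ i with hfpdef
    have hcoeff : ∀ j, fp.coeff j = η j * ((j.factorial : Res))⁻¹ := by
      intro j
      rw [hfpdef, Polynomial.finset_sum_coeff]
      simp_rw [Polynomial.coeff_C_mul, Polynomial.coeff_X_pow]
      rcases le_or_gt j m with hj | hj
      · rw [Finset.sum_eq_single j]
        · rw [if_pos rfl, mul_one]
        · intro i _ hij
          rw [if_neg (fun h => hij h.symm), mul_zero]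
        · intro h
          exact absurd (Finset.mem_range.mpr (by omega)) h
      · rw [hηbig j hj, zero_mul]
        apply Finset.sum_eq_zero
        intro i hi
        rw [Finset.mem_range] at hi
        rw [if_neg (by omega), mul_zero]
    have hmain : ∀ t, 1 ≤ t → ∀ n, n ≤ q * m →
        (fp ^ t).coeff n = θ t n * ((n.factorial : Res))⁻¹ := by
      refine Nat.le_induction ?_ ?_
      · intro n _
        rw [pow_one, hcoeff n, hθ1 n]
      · intro t ht IH n hn
        rw [pow_succ, Polynomial.coeff_mul, Finset.Nat.sum_antidiagonal_eq_sum_range_succ_mk]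
        have hstep1 : ∀ k ∈ Finset.range (n+1),
            (fp ^ t).coeff k * fp.coeff (n - k) =
            ((n.choose k : ℕ) : Res) * (θ t k * η (n - k)) * ((n.factorial : Res))⁻¹ := by
          intro k hk
          rw [Finset.mem_range] at hk
          rw [IH k (by omega), hcoeff (n - k)]
          have hk1 : (k.factorial : Res) ≠ 0 := hfact _ (by omega)
          have hk2 : ((n - k).factorial : Res) ≠ 0 := hfact _ (by omega)
          have hk3 : (n.factorial : Res) ≠ 0 := hfact _ hn
          have hiden : (n.choose k : ℕ) * k.factorial * (n - k).factorial = n.factorial :=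
            Nat.choose_mul_factorial_mul_factorial (by omega)
          have hidenR : ((n.choose k : ℕ) : Res) * (k.factorial : Res) *
              ((n - k).factorial : Res) = (n.factorial : Res) := by
            rw [← Nat.cast_mul, ← Nat.cast_mul, hiden]
          have hC : ((n.choose k : ℕ) : Res) =
              (n.factorial : Res) * ((k.factorial : Res))⁻¹ *
                (((n - k).factorial : Res))⁻¹ := by
            rw [eq_mul_inv_iff_mul_eq₀ hk2, eq_mul_inv_iff_mul_eq₀ hk1]
            linear_combination hidenR
          rw [hC]
          rw [show (n.factorial : Res) * ((k.factorial : Res))⁻¹ *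
              (((n - k).factorial : Res))⁻¹ * (θ t k * η (n - k)) *
              ((n.factorial : Res))⁻¹ =
              ((n.factorial : Res) * ((n.factorial : Res))⁻¹) *
              (((k.factorial : Res))⁻¹ * (((n - k).factorial : Res))⁻¹ *
              (θ t k * η (n - k))) from by ring]
          rw [mul_inv_cancel₀ hk3, one_mul]
          ring
        rw [Finset.sum_congr rfl hstep1, hθrec t ht n, Finset.sum_mul]
        rw [← Finset.sum_range_reflect
          (fun k => ((n.choose k : ℕ) : Res) * (θ t (n - k) * η k) * ((n.factorial : Res))⁻¹)
          (n+1)]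
        refine Finset.sum_congr rfl fun k hk => ?_
        rw [Finset.mem_range] at hk
        have h1 : n + 1 - 1 - k = n - k := by omega
        have h2 : n - (n - k) = k := by omega
        have h3 : n.choose (n - k) = n.choose k := Nat.choose_symm (by omega)
        simp only [h1, h2, h3]
    -- extract the contradiction
    have hRqm : R ≤ q * m := le_trans hRm (by nlinarith)
    have hcoeffR : fp.coeff R ≠ 0 := by
      rw [hcoeff R, hηR, one_mul]
      exact inv_ne_zero (hfact R hRqm)
    have hfpne : fp ≠ 0 := fun h => hcoeffR (by rw [h, Polynomial.coeff_zero])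
    set d := fp.natDegree with hddef
    have hdR : R ≤ d := Polynomial.le_natDegree_of_ne_zero hcoeffR
    have hdm : d ≤ m := Polynomial.natDegree_le_iff_coeff_eq_zero.mpr
      (fun N hN => by rw [hcoeff N, hηbig N hN, zero_mul])
    have hd1 : 1 ≤ d := le_trans hR1 hdR
    have hqdm : q * d ≤ q * m := Nat.mul_le_mul_left q hdm
    have hcoefftop : (fp ^ q).coeff (q * d) = fp.leadingCoeff ^ q := by
      have hdeg : (fp ^ q).natDegree = q * d := by
        rw [Polynomial.natDegree_pow]
      rw [← hdeg, Polynomial.coeff_natDegree, Polynomial.leadingCoeff_pow]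
    have hθqd : θ q (q * d) ≠ 0 := by
      have h1 := hmain q hq (q * d) hqdm
      rw [hcoefftop] at h1
      intro h0
      rw [h0, zero_mul] at h1
      exact (pow_ne_zero q (Polynomial.leadingCoeff_ne_zero.mpr hfpne)) h1
    have hvWeq : v (Wt q (q * d)) = σ ^ (q * d) := by
      have h1 : v (Wt q (q * d) / w ^ (q * d)) = 1 := by
        apply r_v_eq_one
        · rw [map_div₀, map_pow]
          rw [div_le_one₀ (zero_lt_iff.mpr (pow_ne_zero _ hσ0))]
          exact hWv q hq (q * d)
        · exact hθqd
      rw [map_div₀, map_pow] at h1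
      have h2 : v (Wt q (q * d)) = (v (Wt q (q * d)) / σ ^ (q * d)) * σ ^ (q * d) :=
        (div_mul_cancel₀ _ (pow_ne_zero _ hσ0)).symm
      rw [h2, h1, one_mul]
    have hWrel : Wt q (q * d) = ∑ i ∈ Finset.range N₂, κ (dc (q * d) i) * Wt q i := by
      rw [hWtdef]
      show ι2 (D^[q * d] (y ^ q) / y ^ q) = _
      rw [hd (q * d), Finset.sum_div, map_sum]
      refine Finset.sum_congr rfl fun i _ => ?_
      rw [mul_div_assoc, map_mul, hκι2]
    have hWlow : v (Wt q (q * d)) ≤ σ ^ (N₂ - 1) := by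
      rw [hWrel]
      apply v.map_sum_le
      intro i hi
      rw [Finset.mem_range] at hi
      rw [v.map_mul]
      calc v (κ (dc (q * d) i)) * v (Wt q i) ≤ 1 * σ ^ i :=
            mul_le_mul' (hvκ _) (hWv q hq i)
        _ = σ ^ i := one_mul _
        _ ≤ σ ^ (N₂ - 1) := pow_le_pow_right' hσ.le (by omega)
    have hqd : N₂ - 1 < q * d := by
      have h1 : q ≤ q * d := by nlinarith
      omega
    have hcontra : σ ^ (N₂ - 1) < σ ^ (q * d) := pow_lt_pow_right₀ hσ hqd
    rw [hvWeq] at hWlow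
    exact absurd hWlow (not_le.mpr hcontra)
  -- conclude
  intro j hj
  rcases le_or_gt j m with h | h
  · exact key j h
  · have hj' : D^[j] y / y = ∑ i ∈ Finset.range N₁, algebraMap K F (c j i) * u i := hurel j
    rw [hj']
    apply isAlgebraic_finsetSum
    intro i hi
    rw [Finset.mem_range] at hi
    exact isAlgebraic_mul' (isAlgebraic_algebraMap (c j i)) (key i (by omega))
end

section
/- Let K be a perfect differential field and let F be a differential field extension of K. If y ∈ F is nonzero and Dy/y is algebraic over K, then both y and 1/y satisfy nonzero homogeneous linear differential equations over K; that is, there exist an integer N ≥ 0 and elements h_0, …, h_N ∈ K, not all zero, with ∑_{k=0}^{N} h_k D^k y = 0, and likewise there exist an integer M ≥ 0 and elements g_0, …, g_M ∈ K, not all zero, with ∑_{k=0}^{M} g_k D^k (1/y) = 0. -/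
open Polynomial IntermediateField

theorem key_lemma
    (K F : Type*) [Field K] [Field F] [Algebra K F]
    (D : F → F)
    (Dadd : ∀ x z : F, D (x + z) = D x + D z)
    (Dmul : ∀ x z : F, D (x * z) = x * D z + z * D x)
    (DK : K → K)
    (Dcomp : ∀ x : K, D (algebraMap K F x) = algebraMap K F (DK x))
    [PerfectField K]
    (y : F) (hy : y ≠ 0)
    (halg : IsAlgebraic K (D y / y)) :
    ∃ (N : ℕ) (h : ℕ → K), (∃ k ≤ N, h k ≠ 0) ∧
        ∑ k ∈ Finset.range (N + 1), algebraMap K F (h k) * D^[k] y = 0 := by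
  have D0 : D 0 = 0 := by have := Dadd 0 0; simpa using this
  have D1 : D 1 = 0 := by have := Dmul 1 1; simpa using this
  set u : F := D y / y with hu
  have hDy : D y = u * y := by rw [hu, div_mul_cancel₀ _ hy]
  have hint : IsIntegral K u := halg.isIntegral
  have Dpow : ∀ (x : F) (n : ℕ), D (x ^ n) = (n : F) * x ^ (n - 1) * D x := by
    intro x n
    induction n with
    | zero => simp [D1]
    | succ m ih =>
      rw [pow_succ, Dmul, ih]
      cases m with
      | zero => simp
      | succ l =>
        simp only [Nat.add_sub_cancel]
        push_cast
        ring
  have Daeval : ∀ q : K[X], ∃ r : K[X],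
      D (aeval u q) = aeval u r + aeval u (derivative q) * D u := by
    intro q
    induction q using Polynomial.induction_on' with
    | add p q hp hq =>
      obtain ⟨rp, hrp⟩ := hp
      obtain ⟨rq, hrq⟩ := hq
      exact ⟨rp + rq, by simp [Dadd, hrp, hrq]; ring⟩
    | monomial n a =>
      refine ⟨monomial n (DK a), ?_⟩
      rw [aeval_monomial, Dmul, Dcomp, Dpow, derivative_monomial, aeval_monomial,
        aeval_monomial, map_mul, map_natCast]
      ring
  set E := K⟮u⟯ with hE
  haveI hFD : FiniteDimensional K E := IntermediateField.adjoin.finiteDimensional hint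
  have haev : ∀ q : K[X], aeval u q ∈ E := by
    intro q
    have h1 : aeval u q ∈ Algebra.adjoin K {u} := Polynomial.aeval_mem_adjoin_singleton K u
    rw [← IntermediateField.adjoin_simple_toSubalgebra_of_isAlgebraic hint.isAlgebraic] at h1
    exact h1
  have huE : u ∈ E := IntermediateField.mem_adjoin_simple_self K u
  have hsep : (minpoly K u).Separable :=
    PerfectField.separable_of_irreducible (minpoly.irreducible hint)
  obtain ⟨a, b, hab⟩ := hsep
  have hab' : aeval u b * aeval u (derivative (minpoly K u)) = 1 := by
    have h2 := congrArg (aeval u) hab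
    simpa [minpoly.aeval] using h2
  obtain ⟨r, hr⟩ := Daeval (minpoly K u)
  rw [minpoly.aeval K u, D0] at hr
  have hDu : D u = - aeval u r * aeval u b := by
    linear_combination aeval u b * hr.symm - D u * hab'
  have hDuE : D u ∈ E := by
    rw [hDu]; exact mul_mem (neg_mem (haev r)) (haev b)
  have hDE : ∀ x ∈ E, D x ∈ E := by
    intro x hx
    have hx' : x ∈ K⟮u⟯.toSubalgebra := hx
    rw [IntermediateField.adjoin_simple_toSubalgebra_of_isAlgebraic hint.isAlgebraic,
      Algebra.adjoin_singleton_eq_range_aeval] at hx'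
    obtain ⟨q, rfl⟩ := hx'
    obtain ⟨r', hr'⟩ := Daeval q
    show D (aeval u q) ∈ E
    rw [hr']
    exact add_mem (haev r') (mul_mem (haev _) hDuE)
  let f : ℕ → F := fun k => Nat.rec 1 (fun _ fk => D fk + u * fk) k
  have hfs : ∀ k, f (k + 1) = D (f k) + u * f k := fun k => rfl
  have hfE : ∀ k, f k ∈ E := by
    intro k
    induction k with
    | zero => exact one_mem E
    | succ k ih => rw [hfs]; exact add_mem (hDE _ ih) (mul_mem huE ih)
  have hfy : ∀ k, D^[k] y = f k * y := by
    intro k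
    induction k with
    | zero => simp [f]
    | succ k ih =>
      rw [Function.iterate_succ_apply', ih, Dmul, hDy, hfs]
      ring
  set n := Module.finrank K E with hn
  have hnli : ¬ LinearIndependent K (fun i : Fin (n + 1) => (⟨f i, hfE i⟩ : E)) := by
    intro h
    have h3 := LinearIndependent.fintype_card_le_finrank h
    simp at h3
    exact lt_irrefl _ h3
  obtain ⟨c, hc, i0, hi0⟩ := Fintype.not_linearIndependent_iff.mp hnli
  have hcF : ∑ i : Fin (n + 1), algebraMap K F (c i) * f i = 0 := by
    have h2 : ((∑ i : Fin (n + 1), c i • (⟨f i, hfE i⟩ : E) : E) : F) = 0 := by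
      rw [hc]; rfl
    push_cast at h2
    simpa [Algebra.smul_def] using h2
  refine ⟨n, fun k => if hk : k < n + 1 then c ⟨k, hk⟩ else 0, ⟨i0, by omega, ?_⟩, ?_⟩
  · simp only [i0.isLt, dif_pos, Fin.eta]
    exact hi0
  · rw [Finset.sum_range (fun k => algebraMap K F
      (if hk : k < n + 1 then c ⟨k, hk⟩ else 0) * D^[k] y)]
    have h4 : ∀ i : Fin (n + 1), algebraMap K F
        (if hk : (i : ℕ) < n + 1 then c ⟨i, hk⟩ else 0) * D^[(i : ℕ)] y
        = algebraMap K F (c i) * f i * y := by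
      intro i
      rw [dif_pos i.isLt, Fin.eta, hfy, mul_assoc]
    rw [Finset.sum_congr rfl (fun i _ => h4 i), ← Finset.sum_mul, hcF, zero_mul]


/-- **Hillar, Proposition 1.3 (converse for perfect fields).**
If `K` is a perfect differential field and `Dy/y` is algebraic over `K` for a
nonzero `y` in a differential field extension `F`, then both `y` and `1/y`
satisfy nonzero homogeneous linear differential equations over `K`. -/
theorem linear_ODEs_of_logderiv_algebraic
    (K F : Type*) [Field K] [Field F] [Algebra K F]
    (D : F → F)
    (Dadd : ∀ x z : F, D (x + z) = D x + D z)
    (Dmul : ∀ x z : F, D (x * z) = x * D z + z * D x)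
    (DK : K → K)
    (DKadd : ∀ x z : K, DK (x + z) = DK x + DK z)
    (DKmul : ∀ x z : K, DK (x * z) = x * DK z + z * DK x)
    (Dcomp : ∀ x : K, D (algebraMap K F x) = algebraMap K F (DK x))
    [PerfectField K]
    (y : F) (hy : y ≠ 0)
    (halg : IsAlgebraic K (D y / y)) :
    (∃ (N : ℕ) (h : ℕ → K), (∃ k ≤ N, h k ≠ 0) ∧
        ∑ k ∈ Finset.range (N + 1), algebraMap K F (h k) * D^[k] y = 0) ∧
    (∃ (M : ℕ) (g : ℕ → K), (∃ k ≤ M, g k ≠ 0) ∧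
        ∑ k ∈ Finset.range (M + 1), algebraMap K F (g k) * D^[k] y⁻¹ = 0) := by
  have D1 : D 1 = 0 := by have := Dmul 1 1; simpa using this
  have hy' : y⁻¹ ≠ 0 := inv_ne_zero hy
  have hDinv : D y⁻¹ / y⁻¹ = -(D y / y) := by
    have h0 : D (y * y⁻¹) = y * D y⁻¹ + y⁻¹ * D y := Dmul y y⁻¹
    rw [mul_inv_cancel₀ hy, D1] at h0
    rw [div_inv_eq_mul, div_eq_inv_mul]
    linear_combination -h0
  have halg' : IsAlgebraic K (D y⁻¹ / y⁻¹) := by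
    rw [hDinv]; exact (halg.isIntegral.neg).isAlgebraic
  exact ⟨key_lemma K F D Dadd Dmul DK Dcomp y hy halg,
    key_lemma K F D Dadd Dmul DK Dcomp y⁻¹ hy' halg'⟩
end

section
/- Let K be a field, let R = K[x₁,…,xₙ], and fix positive integer weights w(x_i) = w_i, grading R by assigning the monomial ∏ x_i^{v_i} the weight ∑ v_i w_i. Let (f_s)_{s∈S} be a family of nonzero polynomials in R, let I be the ideal of R generated by the f_s, and let J be the ideal of R generated by the leading forms of the f_s (the leading form of a nonzero f is its weighted-homogeneous component of maximal weight). Then the Krull dimension of R/J is at least the Krull dimension of R/I. -/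
open Ideal

section Mini

variable {E : Type*} [CommRing E]

/-- A finite module killed by a maximal ideal is Artinian. -/
lemma isArtinian_of_killed (M : Ideal E) (hM : M.IsMaximal)
    (S : Type*) [AddCommGroup S] [Module E S] [Module.Finite E S]
    (hkill : ∀ a ∈ M, ∀ x : S, a • x = (0 : S)) : IsArtinian E S := by
  have htor : Module.IsTorsionBySet E S (M : Set E) := fun x a => hkill a.1 a.2 x
  letI : Module (E ⧸ M) S := htor.module
  letI : Field (E ⧸ M) := Ideal.Quotient.field M
  letI : IsScalarTower E (E ⧸ M) S := htor.isScalarTower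
  haveI : Module.Finite (E ⧸ M) S := Module.Finite.of_restrictScalars_finite E (E ⧸ M) S
  haveI hart : IsArtinian (E ⧸ M) S := isArtinian_of_fg_of_artinian'
  -- transfer Artinian-ness back to E
  have key : ∀ (a : E) (x : S), a • x = (Ideal.Quotient.mk M a) • x :=
    fun a x => (htor.mk_smul a x).symm
  let F : Submodule E S → Submodule (E ⧸ M) S := fun U =>
    { carrier := U
      add_mem' := fun h1 h2 => U.add_mem h1 h2
      zero_mem' := U.zero_mem
      smul_mem' := by
        intro q x hx
        obtain ⟨a, rfl⟩ := Ideal.Quotient.mk_surjective q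
        rw [← key a x]
        exact U.smul_mem a hx }
  have hF : ∀ U V, F U ≤ F V ↔ U ≤ V := fun U V => Iff.rfl
  let emb : ((· < ·) : Submodule E S → Submodule E S → Prop) ↪r
      ((· < ·) : Submodule (E ⧸ M) S → Submodule (E ⧸ M) S → Prop) :=
    { toFun := F
      inj' := fun U V h => SetLike.ext' (congrArg (fun (W : Submodule (E ⧸ M) S) => (W : Set S)) h)
      map_rel_iff' := by
        intro U V
        show F U < F V ↔ U < V
        rw [lt_iff_le_not_ge, lt_iff_le_not_ge, hF, hF] }
  exact ⟨emb.wellFounded hart.wf⟩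

/-- In a Noetherian ring, the quotient by a power of a maximal ideal is an Artinian module. -/
lemma isArtinian_quotient_pow_maximal [IsNoetherianRing E] (M : Ideal E) (hM : M.IsMaximal)
    (j : ℕ) : IsArtinian E (E ⧸ (M ^ j : Ideal E)) := by
  induction j with
  | zero =>
    have : Subsingleton (E ⧸ (M ^ 0 : Ideal E)) := by
      rw [pow_zero, Ideal.one_eq_top]
      exact Ideal.Quotient.subsingleton_iff.mpr rfl
    infer_instance
  | succ j ih =>
    have hle : (M ^ (j + 1) : Ideal E) ≤ M ^ j := Ideal.pow_le_pow_right (Nat.le_succ j)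
    rw [isArtinian_iff_submodule_quotient
      (Submodule.map (M ^ (j+1) : Ideal E).mkQ (M ^ j : Ideal E))]
    constructor
    · -- M^j / M^{j+1} is killed by M
      haveI : Module.Finite E
          (Submodule.map (M ^ (j+1) : Ideal E).mkQ (M ^ j : Ideal E)) := by
        rw [Module.Finite.iff_fg]
        exact IsNoetherian.noetherian _
      refine isArtinian_of_killed M hM _ ?_
      rintro a ha ⟨x, hx⟩
      obtain ⟨y, hy, rfl⟩ := hx
      refine Subtype.ext ?_
      show a • ((M ^ (j+1) : Ideal E).mkQ y) = 0
      rw [Submodule.mkQ_apply, ← Submodule.Quotient.mk_smul, Submodule.Quotient.mk_eq_zero,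
        pow_succ']
      exact Ideal.mul_mem_mul ha hy
    · haveI := ih
      exact isArtinian_of_linearEquiv (Submodule.quotientQuotientEquivQuotient _ _ hle).symm

end Mini
section PIT

set_option maxHeartbeats 1000000

variable {A : Type*} [CommRing A] [IsNoetherianRing A]

/-- Krull's principal ideal theorem, in the form: if `r` is a minimal prime over a principal
ideal, then there is no chain `q' < q < r` of primes. -/
theorem pit_core (x : A) (r : Ideal A) (hr : r ∈ (Ideal.span {x}).minimalPrimes)
    {q q' : Ideal A} (hq : q.IsPrime) (hq' : q'.IsPrime)
    (h1 : q' < q) (h2 : q < r) : False := by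
  classical
  have hrp : r.IsPrime := hr.1.1
  -- localize at r
  let B := Localization.AtPrime r
  let φ := algebraMap A B
  haveI : IsNoetherianRing B := IsLocalization.isNoetherianRing r.primeCompl B ‹_›
  have dis : ∀ p : Ideal A, p ≤ r → Disjoint (r.primeCompl : Set A) (p : Set A) := by
    intro p h
    rw [Set.disjoint_left]
    intro a ha hap
    exact ha (h hap)
  let O := IsLocalization.orderIsoOfPrime r.primeCompl B
  -- the maximal ideal of B
  have hMp : (IsLocalRing.maximalIdeal B).IsPrime := Ideal.IsMaximal.isPrime' _
  have hMeq : IsLocalRing.maximalIdeal B = (O.symm ⟨r, hrp, dis r le_rfl⟩).1 := by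
    have hM2 := (O ⟨_, hMp⟩).2.2
    have hler' : (O ⟨_, hMp⟩).1 ≤ r := by
      intro a ha
      by_contra har
      exact Set.disjoint_left.mp hM2 (show a ∈ r.primeCompl from har) ha
    have hle : (⟨_, hMp⟩ : {p : Ideal B // p.IsPrime}) ≤ O.symm ⟨r, hrp, dis r le_rfl⟩ := by
      refine O.le_iff_le.mp ?_
      rw [O.apply_symm_apply]
      exact Subtype.mk_le_mk.mpr hler'
    have hge : (O.symm ⟨r, hrp, dis r le_rfl⟩).1 ≤ IsLocalRing.maximalIdeal B :=
      IsLocalRing.le_maximalIdeal (O.symm ⟨r, hrp, dis r le_rfl⟩).2.ne_top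
    exact le_antisymm hle hge
  -- key: every prime of B containing φ x is the maximal ideal
  have key : ∀ P : Ideal B, P.IsPrime → φ x ∈ P → P = IsLocalRing.maximalIdeal B := by
    intro P hP hxP
    have h1 := (O ⟨P, hP⟩).2.1
    have h2 := (O ⟨P, hP⟩).2.2
    have hcomap : (O ⟨P, hP⟩).1 = Ideal.comap φ P := rfl
    have hler : (O ⟨P, hP⟩).1 ≤ r := by
      intro a ha
      by_contra har
      exact Set.disjoint_left.mp h2 (show a ∈ r.primeCompl from har) ha
    have hxmem : Ideal.span {x} ≤ (O ⟨P, hP⟩).1 := by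
      rw [Ideal.span_le, Set.singleton_subset_iff, hcomap]
      exact hxP
    have heqr : (O ⟨P, hP⟩).1 = r := le_antisymm hler (hr.2 ⟨h1, hxmem⟩ hler)
    -- hence P = O.symm ⟨r⟩ and likewise for the maximal ideal
    have hPeq : P = (O.symm ⟨r, hrp, dis r le_rfl⟩).1 := by
      have h5 := O.symm_apply_apply ⟨P, hP⟩
      rw [show O ⟨P, hP⟩ = ⟨r, hrp, dis r le_rfl⟩ from Subtype.ext heqr] at h5
      exact congrArg Subtype.val h5.symm
    rw [hPeq, hMeq]
  -- set up the chain in B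
  set M : Ideal B := IsLocalRing.maximalIdeal B with hM
  set Qs : Ideal B := (O.symm ⟨q, hq, dis q h2.le⟩).1 with hQsdef
  set Q' : Ideal B := (O.symm ⟨q', hq', dis q' (h1.trans h2).le⟩).1 with hQ'def
  haveI hQsp : Qs.IsPrime := (O.symm ⟨q, hq, dis q h2.le⟩).2
  have hQ'p : Q'.IsPrime := (O.symm ⟨q', hq', dis q' (h1.trans h2).le⟩).2
  have hQ'lt : Q' < Qs := by
    have : (⟨q', hq', dis q' (h1.trans h2).le⟩ :
        {p : Ideal A // p.IsPrime ∧ Disjoint (r.primeCompl : Set A) (p : Set A)}) <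
        ⟨q, hq, dis q h2.le⟩ := Subtype.mk_lt_mk.mpr h1
    exact Subtype.coe_lt_coe.mpr (O.symm.lt_iff_lt.mpr this)
  have hQsltM : Qs < M := by
    rw [hMeq]
    have : (⟨q, hq, dis q h2.le⟩ :
        {p : Ideal A // p.IsPrime ∧ Disjoint (r.primeCompl : Set A) (p : Set A)}) <
        ⟨r, hrp, dis r le_rfl⟩ := Subtype.mk_lt_mk.mpr h2
    exact Subtype.coe_lt_coe.mpr (O.symm.lt_iff_lt.mpr this)
  -- φ x is in M but not in Qs
  have hxM : φ x ∈ M := by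
    have hcomap : Ideal.comap φ ((O.symm ⟨r, hrp, dis r le_rfl⟩).1) = r := by
      have h7 := O.apply_symm_apply ⟨r, hrp, dis r le_rfl⟩
      exact congrArg Subtype.val h7
    have hxr : x ∈ r := hr.1.2 (Ideal.subset_span rfl)
    rw [hMeq]
    rw [← hcomap] at hxr
    exact hxr
  have hxQs : φ x ∉ Qs := fun hc => hQsltM.ne (key Qs hQsp hc)
  -- M^k ≤ span {φ x}
  have hrad : M ≤ (Ideal.span {φ x}).radical := by
    rw [Ideal.radical_eq_sInf]
    refine le_sInf ?_
    rintro P ⟨hsp, hP⟩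
    exact (key P hP (hsp (Ideal.subset_span rfl))).ge
  obtain ⟨k, hk⟩ := Ideal.exists_pow_le_of_le_radical_of_fg hrad (IsNoetherian.noetherian M)
  -- symbolic powers of Qs
  let C := Localization.AtPrime Qs
  let ρ := algebraMap B C
  let symb : ℕ → Ideal B := fun n => Ideal.comap ρ ((Ideal.map ρ Qs) ^ n)
  have hsymb_anti : ∀ {m n : ℕ}, m ≤ n → symb n ≤ symb m :=
    fun h => Ideal.comap_mono (Ideal.pow_le_pow_right h)
  -- the descending chain stabilizes
  haveI hart : IsArtinian B (B ⧸ (M ^ k : Ideal B)) :=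
    isArtinian_quotient_pow_maximal M (IsLocalRing.maximalIdeal.isMaximal B) k
  have hSmono : ∀ {m n : ℕ}, m ≤ n →
      Submodule.map (M ^ k : Ideal B).mkQ (symb n ⊔ Ideal.span {φ x}) ≤
      Submodule.map (M ^ k : Ideal B).mkQ (symb m ⊔ Ideal.span {φ x}) :=
    fun h => Submodule.map_mono (sup_le_sup_right (hsymb_anti h) _)
  obtain ⟨N0, hN0⟩ := IsArtinian.monotone_stabilizes (R := B)
    (⟨fun n => Submodule.map (M ^ k : Ideal B).mkQ (symb n ⊔ Ideal.span {φ x}),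
      fun _ _ h => hSmono h⟩ : ℕ →o (Submodule B (B ⧸ (M ^ k : Ideal B)))ᵒᵈ)
  set N := N0 + 1 with hNdef
  have hstab : symb N ⊔ Ideal.span {φ x} = symb (N + 1) ⊔ Ideal.span {φ x} := by
    have h8 := hN0 N (Nat.le_succ N0)
    have h9 := hN0 (N + 1) (le_trans (Nat.le_succ N0) (Nat.le_succ N))
    have h10 : Submodule.map (M ^ k : Ideal B).mkQ (symb N ⊔ Ideal.span {φ x}) =
        Submodule.map (M ^ k : Ideal B).mkQ (symb (N + 1) ⊔ Ideal.span {φ x}) :=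
      h8.symm.trans h9
    have hker : ∀ n : ℕ, (M ^ k : Ideal B) ≤ symb n ⊔ Ideal.span {φ x} :=
      fun n => le_trans hk le_sup_right
    have e1 := congrArg (Submodule.comap (M ^ k : Ideal B).mkQ) h10
    rwa [Submodule.comap_map_eq, Submodule.comap_map_eq, Submodule.ker_mkQ,
      sup_eq_left.mpr (hker N), sup_eq_left.mpr (hker (N + 1))] at e1
  -- deduce symb N ≤ symb (N+1) ⊔ M • symb N
  have hu : IsUnit (ρ (φ x)) := IsLocalization.map_units (M := Qs.primeCompl) C ⟨φ x, (hxQs : φ x ∈ Qs.primeCompl)⟩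
  have step : symb N ≤ symb (N + 1) ⊔ M • symb N := by
    intro y hy
    have hyS : y ∈ symb (N + 1) ⊔ Ideal.span {φ x} := by
      rw [← hstab]
      exact Ideal.mem_sup_left hy
    obtain ⟨a, ha, z, hz, rfl⟩ := Submodule.mem_sup.mp hyS
    obtain ⟨b, rfl⟩ := Ideal.mem_span_singleton'.mp hz
    have hbx : b * φ x ∈ symb N := by
      have : (a + b * φ x) - a ∈ symb N := sub_mem hy (hsymb_anti (Nat.le_succ N) ha)
      simpa using this
    have hb : b ∈ symb N := by
      have hmem : ρ (b * φ x) ∈ (Ideal.map ρ Qs) ^ N := hbx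
      obtain ⟨u, hu_eq⟩ := hu
      have heq : ρ (b * φ x) * ↑u⁻¹ = ρ b := by
        rw [_root_.map_mul, ← hu_eq, mul_assoc, Units.mul_inv, mul_one]
      have h16 := Ideal.mul_mem_right (↑u⁻¹ : C) _ hmem
      rw [heq] at h16
      exact h16
    refine Submodule.add_mem _ (Submodule.mem_sup_left ha) (Submodule.mem_sup_right ?_)
    rw [mul_comm, Ideal.smul_eq_mul]
    exact Ideal.mul_mem_mul hxM hb
  -- Nakayama in B : symb N = symb (N+1)
  have hNak : symb N = symb (N + 1) := by
    refine le_antisymm ?_ (hsymb_anti (Nat.le_succ N))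
    have hW : Submodule.map (symb (N + 1)).mkQ (symb N) ≤
        M • Submodule.map (symb (N + 1)).mkQ (symb N) := by
      have h11 := Submodule.map_mono (f := (symb (N + 1)).mkQ) step
      rw [Submodule.map_sup, Submodule.map_smul''] at h11
      have h12 : Submodule.map (symb (N + 1)).mkQ (symb (N + 1)) = ⊥ := by
        rw [eq_bot_iff]
        rintro u ⟨v, hv, rfl⟩
        rw [Submodule.mem_bot, Submodule.mkQ_apply]
        exact (Submodule.Quotient.mk_eq_zero _).mpr hv
      rwa [h12, bot_sup_eq] at h11
    have hbot := Submodule.eq_bot_of_le_smul_of_le_jacobson_bot M _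
      (IsNoetherian.noetherian _) hW
      (le_of_eq (IsLocalRing.jacobson_eq_maximalIdeal (⊥ : Ideal B) bot_ne_top).symm)
    intro y hy
    have h14 : (symb (N + 1)).mkQ y ∈ (⊥ : Submodule B (B ⧸ symb (N + 1))) := by
      rw [← hbot]
      exact ⟨y, hy, rfl⟩
    rw [Submodule.mem_bot, Submodule.mkQ_apply] at h14
    exact (Submodule.Quotient.mk_eq_zero _).mp h14
  -- localize: (map ρ Qs)^N = ⊥
  have hmapsymb : ∀ n : ℕ, Ideal.map ρ (symb n) = (Ideal.map ρ Qs) ^ n :=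
    fun n => IsLocalization.map_comap Qs.primeCompl C _
  have hTT : (Ideal.map ρ Qs) ^ N = (Ideal.map ρ Qs) ^ (N + 1) := by
    rw [← hmapsymb N, ← hmapsymb (N + 1), hNak]
  have hTbot : (Ideal.map ρ Qs) ^ N = ⊥ := by
    refine Submodule.eq_bot_of_le_smul_of_le_jacobson_bot (Ideal.map ρ Qs) _ ?_ ?_ ?_
    · rw [← Ideal.map_pow]
      exact Ideal.FG.map (IsNoetherian.noetherian _) _
    · rw [Ideal.smul_eq_mul]
      exact le_of_eq (hTT.trans (by rw [pow_succ, mul_comm]))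
    · rw [IsLocalRing.jacobson_eq_maximalIdeal (⊥ : Ideal C) bot_ne_top,
        Localization.AtPrime.map_eq_maximalIdeal]
  -- conclude Qs ≤ Q', contradiction
  have hle : Qs ≤ Q' := by
    intro z hz
    have hzN : ρ (z ^ N) ∈ (Ideal.map ρ Qs) ^ N := by
      rw [← Ideal.map_pow]
      exact Ideal.mem_map_of_mem ρ (Ideal.pow_mem_pow hz N)
    rw [hTbot, Ideal.mem_bot] at hzN
    obtain ⟨s, hs⟩ := (IsLocalization.map_eq_zero_iff Qs.primeCompl C _).mp hzN
    have : (s : B) * z ^ N ∈ Q' := by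
      rw [hs]
      exact Q'.zero_mem
    rcases hQ'p.mem_or_mem this with h | h
    · exact absurd (hQ'lt.le h) s.2
    · exact hQ'p.mem_of_pow_mem N h
  exact absurd hle (not_le_of_gt hQ'lt)

end PIT
section Chains

variable {A : Type*} [CommRing A] [IsNoetherianRing A]

/-- Given primes `p < pm < r` and `x ∈ r`, `x ∉ p`, there is a prime `s` with
`p < s < r` and `x ∈ s`. -/
theorem prime_between {p pm r : Ideal A}
    (hpm : pm.IsPrime) (hrp : r.IsPrime) (hp : p.IsPrime) (h1 : p < pm) (h2 : pm < r)
    (x : A) (hx : x ∈ r) (hxp : x ∉ p) :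
    ∃ s : Ideal A, s.IsPrime ∧ x ∈ s ∧ p < s ∧ s < r := by
  classical
  let mk := Ideal.Quotient.mk p
  have hmk : Function.Surjective mk := Ideal.Quotient.mk_surjective
  have hker : ∀ J : Ideal A, p ≤ J → RingHom.ker mk ≤ J := by
    intro J hJ
    rwa [Ideal.mk_ker]
  haveI hrbar : (r.map mk).IsPrime :=
    Ideal.map_isPrime_of_surjective hmk (hker r (h1.le.trans h2.le))
  have hmbar : (pm.map mk).IsPrime :=
    Ideal.map_isPrime_of_surjective hmk (hker pm h1.le)
  have hcomap_map : ∀ J : Ideal A, p ≤ J → (J.map mk).comap mk = J := by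
    intro J hJ
    rw [Ideal.comap_map_of_surjective mk hmk]
    have hcb : Ideal.comap mk ⊥ = p := by
      rw [← RingHom.ker_eq_comap_bot, Ideal.mk_ker]
    rw [hcb, sup_eq_left.mpr hJ]
  have hspan : Ideal.span {mk x} ≤ r.map mk := by
    rw [Ideal.span_le, Set.singleton_subset_iff]
    exact Ideal.mem_map_of_mem mk hx
  obtain ⟨sbar, hsmin, hsle⟩ := Ideal.exists_minimalPrimes_le hspan
  have hsbar_pr : sbar.IsPrime := hsmin.1.1
  have hsne : sbar ≠ r.map mk := by
    intro hcontra
    subst hcontra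
    -- r.map mk is minimal over span {mk x}; get contradiction from pit_core
    have hbotpr : (⊥ : Ideal (A ⧸ p)).IsPrime := Ideal.bot_prime
    have hmbot : (⊥ : Ideal (A ⧸ p)) < pm.map mk := by
      rw [bot_lt_iff_ne_bot]
      intro hb
      obtain ⟨y, hy, hynp⟩ := SetLike.exists_of_lt h1
      have : mk y ∈ pm.map mk := Ideal.mem_map_of_mem mk hy
      rw [hb, Ideal.mem_bot] at this
      exact hynp (by rwa [← RingHom.mem_ker, Ideal.mk_ker] at this)
    have hmlt : pm.map mk < r.map mk := by
      refine lt_of_le_of_ne (Ideal.map_mono h2.le) ?_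
      intro hcontra2
      have := congrArg (Ideal.comap mk) hcontra2
      rw [hcomap_map pm h1.le, hcomap_map r (h1.le.trans h2.le)] at this
      exact h2.ne this
    exact pit_core (mk x) (r.map mk) hsmin hmbar hbotpr hmbot hmlt
  haveI := hsbar_pr
  refine ⟨sbar.comap mk, Ideal.IsPrime.comap mk, ?_, ?_, ?_⟩
  · exact Ideal.mem_comap.mpr (hsmin.1.2 (Ideal.subset_span rfl))
  · refine lt_of_le_of_ne ?_ ?_
    · intro a ha
      have : mk a = 0 := Ideal.Quotient.eq_zero_iff_mem.mpr ha
      rw [Ideal.mem_comap, this]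
      exact sbar.zero_mem
    · intro hcontra
      apply hxp
      rw [hcontra, Ideal.mem_comap]
      exact hsmin.1.2 (Ideal.subset_span rfl)
  · refine lt_of_le_of_ne ?_ ?_
    · have := Ideal.comap_mono (f := mk) hsle
      rwa [hcomap_map r (h1.le.trans h2.le)] at this
    · intro hcontra
      apply hsne
      rw [← Ideal.map_comap_of_surjective mk hmk sbar, hcontra]

/-- Pushing `x` down a chain of primes: from a chain `c 0 < ... < c k` with `x ∈ c k`,
get a chain `d 1 < ... < d k` with `x ∈ d 1` and `c 0 ≤ d 1`, `d k = c k`. -/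
theorem chain_push (x : A) : ∀ (k : ℕ) (c : ℕ → Ideal A), 1 ≤ k →
    (∀ i, i ≤ k → (c i).IsPrime) → (∀ i, i < k → c i < c (i + 1)) → x ∈ c k →
    ∃ d : ℕ → Ideal A, (∀ i, 1 ≤ i → i ≤ k → (d i).IsPrime) ∧
      (∀ i, 1 ≤ i → i + 1 ≤ k → d i < d (i + 1)) ∧ x ∈ d 1 ∧ c 0 ≤ d 1 ∧ d k = c k := by
  intro k
  induction k with
  | zero => intro c h; omega
  | succ k ih =>
    intro c _ hpr hchain hx
    by_cases hk : k = 0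
    · subst hk
      exact ⟨c, fun i h1 h2 => hpr i h2, fun i h1 h2 => by omega,
        hx, (hchain 0 (by omega)).le, rfl⟩
    · have hk1 : 1 ≤ k := Nat.one_le_iff_ne_zero.mpr hk
      by_cases hxk : x ∈ c k
      · obtain ⟨d, hd1, hd2, hd3, hd4, hd5⟩ := ih c hk1
          (fun i hi => hpr i (le_trans hi (Nat.le_succ k)))
          (fun i hi => hchain i (by omega)) hxk
        refine ⟨fun i => if i = k + 1 then c (k + 1) else d i, ?_, ?_, ?_, ?_, ?_⟩
        · intro i h1 h2
          beta_reduce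
          by_cases h : i = k + 1
          · simp only [h, if_pos rfl]; exact hpr (k+1) le_rfl
          · simp only [if_neg h]; exact hd1 i h1 (by omega)
        · intro i h1 h2
          beta_reduce
          by_cases h : i + 1 = k + 1
          · rw [if_neg (show i ≠ k + 1 by omega), if_pos h]
            have hik : i = k := by omega
            rw [hik, hd5]
            exact hchain k (by omega)
          · rw [if_neg (show i + 1 ≠ k + 1 from h), if_neg (show i ≠ k + 1 by omega)]
            exact hd2 i h1 (by omega)
        · beta_reduce
          rw [if_neg (show 1 ≠ k + 1 by omega)]; exact hd3
        · beta_reduce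
          rw [if_neg (show 1 ≠ k + 1 by omega)]; exact hd4
        · beta_reduce
          rw [if_pos rfl]
      · -- x ∉ c k ; insert a prime between c (k-1) and c (k+1) containing x
        have hxk1 : x ∉ c (k - 1) := by
          intro hc
          apply hxk
          have : c (k - 1) < c (k - 1 + 1) := hchain (k - 1) (by omega)
          have hEq : k - 1 + 1 = k := by omega
          rw [hEq] at this
          exact this.le hc
        have hlt1 : c (k - 1) < c k := by
          have := hchain (k - 1) (by omega)
          have hEq : k - 1 + 1 = k := by omega
          rwa [hEq] at this
        obtain ⟨s, hspr, hsx, hslt1, hslt2⟩ := prime_between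
          (hpr k (by omega)) (hpr (k + 1) le_rfl) (hpr (k - 1) (by omega))
          hlt1 (hchain k (by omega)) x hx hxk1
        -- modified chain: replace c k by s
        set c' : ℕ → Ideal A := fun i => if i = k then s else c i with hc'
        obtain ⟨d, hd1, hd2, hd3, hd4, hd5⟩ := ih c' hk1
          (fun i hi => by
            by_cases h : i = k
            · simp only [hc', h, if_pos rfl]; exact hspr
            · simp only [hc', if_neg h]; exact hpr i (by omega))
          (fun i hi => by
            show (if i = k then s else c i) < (if i + 1 = k then s else c (i + 1))
            by_cases h : i + 1 = k
            · rw [if_neg (show i ≠ k by omega), if_pos h]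
              have hik : i = k - 1 := by omega
              rw [hik]
              exact hslt1
            · rw [if_neg (show i ≠ k by omega), if_neg h]
              exact hchain i (by omega))
          (by simp only [hc', if_pos rfl]; exact hsx)
        refine ⟨fun i => if i = k + 1 then c (k + 1) else d i, ?_, ?_, ?_, ?_, ?_⟩
        · intro i h1 h2
          beta_reduce
          by_cases h : i = k + 1
          · simp only [h, if_pos rfl]; exact hpr (k+1) le_rfl
          · simp only [if_neg h]; exact hd1 i h1 (by omega)
        · intro i h1 h2
          beta_reduce
          by_cases h : i + 1 = k + 1
          · rw [if_neg (show i ≠ k + 1 by omega), if_pos h]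
            have hik : i = k := by omega
            rw [hik, hd5]
            simp only [hc']
            beta_reduce
            simp only [eq_self_iff_true, if_true]
            exact hslt2
          · rw [if_neg (show i + 1 ≠ k + 1 from h), if_neg (show i ≠ k + 1 by omega)]
            exact hd2 i h1 (by omega)
        · beta_reduce
          rw [if_neg (show 1 ≠ k + 1 by omega)]; exact hd3
        · beta_reduce
          rw [if_neg (show 1 ≠ k + 1 by omega)]
          refine le_trans ?_ hd4
          simp only [hc']
          beta_reduce
          rw [if_neg (show 0 ≠ k by omega)]
        · beta_reduce
          rw [if_pos rfl]

end Chains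
section Homog

open MvPolynomial

variable {K : Type*} [Field K] {n : ℕ}

/-- weights on `Option (Fin n)`: the new variable `none` has weight 1. -/
private def Wt (w : Fin n → ℕ) : Option (Fin n) → ℕ
  | none => 1
  | some i => w i

private noncomputable def phi1 (K : Type*) [CommSemiring K] (n : ℕ) :
    MvPolynomial (Option (Fin n)) K →ₐ[K] MvPolynomial (Fin n) K :=
  aeval (fun o => match o with | none => 1 | some i => X i)

private noncomputable def psi (K : Type*) [CommSemiring K] (n : ℕ) :
    MvPolynomial (Option (Fin n)) K →ₐ[K] MvPolynomial (Fin n) K :=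
  aeval (fun o => match o with | none => 0 | some i => X i)

private lemma phi1_rename (p : MvPolynomial (Fin n) K) : phi1 K n (rename some p) = p := by
  rw [phi1, aeval_rename]
  exact aeval_X_left_apply p

private lemma psi_rename (p : MvPolynomial (Fin n) K) : psi K n (rename some p) = p := by
  rw [psi, aeval_rename]
  exact aeval_X_left_apply p

private lemma phi1_X_none : phi1 K n (X none) = 1 := by
  rw [phi1, aeval_X]

private lemma psi_X_none : psi K n (X none) = 0 := by
  rw [psi, aeval_X]

private lemma phi1_surjective : Function.Surjective (phi1 K n) :=
  fun p => ⟨rename some p, phi1_rename p⟩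

private lemma psi_surjective : Function.Surjective (psi K n) :=
  fun p => ⟨rename some p, psi_rename p⟩

/-- the kernel of `psi` is contained in the ideal generated by `X none`. -/
private lemma ker_psi_le : RingHom.ker (psi K n).toRingHom ≤
    Ideal.span {(X none : MvPolynomial (Option (Fin n)) K)} := by
  have hdecomp : ∀ g : MvPolynomial (Option (Fin n)) K,
      g - rename some (psi K n g) ∈ Ideal.span {(X none : MvPolynomial (Option (Fin n)) K)} := by
    intro g
    induction g using MvPolynomial.induction_on with
    | C a =>
      have h1 : psi K n (C a) = C a := by
        rw [psi, aeval_C, algebraMap_eq]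
      rw [h1, rename_C, sub_self]
      exact Ideal.zero_mem _
    | add p q hp hq =>
      have : p + q - rename some (psi K n (p + q)) =
          (p - rename some (psi K n p)) + (q - rename some (psi K n q)) := by
        rw [map_add, map_add]; ring
      rw [this]
      exact Ideal.add_mem _ hp hq
    | mul_X p o hp =>
      cases o with
      | none =>
        have : p * X none - rename some (psi K n (p * X none)) = p * X none := by
          rw [_root_.map_mul, psi_X_none, mul_zero, map_zero, sub_zero]
        rw [this]
        exact Ideal.mul_mem_left _ p (Ideal.subset_span rfl)
      | some i =>
        have : p * X (some i) - rename some (psi K n (p * X (some i))) =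
            (p - rename some (psi K n p)) * X (some i) := by
          rw [_root_.map_mul, _root_.map_mul]
          have h1 : psi K n (X (some i) : MvPolynomial (Option (Fin n)) K) = X i := by
            rw [psi, aeval_X]
          rw [h1, rename_X]
          ring
        rw [this]
        exact Ideal.mul_mem_right _ _ hp
  intro g hg
  have hg0 : psi K n g = 0 := RingHom.mem_ker.mp hg
  have := hdecomp g
  rwa [hg0, map_zero, sub_zero] at this

/-- the leading form of a polynomial. -/
private noncomputable def leadF (w : Fin n → ℕ) (f : MvPolynomial (Fin n) K) :
    MvPolynomial (Fin n) K :=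
  weightedHomogeneousComponent w (weightedTotalDegree w f) f

private lemma leadF_ne_zero (w : Fin n → ℕ) {f : MvPolynomial (Fin n) K} (hf : f ≠ 0) :
    leadF w f ≠ 0 := by
  classical
  obtain ⟨d, hd, hsup⟩ := Finset.exists_mem_eq_sup f.support
    (support_nonempty.mpr hf) (fun d => Finsupp.weight w d)
  intro hc
  have : coeff d (leadF w f) = coeff d f := by
    rw [leadF, coeff_weightedHomogeneousComponent, if_pos]
    exact hsup.symm
  rw [hc, coeff_zero] at this
  exact (mem_support_iff.mp hd) this.symm

/-- the homogenization of `f` with respect to the new variable. -/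
private noncomputable def hmz (w : Fin n → ℕ) (f : MvPolynomial (Fin n) K) :
    MvPolynomial (Option (Fin n)) K :=
  ∑ e ∈ Finset.range (weightedTotalDegree w f + 1),
    rename some (weightedHomogeneousComponent w e f) *
      (X none : MvPolynomial (Option (Fin n)) K) ^ (weightedTotalDegree w f - e)

private lemma rename_isWeightedHomogeneous (w : Fin n → ℕ) {p : MvPolynomial (Fin n) K} {m : ℕ}
    (hp : p.IsWeightedHomogeneous w m) :
    (rename some p).IsWeightedHomogeneous (Wt w) m := by
  intro d hd
  obtain ⟨u, hu, hu2⟩ := coeff_rename_ne_zero _ _ _ hd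
  have hw : Finsupp.weight (Wt w) (Finsupp.mapDomain some u) = Finsupp.weight w u := by
    rw [Finsupp.weight_apply, Finsupp.weight_apply]
    rw [Finsupp.sum_mapDomain_index]
    · rfl
    · intro a; exact zero_smul _ _
    · intro a b1 b2; exact add_smul _ _ _
  rw [← hu, hw]
  exact hp hu2

private lemma X_none_pow_isWeightedHomogeneous (w : Fin n → ℕ) (m : ℕ) :
    ((X none : MvPolynomial (Option (Fin n)) K) ^ m).IsWeightedHomogeneous (Wt w) m := by
  rw [X_pow_eq_monomial]
  have : Finsupp.weight (Wt w) (Finsupp.single (none : Option (Fin n)) m) = m := by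
    rw [Finsupp.weight_apply, Finsupp.sum_single_index]
    · show m • (1 : ℕ) = m; simp
    · exact zero_smul _ _
  exact isWeightedHomogeneous_monomial _ _ _ this

private lemma hmz_isWeightedHomogeneous (w : Fin n → ℕ) (f : MvPolynomial (Fin n) K) :
    (hmz w f).IsWeightedHomogeneous (Wt w) (weightedTotalDegree w f) := by
  apply IsWeightedHomogeneous.sum
  intro e he
  have h1 : (rename some (weightedHomogeneousComponent w e f)).IsWeightedHomogeneous (Wt w) e :=
    rename_isWeightedHomogeneous w (weightedHomogeneousComponent_isWeightedHomogeneous (w := w) (n := e) (φ := f))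
  have h2 := X_none_pow_isWeightedHomogeneous (K := K) w (weightedTotalDegree w f - e)
  have h3 := h1.mul h2
  have : e + (weightedTotalDegree w f - e) = weightedTotalDegree w f := by
    rw [Finset.mem_range] at he; omega
  rwa [this] at h3

private lemma phi1_hmz (w : Fin n → ℕ) (f : MvPolynomial (Fin n) K) :
    phi1 K n (hmz w f) = f := by
  rw [hmz, map_sum]
  have : ∀ e ∈ Finset.range (weightedTotalDegree w f + 1),
      phi1 K n (rename some (weightedHomogeneousComponent w e f) *
        (X none : MvPolynomial (Option (Fin n)) K) ^ (weightedTotalDegree w f - e)) =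
      weightedHomogeneousComponent w e f := by
    intro e _
    rw [_root_.map_mul, map_pow, phi1_X_none, one_pow, mul_one, phi1_rename]
  rw [Finset.sum_congr rfl this]
  -- now ∑ e in range (d+1), wHC e f = f
  have hsupp : (Function.support fun m => weightedHomogeneousComponent w m f) ⊆
      ↑(Finset.range (weightedTotalDegree w f + 1)) := by
    intro m hm
    simp only [Finset.coe_range, Set.mem_Iio]
    by_contra hc
    apply hm
    apply weightedHomogeneousComponent_eq_zero'
    intro d hd
    intro hweq
    have := le_weightedTotalDegree w hd
    omega
  rw [← finsum_eq_sum_of_support_subset _ hsupp]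
  exact sum_weightedHomogeneousComponent w f

private lemma psi_hmz (w : Fin n → ℕ) (f : MvPolynomial (Fin n) K) :
    psi K n (hmz w f) = leadF w f := by
  classical
  rw [hmz, map_sum]
  rw [Finset.sum_eq_single (weightedTotalDegree w f)]
  · rw [_root_.map_mul, Nat.sub_self, pow_zero, _root_.map_one, mul_one, psi_rename, leadF]
  · intro e he hne
    rw [_root_.map_mul, map_pow, psi_X_none, zero_pow, mul_zero]
    rw [Finset.mem_range] at he
    omega
  · intro hc
    exact absurd (Finset.self_mem_range_succ _) hc

end Homog
section Final

open MvPolynomial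

variable {K : Type*} [Field K] {n : ℕ}

private lemma homog_constantCoeff_eq_zero (w : Fin n → ℕ) (hw : ∀ i, 0 < w i)
    {g : MvPolynomial (Option (Fin n)) K} {m : ℕ}
    (hg : g.IsWeightedHomogeneous (Wt w) m)
    {P : Ideal (MvPolynomial (Option (Fin n)) K)} (hP : P ≠ ⊤) (hgP : g ∈ P) :
    constantCoeff g = 0 := by
  by_contra hc
  have hc0 : coeff 0 g ≠ 0 := hc
  have hm : m = 0 := by
    have h1 := hg hc0
    rw [← h1, map_zero]
  have hWt : NonTorsionWeight (Wt w) := by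
    apply nonTorsionWeight_of
    intro o
    cases o with
    | none => exact one_ne_zero
    | some i => exact (hw i).ne'
  have hsupp : ∀ d ∈ g.support, d = 0 := by
    intro d hd
    have h2 := hg (mem_support_iff.mp hd)
    rw [hm] at h2
    have h3 := (weightedDegree_eq_zero_iff hWt).mp h2
    ext o
    exact h3 o
  have hgC : g = C (constantCoeff g) := by
    ext d
    by_cases hd : d = 0
    · subst hd
      rw [coeff_C, if_pos rfl]
      rfl
    · rw [coeff_C, if_neg (Ne.symm hd)]
      by_contra hcd
      exact hd (hsupp d (mem_support_iff.mpr hcd))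
  apply hP
  rw [Ideal.eq_top_iff_one]
  have h5 : C (constantCoeff g) ∈ P := hgC ▸ hgP
  have h6 := P.mul_mem_left (C (constantCoeff g)⁻¹) h5
  rwa [← C_mul, inv_mul_cancel₀ hc, C_1] at h6

private lemma homogIdeal_le_ker (w : Fin n → ℕ) (hw : ∀ i, 0 < w i)
    {Q : Ideal (MvPolynomial (Option (Fin n)) K)}
    [grA : GradedAlgebra (weightedHomogeneousSubmodule K (Wt w))]
    (hQ : Q.IsHomogeneous (weightedHomogeneousSubmodule K (Wt w))) (hQtop : Q ≠ ⊤) :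
    Q ≤ RingHom.ker (constantCoeff : MvPolynomial (Option (Fin n)) K →+* K) := by
  classical
  intro z hz
  rw [RingHom.mem_ker]
  rw [← DirectSum.sum_support_decompose (weightedHomogeneousSubmodule K (Wt w)) z, map_sum]
  refine Finset.sum_eq_zero ?_
  intro i _
  exact homog_constantCoeff_eq_zero w hw (m := i)
    ((mem_weightedHomogeneousSubmodule _ _ _ _).mp
      (SetLike.coe_mem (DirectSum.decompose (weightedHomogeneousSubmodule K (Wt w)) z i)))
    hQtop (hQ i hz)

end Final
set_option maxHeartbeats 1000000 in
/-- **Hillar, Lemma 1.4 (after Sperber; see Sturmfels, Lemma 2.2.2).**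
Let `R = K[x₁,…,xₙ]` be graded by positive weights `w`. If `I` is generated by a
family of nonzero polynomials and `J` by their leading forms (top
weighted-homogeneous components), then `dim J ≥ dim I`, i.e. the Krull dimension
of `R/J` is at least that of `R/I`. -/
theorem krullDim_leadingForms_ge
    (K : Type*) [Field K] (n : ℕ) (w : Fin n → ℕ) (hw : ∀ i, 0 < w i)
    (S : Type*) (f : S → MvPolynomial (Fin n) K) (hf : ∀ s, f s ≠ 0)
    (I J : Ideal (MvPolynomial (Fin n) K))
    (hI : I = Ideal.span (Set.range f))
    (hJ : J = Ideal.span (Set.range fun s =>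
      MvPolynomial.weightedHomogeneousComponent w
        ((f s).weightedTotalDegree w) (f s))) :
    ringKrullDim (MvPolynomial (Fin n) K ⧸ I) ≤
      ringKrullDim (MvPolynomial (Fin n) K ⧸ J) := by
  classical
  refine iSup_le fun cser => ?_
  set L := cser.length with hLdef
  letI grA : GradedAlgebra (MvPolynomial.weightedHomogeneousSubmodule K (Wt w)) :=
    MvPolynomial.weightedGradedAlgebra (R := K) (w := Wt w)
  -- chain of primes in R containing I
  have hmkIsurj : Function.Surjective (Ideal.Quotient.mk I) := Ideal.Quotient.mk_surjective
  let P : ℕ → Ideal (MvPolynomial (Fin n) K) := fun i =>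
    Ideal.comap (Ideal.Quotient.mk I) (cser ⟨min i L, by omega⟩).asIdeal
  have hPprime : ∀ i, (P i).IsPrime := by
    intro i
    haveI := (cser ⟨min i L, by omega⟩).isPrime
    exact Ideal.IsPrime.comap _
  have hPI : ∀ i a, a ∈ I → a ∈ P i := by
    intro i a ha
    have h0 : Ideal.Quotient.mk I a = 0 := Ideal.Quotient.eq_zero_iff_mem.mpr ha
    refine Ideal.mem_comap.mpr ?_
    rw [h0]
    exact Submodule.zero_mem _
  have hPlt : ∀ i, i < L → P i < P (i + 1) := by
    intro i hi
    have hfin : (⟨min i L, by omega⟩ : Fin (L + 1)) < ⟨min (i+1) L, by omega⟩ := by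
      simp only [Fin.mk_lt_mk]; omega
    have h1 : (cser ⟨min i L, by omega⟩).asIdeal < (cser ⟨min (i+1) L, by omega⟩).asIdeal :=
      cser.strictMono hfin
    exact lt_of_le_of_ne (Ideal.comap_mono h1.le)
      (fun hc => h1.ne (congrArg PrimeSpectrum.asIdeal
        (PrimeSpectrum.ext (Ideal.comap_injective_of_surjective _ hmkIsurj hc)) ▸ rfl))
  -- move to B = K[x₀,…,xₙ₋₁,t]
  let φ := (phi1 K n).toRingHom
  let Pb : ℕ → Ideal (MvPolynomial (Option (Fin n)) K) := fun i => Ideal.comap φ (P i)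
  have hPbprime : ∀ i, (Pb i).IsPrime := by
    intro i
    haveI := hPprime i
    exact Ideal.IsPrime.comap _
  have hPblt : ∀ i, i < L → Pb i < Pb (i + 1) := fun i hi =>
    lt_of_le_of_ne (Ideal.comap_mono (hPlt i hi).le)
      (fun hc => (hPlt i hi).ne (Ideal.comap_injective_of_surjective φ phi1_surjective hc))
  let Q : ℕ → Ideal (MvPolynomial (Option (Fin n)) K) := fun i =>
    (Ideal.homogeneousCore (MvPolynomial.weightedHomogeneousSubmodule K (Wt w)) (Pb i)).toIdeal
  have hQprime : ∀ i, (Q i).IsPrime := fun i => (hPbprime i).homogeneousCore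
  have hQle : ∀ i, Q i ≤ Pb i := fun i => Ideal.toIdeal_homogeneousCore_le _ _
  have hQhom : ∀ i, (Q i).IsHomogeneous
      (MvPolynomial.weightedHomogeneousSubmodule K (Wt w)) := fun i =>
    (Ideal.homogeneousCore _ _).isHomogeneous
  have hmem_hmz : ∀ (g : MvPolynomial (Fin n) K) (i : ℕ), g ∈ P i → hmz w g ∈ Q i := by
    intro g i hg
    refine Ideal.mem_homogeneousCore_of_homogeneous_of_mem
      ⟨MvPolynomial.weightedTotalDegree w g,
        (MvPolynomial.mem_weightedHomogeneousSubmodule _ _ _ _).mpr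
          (hmz_isWeightedHomogeneous w g)⟩ ?_
    show φ (hmz w g) ∈ P i
    rw [show φ (hmz w g) = g from phi1_hmz w g]
    exact hg
  have hQlt : ∀ i, i < L → Q i < Q (i + 1) := by
    intro i hi
    obtain ⟨p, hp1, hp2⟩ := SetLike.exists_of_lt (hPlt i hi)
    refine lt_of_le_of_ne
      (Ideal.homogeneousCore_mono _ (Ideal.comap_mono (hPlt i hi).le)) ?_
    intro hc
    apply hp2
    have h1 : hmz w p ∈ Q (i+1) := hmem_hmz p (i+1) hp1
    rw [← hc] at h1
    have h2 : φ (hmz w p) ∈ P i := hQle i h1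
    have h3 : φ (hmz w p) = p := phi1_hmz w p
    rwa [h3] at h2
  -- the irrelevant maximal ideal
  set mQ : Ideal (MvPolynomial (Option (Fin n)) K) :=
    RingHom.ker (MvPolynomial.constantCoeff :
      MvPolynomial (Option (Fin n)) K →+* K) with hmQ
  have hmQprime : mQ.IsPrime := RingHom.ker_isPrime _
  have hXmQ : (MvPolynomial.X none : MvPolynomial (Option (Fin n)) K) ∈ mQ := by
    rw [hmQ, RingHom.mem_ker, MvPolynomial.constantCoeff_X]
  have hXQL : (MvPolynomial.X none : MvPolynomial (Option (Fin n)) K) ∉ Q L := by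
    intro hc
    have h1 : φ (MvPolynomial.X none) ∈ P L := hQle L hc
    rw [show φ (MvPolynomial.X none) = 1 from phi1_X_none] at h1
    exact (hPprime L).ne_top ((Ideal.eq_top_iff_one _).mpr h1)
  have hQLmQ : Q L < mQ := by
    refine lt_of_le_of_ne (homogIdeal_le_ker w hw (hQhom L) (hQprime L).ne_top) ?_
    intro hc
    rw [hc] at hXQL
    exact hXQL hXmQ
  -- the big chain, with the maximal ideal on top
  let c' : ℕ → Ideal (MvPolynomial (Option (Fin n)) K) := fun i => if i = L + 1 then mQ else Q i
  have hc'prime : ∀ i, i ≤ L + 1 → (c' i).IsPrime := by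
    intro i _
    show (if i = L + 1 then mQ else Q i).IsPrime
    by_cases h : i = L + 1
    · rw [if_pos h]; exact hmQprime
    · rw [if_neg h]; exact hQprime i
  have hc'chain : ∀ i, i < L + 1 → c' i < c' (i + 1) := by
    intro i hi
    show (if i = L + 1 then mQ else Q i) < (if i + 1 = L + 1 then mQ else Q (i + 1))
    by_cases h : i + 1 = L + 1
    · rw [if_pos h, if_neg (by omega)]
      have hiL : i = L := by omega
      rw [hiL]
      exact hQLmQ
    · rw [if_neg h, if_neg (by omega)]
      exact hQlt i (by omega)
  have hx : (MvPolynomial.X none : MvPolynomial (Option (Fin n)) K) ∈ c' (L + 1) := by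
    show _ ∈ (if L + 1 = L + 1 then mQ else Q (L + 1))
    rw [if_pos rfl]
    exact hXmQ
  obtain ⟨d, hd1, hd2, hd3, hd4, hd5⟩ := chain_push (MvPolynomial.X none) (L + 1) c'
    (by omega) hc'prime hc'chain hx
  have hdmono : ∀ i j, 1 ≤ i → i ≤ j → j ≤ L + 1 → d i ≤ d j := by
    intro i j h1 hij hj
    induction j with
    | zero => omega
    | succ j ih =>
      by_cases h : i = j + 1
      · rw [h]
      · exact le_trans (ih (by omega) (by omega)) (hd2 j (by omega) (by omega)).le
  -- map down to R with ψ
  let ψ := (psi K n).toRingHom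
  have hkerd : ∀ i, 1 ≤ i → i ≤ L + 1 → RingHom.ker ψ ≤ d i := by
    intro i h1 h2
    refine le_trans ker_psi_le (le_trans ?_ (hdmono 1 i le_rfl h1 h2))
    rw [Ideal.span_le, Set.singleton_subset_iff]
    exact hd3
  let u : ℕ → Ideal (MvPolynomial (Fin n) K) := fun i => Ideal.map ψ (d i)
  have huprime : ∀ i, 1 ≤ i → i ≤ L + 1 → (u i).IsPrime := by
    intro i h1 h2
    haveI := hd1 i h1 h2
    exact Ideal.map_isPrime_of_surjective psi_surjective (hkerd i h1 h2)
  have hcomapbot : ∀ i, 1 ≤ i → i ≤ L + 1 → Ideal.comap ψ ⊥ ≤ d i := by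
    intro i h1 h2
    rw [← RingHom.ker_eq_comap_bot]
    exact hkerd i h1 h2
  have hult : ∀ i, 1 ≤ i → i + 1 ≤ L + 1 → u i < u (i + 1) := by
    intro i h1 h2
    refine lt_of_le_of_ne (Ideal.map_mono (hd2 i h1 h2).le) ?_
    intro hc
    have e1 := congrArg (Ideal.comap ψ) hc
    rw [Ideal.comap_map_of_surjective ψ psi_surjective,
      Ideal.comap_map_of_surjective ψ psi_surjective,
      sup_eq_left.mpr (hcomapbot i h1 (by omega)),
      sup_eq_left.mpr (hcomapbot (i+1) (by omega) h2)] at e1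
    exact (hd2 i h1 h2).ne e1
  have hJu : J ≤ u 1 := by
    rw [hJ, Ideal.span_le]
    rintro _ ⟨s, rfl⟩
    have h0 : hmz w (f s) ∈ c' 0 := by
      show hmz w (f s) ∈ (if 0 = L + 1 then mQ else Q 0)
      rw [if_neg (by omega)]
      exact hmem_hmz (f s) 0 (hPI 0 _ (by rw [hI]; exact Ideal.subset_span ⟨s, rfl⟩))
    have h1 : hmz w (f s) ∈ d 1 := hd4 h0
    have h2 : psi K n (hmz w (f s)) ∈ u 1 := Ideal.mem_map_of_mem ψ h1
    rwa [psi_hmz w (f s)] at h2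
  -- push into R ⧸ J
  have hmkJsurj : Function.Surjective (Ideal.Quotient.mk J) := Ideal.Quotient.mk_surjective
  have humono : ∀ i j, 1 ≤ i → i ≤ j → j ≤ L + 1 → u i ≤ u j := fun i j h1 h2 h3 =>
    Ideal.map_mono (hdmono i j h1 h2 h3)
  have hkerJ : ∀ i, 1 ≤ i → i ≤ L + 1 → RingHom.ker (Ideal.Quotient.mk J) ≤ u i := by
    intro i h1 h2
    rw [Ideal.mk_ker]
    exact le_trans hJu (humono 1 i le_rfl h1 h2)
  have hcomapbotJ : ∀ i, 1 ≤ i → i ≤ L + 1 →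
      Ideal.comap (Ideal.Quotient.mk J) ⊥ ≤ u i := by
    intro i h1 h2
    rw [← RingHom.ker_eq_comap_bot]
    exact hkerJ i h1 h2
  let v : ℕ → Ideal (MvPolynomial (Fin n) K ⧸ J) := fun i =>
    Ideal.map (Ideal.Quotient.mk J) (u i)
  have hvprime : ∀ i, 1 ≤ i → i ≤ L + 1 → (v i).IsPrime := by
    intro i h1 h2
    haveI := huprime i h1 h2
    exact Ideal.map_isPrime_of_surjective hmkJsurj (hkerJ i h1 h2)
  have hvlt : ∀ i, 1 ≤ i → i + 1 ≤ L + 1 → v i < v (i + 1) := by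
    intro i h1 h2
    refine lt_of_le_of_ne (Ideal.map_mono (humono i (i+1) h1 (by omega) h2)) ?_
    intro hc
    have e1 := congrArg (Ideal.comap (Ideal.Quotient.mk J)) hc
    rw [Ideal.comap_map_of_surjective _ hmkJsurj,
      Ideal.comap_map_of_surjective _ hmkJsurj,
      sup_eq_left.mpr (hcomapbotJ i h1 (by omega)),
      sup_eq_left.mpr (hcomapbotJ (i+1) (by omega) h2)] at e1
    exact (hult i h1 h2).ne e1
  -- assemble the series
  let ser : LTSeries (PrimeSpectrum (MvPolynomial (Fin n) K ⧸ J)) :=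
    { length := L
      toFun := fun j => ⟨v (1 + j.val), hvprime (1 + j.val) (by omega) (by omega)⟩
      step := fun j => hvlt (1 + j.val) (by omega) (by omega) }
  exact Order.LTSeries.length_le_krullDim ser
end

section
/- Let K be a field, let R = K[x₁,…,xₙ], and fix positive integer weights w(x_i) = w_i, grading R by assigning the monomial ∏ x_i^{v_i} the weight ∑ v_i w_i. Let (f_s)_{s∈S} be a family of nonzero polynomials in R, let I be the ideal generated by the f_s, and let J be the ideal generated by the leading forms of the f_s. If the Krull dimension of R/J is at most 0 (i.e., J is zero-dimensional), then the Krull dimension of R/I is at most 0. -/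
open MvPolynomial Finsupp


lemma aux_comp_mul {K : Type*} [CommRing K] {n : ℕ} {w : Fin n → ℕ}
    (a q : MvPolynomial (Fin n) K) (k : ℕ)
    (ha : MvPolynomial.IsWeightedHomogeneous w a k) (m : ℕ) :
    MvPolynomial.weightedHomogeneousComponent w m (a * q) =
      if k ≤ m then a * MvPolynomial.weightedHomogeneousComponent w (m - k) q else 0 := by
  classical
  split_ifs with hkm
  · ext d
    rw [coeff_weightedHomogeneousComponent, coeff_mul, coeff_mul]
    by_cases hd : (weight w) d = m
    · rw [if_pos hd]
      refine Finset.sum_congr rfl ?_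
      rintro ⟨u, v⟩ huv
      simp only [Finset.HasAntidiagonal.mem_antidiagonal] at huv
      by_cases hu : coeff u a = 0
      · simp [hu]
      · have hwu : (weight w) u = k := ha hu
        have hv : (weight w) v = m - k := by
          have : (weight w) u + (weight w) v = m := by rw [← map_add, huv, hd]
          omega
        rw [coeff_weightedHomogeneousComponent, if_pos hv]
    · rw [if_neg hd]
      symm
      refine Finset.sum_eq_zero ?_
      rintro ⟨u, v⟩ huv
      simp only [Finset.HasAntidiagonal.mem_antidiagonal] at huv
      by_cases hu : coeff u a = 0
      · simp [hu]
      · have hwu : (weight w) u = k := ha hu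
        rw [coeff_weightedHomogeneousComponent, if_neg, mul_zero]
        intro hv
        apply hd
        rw [← huv, map_add, hwu, hv]
        omega
  · ext d
    rw [coeff_weightedHomogeneousComponent, coeff_zero]
    split_ifs with hd
    · rw [coeff_mul]
      refine Finset.sum_eq_zero ?_
      rintro ⟨u, v⟩ huv
      simp only [Finset.HasAntidiagonal.mem_antidiagonal] at huv
      by_cases hu : coeff u a = 0
      · simp [hu]
      · exfalso
        have hwu : (weight w) u = k := ha hu
        have : (weight w) u + (weight w) v = m := by rw [← map_add, huv, hd]
        omega
    · rfl

lemma aux_lift {K : Type*} [Field K] {n : ℕ} {w : Fin n → ℕ} {S : Type*}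
    (f : S → MvPolynomial (Fin n) K)
    {h : MvPolynomial (Fin n) K} {D : ℕ}
    (hhom : MvPolynomial.IsWeightedHomogeneous w h D)
    (hmem : h ∈ Ideal.span (Set.range fun s =>
      MvPolynomial.weightedHomogeneousComponent w ((f s).weightedTotalDegree w) (f s))) :
    ∃ p ∈ Ideal.span (Set.range f),
      MvPolynomial.weightedHomogeneousComponent w D p = h ∧
      ∀ e, D < e → MvPolynomial.weightedHomogeneousComponent w e p = 0 := by
  classical
  rw [Ideal.span, Finsupp.mem_span_range_iff_exists_finsupp] at hmem
  obtain ⟨c, hc⟩ := hmem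
  set d : S → ℕ := fun s => (f s).weightedTotalDegree w with hd
  set L : S → MvPolynomial (Fin n) K :=
    fun s => MvPolynomial.weightedHomogeneousComponent w (d s) (f s) with hL
  have hLhom : ∀ s, MvPolynomial.IsWeightedHomogeneous w (L s) (d s) := fun s =>
    weightedHomogeneousComponent_isWeightedHomogeneous _ _
  set a : S → MvPolynomial (Fin n) K :=
    fun s => if d s ≤ D then MvPolynomial.weightedHomogeneousComponent w (D - d s) (c s)
      else 0 with ha
  have hahom : ∀ s, d s ≤ D → MvPolynomial.IsWeightedHomogeneous w (a s) (D - d s) := by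
    intro s hs
    simp only [ha, if_pos hs]
    exact weightedHomogeneousComponent_isWeightedHomogeneous _ _
  have hch : ∑ s ∈ c.support, c s * L s = h := by
    rw [← hc]; rfl
  refine ⟨∑ s ∈ c.support, a s * f s, ?_, ?_, ?_⟩
  · exact Ideal.sum_mem _ fun s _ => Ideal.mul_mem_left _ _ (Ideal.subset_span ⟨s, rfl⟩)
  · rw [map_sum]
    have : ∀ s ∈ c.support,
        MvPolynomial.weightedHomogeneousComponent w D (a s * f s)
          = MvPolynomial.weightedHomogeneousComponent w D (c s * L s) := by
      intro s _
      by_cases hs : d s ≤ D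
      · rw [aux_comp_mul (a s) (f s) (D - d s) (hahom s hs) D, if_pos (by omega),
          mul_comm (c s) (L s), aux_comp_mul (L s) (c s) (d s) (hLhom s) D, if_pos hs]
        have : D - (D - d s) = d s := by omega
        rw [this]
        simp only [ha, if_pos hs]
        ring
      · simp only [ha, if_neg hs, zero_mul, map_zero]
        rw [mul_comm (c s) (L s), aux_comp_mul (L s) (c s) (d s) (hLhom s) D, if_neg hs]
    rw [Finset.sum_congr rfl this, ← map_sum, hch,
      hhom.weightedHomogeneousComponent_same]
  · intro e he
    rw [map_sum]
    refine Finset.sum_eq_zero ?_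
    intro s _
    by_cases hs : d s ≤ D
    · rw [aux_comp_mul (a s) (f s) (D - d s) (hahom s hs) e, if_pos (by omega)]
      have : MvPolynomial.weightedHomogeneousComponent w (e - (D - d s)) (f s) = 0 := by
        apply weightedHomogeneousComponent_eq_zero'
        intro dd hdd
        have h2 : (weight w) dd ≤ d s := le_weightedTotalDegree w hdd
        omega
      rw [this, mul_zero]
    · simp only [ha, if_neg hs, zero_mul, map_zero]


lemma aux_chain {R : Type*} [CommRing R] {J P Q : Ideal R} (hP : P.IsPrime) (hQ : Q.IsPrime)
    (hJP : J ≤ P) (hPQ : P < Q) (h0 : ringKrullDim (R ⧸ J) ≤ 0) : False := by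
  have hJQ : J ≤ Q := le_trans hJP hPQ.le
  have hkP : RingHom.ker (Ideal.Quotient.mk J) ≤ P := by rwa [Ideal.mk_ker]
  have hkQ : RingHom.ker (Ideal.Quotient.mk J) ≤ Q := by rwa [Ideal.mk_ker]
  have hP' : (P.map (Ideal.Quotient.mk J)).IsPrime :=
    Ideal.map_isPrime_of_surjective Ideal.Quotient.mk_surjective hkP
  have hQ' : (Q.map (Ideal.Quotient.mk J)).IsPrime :=
    Ideal.map_isPrime_of_surjective Ideal.Quotient.mk_surjective hkQ
  have hlt : (⟨_, hP'⟩ : PrimeSpectrum (R ⧸ J)) < ⟨_, hQ'⟩ := by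
    constructor
    · exact Ideal.map_mono hPQ.le
    · intro hle
      have h1 := Ideal.comap_map_of_surjective (Ideal.Quotient.mk J) Ideal.Quotient.mk_surjective P
      have h2 := Ideal.comap_map_of_surjective (Ideal.Quotient.mk J) Ideal.Quotient.mk_surjective Q
      rw [← RingHom.ker_eq_comap_bot, Ideal.mk_ker] at h1 h2
      have : Q ≤ P := by
        calc Q ≤ Q ⊔ J := le_sup_left
        _ = Ideal.comap (Ideal.Quotient.mk J) (Q.map (Ideal.Quotient.mk J)) := h2.symm
        _ ≤ Ideal.comap (Ideal.Quotient.mk J) (P.map (Ideal.Quotient.mk J)) :=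
            Ideal.comap_mono hle
        _ = P ⊔ J := h1
        _ = P := by rw [sup_eq_left]; exact hJP
      exact absurd (le_antisymm hPQ.le this) hPQ.ne
  have hser : ∃ s : LTSeries (PrimeSpectrum (R ⧸ J)), s.length = 1 := by
    refine ⟨(RelSeries.singleton _ (⟨_, hP'⟩ : PrimeSpectrum (R ⧸ J))).snoc ⟨_, hQ'⟩ ?_, rfl⟩
    simpa using hlt
  obtain ⟨s, hs⟩ := hser
  have := Order.LTSeries.length_le_krullDim s
  rw [hs] at this
  have : (1 : WithBot (WithTop ℕ)) ≤ 0 := le_trans (by exact_mod_cast this) h0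
  norm_num at this

lemma aux_artinian_dim (A : Type*) [CommRing A] [IsArtinianRing A] : ringKrullDim A ≤ 0 := by
  refine iSup_le fun p => ?_
  suffices hp : p.length = 0 by simp [hp]
  by_contra hp
  have h1 : 0 < p.length := Nat.pos_of_ne_zero hp
  have hstep := p.step ⟨0, h1⟩
  set x := p ⟨0, by omega⟩
  set y := p ⟨1, by omega⟩
  have hxy : x < y := hstep
  haveI := x.2
  haveI := y.2
  have hmax : x.asIdeal.IsMaximal := IsArtinianRing.isMaximal_of_isPrime x.asIdeal
  have : x.asIdeal = y.asIdeal := hmax.eq_of_le y.2.ne_top hxy.le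
  exact absurd (PrimeSpectrum.ext this) hxy.ne

lemma aux_findim_dim (K : Type*) (A : Type*) [Field K] [CommRing A] [Algebra K A]
    [Module.Finite K A] : ringKrullDim A ≤ 0 := by
  haveI h1 : IsArtinian K A := isArtinian_of_fg_of_artinian'
  haveI h2 : IsArtinianRing A := isArtinian_of_tower K h1
  exact aux_artinian_dim A

/-- **Hillar, Corollary 1.5.**
With notation as in Lemma 1.4 (ideal `I` generated by nonzero polynomials `f s`,
ideal `J` generated by their leading forms with respect to a positive weighting
`w`): if `J` is zero-dimensional, then so is `I`. -/
theorem zeroDim_of_leadingForms_zeroDim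
    (K : Type*) [Field K] (n : ℕ) (w : Fin n → ℕ) (hw : ∀ i, 0 < w i)
    (S : Type*) (f : S → MvPolynomial (Fin n) K) (hf : ∀ s, f s ≠ 0)
    (I J : Ideal (MvPolynomial (Fin n) K))
    (hI : I = Ideal.span (Set.range f))
    (hJ : J = Ideal.span (Set.range fun s =>
      MvPolynomial.weightedHomogeneousComponent w
        ((f s).weightedTotalDegree w) (f s)))
    (hJ0 : ringKrullDim (MvPolynomial (Fin n) K ⧸ J) ≤ 0) :
    ringKrullDim (MvPolynomial (Fin n) K ⧸ I) ≤ 0 := by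
  classical
  set 𝒜 := weightedHomogeneousSubmodule K w with h𝒜
  letI : GradedAlgebra 𝒜 := weightedGradedAlgebra K w
  -- Step 1: each variable is in the radical of J
  have hrad : ∀ i : Fin n, X i ∈ J.radical := by
    intro i
    rw [Ideal.radical_eq_sInf]
    refine Submodule.mem_sInf.mpr ?_
    rintro P ⟨hJP, hPprime⟩
    by_contra hxP
    set Q := (Ideal.homogeneousCore 𝒜 P).toIdeal with hQdef
    have hQprime : Q.IsPrime := hPprime.homogeneousCore (𝒜 := 𝒜)
    have hJQ : J ≤ Q := by
      rw [hJ, Ideal.span_le]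
      rintro x ⟨s, rfl⟩
      rw [SetLike.mem_coe, hQdef, HomogeneousIdeal.mem_iff]
      refine Ideal.mem_homogeneousCore_of_homogeneous_of_mem
        ⟨_, weightedHomogeneousComponent_mem w (f s) _⟩ (hJP ?_)
      rw [hJ]
      exact Ideal.subset_span ⟨s, rfl⟩
    have hxQ : X i ∉ Q := fun hx => hxP (Ideal.toIdeal_homogeneousCore_le 𝒜 P hx)
    set m := RingHom.ker (constantCoeff : MvPolynomial (Fin n) K →+* K) with hmdef
    have hmprime : m.IsPrime := RingHom.ker_isPrime _
    have hQm : Q ≤ m := by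
      intro q hq
      have hhomQ : Ideal.IsHomogeneous 𝒜 Q := (Ideal.homogeneousCore 𝒜 P).isHomogeneous
      have hc0 : ((DirectSum.decompose 𝒜 q 0 : 𝒜 0) : MvPolynomial (Fin n) K) ∈ Q :=
        hhomQ 0 hq
      have h2 : ((DirectSum.decompose 𝒜 q 0 : 𝒜 0) : MvPolynomial (Fin n) K)
          = weightedHomogeneousComponent w 0 q :=
        weightedDecomposition.decompose'_apply K w q 0
      rw [h2, weightedHomogeneousComponent_zero q (fun j => (hw j).ne')] at hc0
      rw [hmdef, RingHom.mem_ker]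
      by_contra hne
      exact hQprime.ne_top
        (Ideal.eq_top_of_isUnit_mem _ hc0 ((isUnit_iff_ne_zero.mpr hne).map C))
    have hxm : X i ∈ m := by
      rw [hmdef, RingHom.mem_ker]
      simp
    exact aux_chain hQprime hmprime hJQ (hQm.lt_of_ne fun h => hxQ (h ▸ hxm)) hJ0
  have hradN : ∀ i : Fin n, ∃ N : ℕ, (X i : MvPolynomial (Fin n) K) ^ N ∈ J := by
    intro i
    exact Ideal.mem_radical_iff.mp (hrad i)
  choose N hN using hradN
  set D : Fin n → ℕ := fun i => weight w (Finsupp.single i (N i)) with hD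
  have hXpow : ∀ i, MvPolynomial.IsWeightedHomogeneous w
      ((X i : MvPolynomial (Fin n) K) ^ N i) (D i) := by
    intro i
    rw [X_pow_eq_monomial]
    exact isWeightedHomogeneous_monomial w _ _ rfl
  have hlift : ∀ i : Fin n, ∃ p ∈ I,
      weightedHomogeneousComponent w (D i) p = X i ^ N i ∧
      ∀ e, D i < e → weightedHomogeneousComponent w e p = 0 := by
    intro i
    rw [hI]
    exact aux_lift f (hXpow i) (by rw [← hJ]; exact hN i)
  choose g hgI hgD hge using hlift
  set r : Fin n → MvPolynomial (Fin n) K := fun i => X i ^ N i - g i with hr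
  have hrkey : ∀ i, ∀ dd : Fin n →₀ ℕ, coeff dd (r i) ≠ 0 → weight w dd < D i := by
    intro i dd hdd
    by_contra hge'
    push_neg at hge'
    have hcomp : weightedHomogeneousComponent w (weight w dd) (r i) = 0 := by
      rcases eq_or_lt_of_le hge' with heq | hlt
      · rw [hr]
        simp only [map_sub]
        rw [← heq, hgD i, (hXpow i).weightedHomogeneousComponent_same, sub_self]
      · rw [hr]
        simp only [map_sub]
        rw [(hXpow i).weightedHomogeneousComponent_ne _ (by omega), hge i _ hlt, sub_zero]
    have h3 : coeff dd (weightedHomogeneousComponent w (weight w dd) (r i)) = coeff dd (r i) := by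
      rw [coeff_weightedHomogeneousComponent, if_pos rfl]
    rw [hcomp, coeff_zero] at h3
    exact hdd h3.symm
  set mset : Set (Fin n →₀ ℕ) := {μ | ∀ i, μ i < N i} with hmset
  have hmsetfin : mset.Finite := by
    have hsub : mset ⊆ ⇑Finsupp.equivFunOnFinite ⁻¹'
        (Set.univ.pi fun i => Set.Iio (N i)) := by
      intro μ hμ
      simp only [Set.mem_preimage, Set.mem_pi, Set.mem_univ, forall_true_left, Set.mem_Iio]
      intro j
      exact hμ j
    exact Set.Finite.subset
      ((Set.Finite.pi fun i => Set.finite_Iio (N i)).preimage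
        (Finsupp.equivFunOnFinite.injective.injOn)) hsub
  set φl := (Ideal.Quotient.mkₐ K I).toLinearMap with hφl
  set Smon : Set (MvPolynomial (Fin n) K ⧸ I) :=
    (fun μ => Ideal.Quotient.mkₐ K I (monomial μ (1:K))) '' mset with hSmon
  set W : Submodule K (MvPolynomial (Fin n) K) := (Submodule.span K Smon).comap φl with hW
  have hIW : ∀ p ∈ I, p ∈ W := by
    intro p hp
    simp only [hW, Submodule.mem_comap, hφl, AlgHom.toLinearMap_apply, Ideal.Quotient.mkₐ_eq_mk]
    rw [Ideal.Quotient.eq_zero_iff_mem.mpr hp]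
    exact zero_mem _
  have hmono : ∀ t : ℕ, ∀ dd : Fin n →₀ ℕ, weight w dd = t → monomial dd (1:K) ∈ W := by
    intro t
    induction t using Nat.strong_induction_on with
    | _ t IH =>
      intro dd hdd
      by_cases hcase : ∀ i, dd i < N i
      · apply Submodule.mem_comap.mpr
        exact Submodule.subset_span ⟨dd, hcase, rfl⟩
      · push_neg at hcase
        obtain ⟨i, hi⟩ := hcase
        set dd' := dd - Finsupp.single i (N i) with hdd'
        have hsum : dd' + Finsupp.single i (N i) = dd := by
          ext j
          simp only [hdd', Finsupp.add_apply, Finsupp.tsub_apply, Finsupp.single_apply]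
          by_cases hji : i = j
          · subst hji
            simp
            omega
          · simp [hji]
        have hmon : monomial dd (1:K) = monomial dd' 1 * X i ^ N i := by
          rw [X_pow_eq_monomial, monomial_mul, one_mul, hsum]
        have hsplit : monomial dd (1:K) = monomial dd' 1 * g i + monomial dd' 1 * r i := by
          rw [hmon, hr]
          ring
        have h1 : monomial dd' (1:K) * g i ∈ W := hIW _ (Ideal.mul_mem_left _ _ (hgI i))
        have h2 : monomial dd' (1:K) * r i ∈ W := by
          rw [← support_sum_monomial_coeff (r i), Finset.mul_sum]
          refine Submodule.sum_mem _ ?_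
          intro e he
          have heq : monomial dd' (1:K) * monomial e (coeff e (r i))
              = coeff e (r i) • monomial (dd' + e) (1:K) := by
            rw [monomial_mul, smul_monomial, one_mul, smul_eq_mul, mul_one]
          rw [heq]
          refine Submodule.smul_mem _ _ ?_
          refine IH (weight w (dd' + e)) ?_ _ rfl
          have h5 : weight w e < D i := hrkey i e (MvPolynomial.mem_support_iff.mp he)
          have h6 : weight w (dd' + e) = weight w dd' + weight w e := map_add _ _ _
          have h7 : weight w dd = weight w dd' + D i := by
            rw [← hsum, map_add]
          omega
        rw [hsplit]
        exact add_mem h1 h2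
  have hWtop : ∀ p : MvPolynomial (Fin n) K, p ∈ W := by
    intro p
    rw [← support_sum_monomial_coeff p]
    refine Submodule.sum_mem _ ?_
    intro dd _
    have heq2 : monomial dd (coeff dd p) = coeff dd p • monomial dd (1:K) := by
      rw [smul_monomial, smul_eq_mul, mul_one]
    rw [heq2]
    exact Submodule.smul_mem _ _ (hmono _ dd rfl)
  have hspan : Submodule.span K Smon = ⊤ := by
    rw [eq_top_iff]
    rintro z -
    obtain ⟨p, rfl⟩ := Ideal.Quotient.mkₐ_surjective K I z
    exact Submodule.mem_comap.mp (hWtop p)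
  have hSmonfin : Smon.Finite := hmsetfin.image _
  haveI hfinmod : Module.Finite K (MvPolynomial (Fin n) K ⧸ I) := by
    rw [Module.finite_def]
    exact ⟨hSmonfin.toFinset, by rw [Set.Finite.coe_toFinset]; exact hspan⟩
  exact aux_findim_dim K _
end

section
/- Define polynomials p_{n,q} ∈ ℤ[y₁, y₂, …] for integers n ≥ 0 and q ≥ 1 by p_{0,q} = 1, p_{n,1} = y_n for n ≥ 1, and, for m ≥ 1 and q > 1, p_{m,q} = y_m + ∑_{j=0}^{m−1} binom(m,j)·y_j·p_{m−j, q−1}, where y₀ denotes the constant 1. Fix an integer n ≥ 2 and let φ be the ring endomorphism of ℤ[y₁, y₂, …] sending y_j ↦ 0 for j ≥ n and y_j ↦ y_j for 1 ≤ j < n. Then for every integer a ≥ 1 and every integer b ≥ 0, φ(p_{(a+1)(n−1)+b, a}) = 0. -/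
open MvPolynomial in
/-- The polynomials `p_{n,q} ∈ ℤ[y₁, y₂, …]` (`n ≥ 0`, `q ≥ 1`) defined by
`p_{0,q} = 1`, `p_{n,1} = y_n` for `n ≥ 1`, and for `m ≥ 1`, `q > 1`,
`p_{m,q} = y_m + ∑_{j=0}^{m−1} binom(m,j)·y_j·p_{m−j,q−1}`, with `y₀ = 1`
(the variable `X i` plays the role of `y_i`; the value at `q = 0` is a junk
value, never used). -/
noncomputable def hillarPQ : ℕ → ℕ → MvPolynomial ℕ ℤ
  | 0, _ => 1
  | _ + 1, 0 => 0
  | m + 1, 1 => X (m + 1)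
  | m + 1, q + 2 =>
      X (m + 1) +
        ∑ j ∈ Finset.range (m + 1),
          ((m + 1).choose j : ℤ) •
            ((if j = 0 then 1 else X j) * hillarPQ (m + 1 - j) (q + 1))
  termination_by _ q => q
  decreasing_by omega

/-- The ring endomorphism `φ` of `ℤ[y₁, y₂, …]` sending `y_j ↦ 0` for `j ≥ n`
and `y_j ↦ y_j` for `j < n`. -/
noncomputable def hillarPhi (n : ℕ) : MvPolynomial ℕ ℤ →ₐ[ℤ] MvPolynomial ℕ ℤ :=
  MvPolynomial.aeval fun j => if j < n then MvPolynomial.X j else 0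

open MvPolynomial in
lemma hillarPhi_X_of_le (n j : ℕ) (h : n ≤ j) : hillarPhi n (X j) = 0 := by
  simp [hillarPhi, aeval_X, Nat.not_lt.mpr h]

open MvPolynomial in
lemma hillar_key (n : ℕ) (hn : 2 ≤ n) :
    ∀ a, 1 ≤ a → ∀ m, (a + 1) * (n - 1) ≤ m → hillarPhi n (hillarPQ m a) = 0 := by
  intro a
  induction a with
  | zero => omega
  | succ a ih =>
    intro _ m hm
    have e1 : (a + 1 + 1) * (n - 1) = (a + 1) * (n - 1) + (n - 1) := by ring
    have e2 : n - 1 ≤ (a + 1) * (n - 1) := Nat.le_mul_of_pos_left _ (by omega)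
    obtain ⟨m', rfl⟩ : ∃ m', m = m' + 1 := ⟨m - 1, by omega⟩
    rcases a with _ | a
    · rw [hillarPQ]
      exact hillarPhi_X_of_le n _ (by omega)
    · rw [hillarPQ]
      rw [map_add, hillarPhi_X_of_le n _ (by omega), zero_add, map_sum]
      refine Finset.sum_eq_zero fun j hj => ?_
      rw [map_smul, map_mul]
      by_cases hjn : n ≤ j
      · rw [if_neg (by omega), hillarPhi_X_of_le n _ hjn, zero_mul, smul_zero]
      · have : hillarPhi n (hillarPQ (m' + 1 - j) (a + 1)) = 0 := by
          refine ih (by omega) _ ?_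
          omega
        rw [this, mul_zero, smul_zero]

/-- **Hillar, Lemma 2.3.**
For `n ≥ 2`, `a ≥ 1`, and `b ≥ 0`, `φ(p_{(a+1)(n−1)+b, a}) = 0`. -/
theorem hillarPhi_hillarPQ_eq_zero (n : ℕ) (hn : 2 ≤ n) :
    ∀ (a b : ℕ), 1 ≤ a → hillarPhi n (hillarPQ ((a + 1) * (n - 1) + b) a) = 0 := by
  intro a b ha
  exact hillar_key n hn a ha _ (Nat.le_add_right _ _)
end

section
/- Define polynomials p_n ∈ ℤ[y₁, y₂, …] by p₀ = 1 and, for m ≥ 1, p_m = −∑_{j=1}^{m−1} binom(m,j)·p_{m−j}·y_j − y_m, and for an integer n ≥ 2 let φ be the ring endomorphism sending y_j ↦ 0 for j ≥ n and y_j ↦ y_j for j < n. Let m ≥ 2 and n ≥ 2 be integers and let L be a field whose characteristic is 0 or greater than m + n − 2. If (c₁, …, c_{n−1}) ∈ L^{n−1} satisfies φ(p_{m+k})(c₁, …, c_{n−1}) = 0 for every k = 0, 1, …, n−2, then c₁ = c₂ = ⋯ = c_{n−1} = 0. -/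
open MvPolynomial in
/-- The polynomials `p_m ∈ ℤ[y₁, y₂, …]` defined by `p₀ = 1` and, for `m ≥ 1`,
`p_m = −∑_{j=1}^{m−1} binom(m,j)·p_{m−j}·y_j − y_m` (the variable `X i`
plays the role of `y_i`; the sum below is reindexed by `j ↦ j + 1`). -/
noncomputable def hillarP : ℕ → MvPolynomial ℕ ℤ
  | 0 => 1
  | m + 1 =>
      -(∑ j ∈ Finset.range m,
          ((m + 1).choose (j + 1) : ℤ) • (hillarP (m - j) * X (j + 1))) -
        X (m + 1)
  termination_by m => m
  decreasing_by omega

/-- **Hillar, key step in the proof of Theorem 1.2 (1).**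
Let `m, n ≥ 2` and let `L` be a field of characteristic `0` or greater than
`m + n − 2`.  If `(c₁, …, c_{n−1}) ∈ L^{n−1}` is a common zero of the
polynomials `φ(p_{m+k})` for `k = 0, 1, …, n−2` (each of which involves only
the variables `y₁, …, y_{n−1}`), then `c₁ = ⋯ = c_{n−1} = 0`. -/
theorem hillarPhi_hillarP_common_zero_trivial
    (m n : ℕ) (hm : 2 ≤ m) (hn : 2 ≤ n)
    (L : Type*) [Field L]
    (hchar : ringChar L = 0 ∨ m + n - 2 < ringChar L)
    (c : ℕ → L)
    (hroot : ∀ k ≤ n - 2,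
      MvPolynomial.aeval c (hillarPhi n (hillarP (m + k))) = 0) :
    ∀ j, 1 ≤ j → j ≤ n - 1 → c j = 0 := by
  classical
  -- collapse the two evaluations into one
  set c' : ℕ → L := fun i => if i < n then c i else 0 with hc'
  have hcomp : ∀ p : MvPolynomial ℕ ℤ,
      MvPolynomial.aeval c (hillarPhi n p) = MvPolynomial.aeval c' p := by
    intro p
    have : (MvPolynomial.aeval c).comp (hillarPhi n) = MvPolynomial.aeval c' := by
      apply MvPolynomial.algHom_ext
      intro i
      simp [hillarPhi, hc']
      split <;> simp
    calc MvPolynomial.aeval c (hillarPhi n p)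
        = ((MvPolynomial.aeval c).comp (hillarPhi n)) p := rfl
      _ = MvPolynomial.aeval c' p := by rw [this]
  set q : ℕ → L := fun s => MvPolynomial.aeval c' (hillarP s) with hqdef
  have hq0 : q 0 = 1 := by simp [hqdef, hillarP]
  -- E i : "y_0 = 1" extension of c'
  set E : ℕ → L := fun i => if i = 0 then 1 else c' i with hE
  -- symmetric recurrence
  have hrec : ∀ s : ℕ,
      ∑ i ∈ Finset.range (s + 2), ((s+1).choose i : L) * q (s + 1 - i) * E i = 0 := by
    intro s
    rw [Finset.sum_range_succ, Finset.sum_range_succ']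
    have hq1 : q (s+1) =
        -(∑ j ∈ Finset.range s,
            ((s + 1).choose (j + 1) : L) * (q (s - j) * c' (j + 1))) - c' (s + 1) := by
      simp only [hqdef]
      rw [hillarP]
      simp [zsmul_eq_mul]
    have e0 : E 0 = 1 := by simp [hE]
    have hterm : ∀ j ∈ Finset.range s,
        ((s+1).choose (j+1) : L) * q (s + 1 - (j+1)) * E (j+1)
          = ((s + 1).choose (j + 1) : L) * (q (s - j) * c' (j + 1)) := by
      intro j hj
      have : s + 1 - (j+1) = s - j := by omega
      rw [this]
      simp [hE]
      ring
    rw [Finset.sum_congr rfl hterm]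
    simp only [e0, Nat.choose_zero_right, Nat.cast_one, one_mul, mul_one,
      Nat.choose_self, Nat.sub_self, Nat.sub_zero, hq0]
    have : E (s+1) = c' (s+1) := by simp [hE]
    rw [hq1, this]
    ring
  -- factorials are nonzero
  have hfac : ∀ s : ℕ, s ≤ m + n - 2 → (s.factorial : L) ≠ 0 := by
    intro s hs
    rcases hchar with h0 | hlt
    · haveI : CharP L 0 := h0 ▸ ringChar.charP L
      haveI : CharZero L := CharP.charP_to_charZero L
      exact_mod_cast Nat.cast_ne_zero.mpr s.factorial_ne_zero
    · set p := ringChar L with hp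
      haveI : CharP L p := ringChar.charP L
      haveI : NeZero p := ⟨by omega⟩
      have hprime : p.Prime := CharP.char_is_prime_of_pos L p |>.out
      intro hzero
      rw [CharP.cast_eq_zero_iff L p] at hzero
      have := (Nat.Prime.dvd_factorial hprime).mp hzero
      omega
  -- normalized sequences
  set a : ℕ → L := fun s => q s / (s.factorial : L) with ha
  set B : ℕ → L := fun i => E i / (i.factorial : L) with hB
  have ha0 : a 0 = 1 := by simp [ha, hq0]
  have hBzero : ∀ i, n ≤ i → B i = 0 := by
    intro i hi
    have : ¬ i < n := by omega
    simp [hB, hE, hc', this]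
    omega
  -- divided recurrence
  have hconv : ∀ s : ℕ, 1 ≤ s → s ≤ m + n - 2 →
      ∑ i ∈ Finset.range (s + 1), a (s - i) * B i = 0 := by
    intro s hs1 hs2
    obtain ⟨t, rfl⟩ : ∃ t, s = t + 1 := ⟨s - 1, by omega⟩
    have h := hrec t
    have hterm : ∀ i ∈ Finset.range (t + 2),
        a (t + 1 - i) * B i
          = ((t+1).choose i : L) * q (t + 1 - i) * E i / ((t+1).factorial : L) := by
      intro i hi
      rw [Finset.mem_range] at hi
      have hile : i ≤ t + 1 := by omega
      have hfi : (i.factorial : L) ≠ 0 := hfac i (by omega)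
      have hfsi : ((t + 1 - i).factorial : L) ≠ 0 := hfac _ (by omega)
      have hfs : ((t+1).factorial : L) ≠ 0 := hfac _ (by omega)
      have hkey : ((t+1).choose i : L) * (i.factorial : L) * ((t+1-i).factorial : L)
          = ((t+1).factorial : L) := by
        rw [← Nat.cast_mul, ← Nat.cast_mul, Nat.choose_mul_factorial_mul_factorial hile]
      rw [ha, hB]
      field_simp
      calc q (t + 1 - i) * E i * ((t+1).factorial : L)
          = q (t+1-i) * E i * (((t+1).choose i : L) * (i.factorial : L) * ((t+1-i).factorial : L)) := by rw [hkey]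
        _ = ((t+1).choose i : L) * q (t + 1 - i) * E i * (((t + 1 - i).factorial :L) * (i.factorial : L)) := by ring
        _ = q (t + 1 - i) * ((t + 1 - i).factorial : L) * E i * (i.factorial : L) * ((t + 1).choose i : L) := by ring
    rw [Finset.sum_congr rfl hterm, ← Finset.sum_div, h, zero_div]
  -- the window of zeros
  have hawin : ∀ i, m ≤ i → i ≤ m + n - 2 → a i = 0 := by
    intro i hi1 hi2
    have : q i = 0 := by
      have := hroot (i - m) (by omega)
      rw [hcomp] at this
      have hi : m + (i - m) = i := by omega
      rw [hi] at this
      exact this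
    simp [ha, this]
  -- main argument
  intro j hj1 hj2
  by_contra hcj
  have hjn : j < n := by omega
  have hBj : B j ≠ 0 := by
    have hj0 : j ≠ 0 := by omega
    have hfj : (j.factorial : L) ≠ 0 := hfac j (by omega)
    have : B j = c j / (j.factorial : L) := by simp [hB, hE, hc', hj0, hjn]
    rw [this]
    exact div_ne_zero hcj hfj
  set d := Nat.findGreatest (fun i => B i ≠ 0) (n - 1) with hd
  have hdB : B d ≠ 0 := by
    rw [hd]; exact Nat.findGreatest_spec (P := fun i => B i ≠ 0) hj2 hBj
  have hd1 : 1 ≤ d := by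
    rw [hd]; exact le_trans hj1 (Nat.le_findGreatest hj2 hBj)
  have hdn : d ≤ n - 1 := by rw [hd]; exact Nat.findGreatest_le _
  have hdmax : ∀ i, d < i → B i = 0 := by
    intro i hi
    by_cases hin : i ≤ n - 1
    · by_contra hBi
      rw [hd] at hi
      exact (Nat.findGreatest_is_greatest (P := fun i => B i ≠ 0) hi hin) hBi
    · exact hBzero i (by omega)
  have key : ∀ t, t ≤ m → ∀ i, m - t ≤ i → i ≤ m + n - 2 → a i = 0 := by
    intro t
    induction t with
    | zero => intro _ i hi1 hi2; exact hawin i (by omega) hi2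
    | succ t IH =>
      intro ht i hi1 hi2
      by_cases hcase : m - t ≤ i
      · exact IH (by omega) i hcase hi2
      · have hieq : i = m - t - 1 := by omega
        have hs1 : 1 ≤ i + d := by omega
        have hs2 : i + d ≤ m + n - 2 := by omega
        have h := hconv (i + d) hs1 hs2
        have hsingle : ∑ r ∈ Finset.range (i + d + 1), a (i + d - r) * B r
            = a (i + d - d) * B d := by
          apply Finset.sum_eq_single_of_mem
          · rw [Finset.mem_range]; omega
          · intro r hr hrd
            rw [Finset.mem_range] at hr
            by_cases hrd2 : d < r
            · rw [hdmax r hrd2, mul_zero]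
            · have hrlt : r < d := by omega
              have : a (i + d - r) = 0 := by
                apply IH (by omega)
                · omega
                · omega
              rw [this, zero_mul]
        rw [hsingle] at h
        have : i + d - d = i := by omega
        rw [this] at h
        exact (mul_eq_zero.mp h).resolve_right hdB
  have ha00 : a 0 = 0 := key m le_rfl 0 (by omega) (by omega)
  rw [ha0] at ha00
  exact one_ne_zero ha00
end

section
/- Define polynomials p_{n,q} ∈ ℤ[y₁, y₂, …] (n ≥ 0, q ≥ 1) by p_{0,q} = 1, p_{n,1} = y_n for n ≥ 1, and, for m ≥ 1 and q > 1, p_{m,q} = y_m + ∑_{j=0}^{m−1} binom(m,j)·y_j·p_{m−j, q−1}, where y₀ denotes the constant 1; for an integer n ≥ 2 let φ be the ring endomorphism sending y_j ↦ 0 for j ≥ n and y_j ↦ y_j for j < n. Let n ≥ 2, and let m, q be integers with 2 ≤ m ≤ q, and let L be a field whose characteristic is 0 or greater than (q+1)(n−1) − 1. If (c₁, …, c_{n−1}) ∈ L^{n−1} satisfies φ(p_{l,q})(c₁, …, c_{n−1}) = 0 for every integer l with m ≤ l ≤ (q+1)(n−1) − 1, then c₁ = c₂ = ⋯ = c_{n−1}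 = 0. -/

lemma hillar_fac_ne_zero {L : Type*} [Field L] (B : ℕ)
    (hchar : ringChar L = 0 ∨ B < ringChar L) (k : ℕ) (hk : k ≤ B) :
    (k.factorial : L) ≠ 0 := by
  rcases CharP.char_is_prime_or_zero L (ringChar L) with hp | h0
  · rcases hchar with h | h
    · rw [h] at hp; exact absurd hp (by norm_num)
    · intro hz
      have hd : ringChar L ∣ k.factorial := (CharP.cast_eq_zero_iff L (ringChar L) _).mp hz
      have := (Nat.Prime.dvd_factorial hp).mp hd
      omega
  · haveI : CharP L 0 := h0 ▸ ringChar.charP L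
    haveI : CharZero L := CharP.charP_to_charZero L
    exact_mod_cast k.factorial_ne_zero

lemma hillar_coeff_pow_zero {L : Type*} [Field L] (G : Polynomial L)
    (h : G.coeff 0 = 1) (q : ℕ) : (G ^ q).coeff 0 = 1 := by
  induction q with
  | zero => simp
  | succ q ih => rw [pow_succ, Polynomial.mul_coeff_zero, ih, h, mul_one]

lemma hillar_key_s15 {L : Type*} [Field L] (e : ℕ → L) (G : Polynomial L)
    (hG : ∀ k, G.coeff k = if k = 0 then 1 else (k.factorial : L)⁻¹ * e k) :
    ∀ q, 1 ≤ q → ∀ l, (∀ k, k ≤ l → (k.factorial : L) ≠ 0) →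
      (l.factorial : L) * (G ^ q).coeff l = MvPolynomial.aeval e (hillarPQ l q) := by
  have hG0 : G.coeff 0 = 1 := by simpa using hG 0
  intro q
  induction q with
  | zero => omega
  | succ q ih =>
    intro _ l hfac
    match q, l with
    | 0, 0 => simp [hillarPQ, hG0]
    | 0, m + 1 =>
      rw [pow_one, hG (m+1)]
      simp only [show (0:ℕ)+1 = 1 from rfl, hillarPQ, Nat.succ_ne_zero, if_false,
        MvPolynomial.aeval_X]
      rw [← mul_assoc, mul_inv_cancel₀ (hfac (m+1) le_rfl), one_mul]
    | q + 1, 0 =>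
      simp [hillarPQ, hillar_coeff_pow_zero G hG0]
    | q + 1, m + 1 =>
      rw [hillarPQ]
      rw [pow_succ', Polynomial.coeff_mul,
        Finset.Nat.sum_antidiagonal_eq_sum_range_succ_mk, Finset.mul_sum,
        Finset.sum_range_succ]
      have hlast : ((m+1).factorial : L) *
          (G.coeff (m+1) * (G ^ (q+1)).coeff (m+1 - (m+1))) = e (m+1) := by
        simp only [Nat.sub_self, hillar_coeff_pow_zero G hG0, mul_one, hG (m+1),
          Nat.succ_ne_zero, if_false]
        rw [← mul_assoc, mul_inv_cancel₀ (hfac (m+1) le_rfl), one_mul]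
      rw [hlast, map_add, MvPolynomial.aeval_X, map_sum, add_comm]
      congr 1
      refine Finset.sum_congr rfl fun j hj => ?_
      have hjm : j ≤ m := Finset.mem_range_succ_iff.mp hj
      have hih := ih (by omega) (m + 1 - j) (fun k hk => hfac k (by omega))
      rw [map_smul, map_mul, zsmul_eq_mul]
      push_cast
      rw [← hih]
      rcases Nat.eq_zero_or_pos j with rfl | hj1
      · simp [hG0]
      · rw [hG j, if_neg (by omega)]
        simp only [MvPolynomial.aeval_X, if_neg (by omega : ¬ j = 0)]
        have hnat : ((m+1).choose j * j.factorial * (m+1-j).factorial : ℕ)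
            = (m+1).factorial := Nat.choose_mul_factorial_mul_factorial (by omega)
        have hL : ((m+1).factorial : L)
            = ((m+1).choose j : L) * (j.factorial : L) * ((m+1-j).factorial : L) := by
          rw [← hnat]; push_cast; ring
        rw [hL]
        have hjf : (j.factorial : L) ≠ 0 := hfac j (by omega)
        field_simp
/-- **Hillar, key step in the proof of Theorem 1.2 (2).**
Let `n ≥ 2`, `2 ≤ m ≤ q`, and let `L` be a field of characteristic `0` or
greater than `(q+1)(n−1) − 1`.  If `(c₁, …, c_{n−1}) ∈ L^{n−1}` is a common
zero of the polynomials `φ(p_{l,q})` for `m ≤ l ≤ (q+1)(n−1) − 1`, then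
`c₁ = ⋯ = c_{n−1} = 0`. -/
theorem hillarPhi_hillarPQ_common_zero_trivial
    (n m q : ℕ) (hn : 2 ≤ n) (hm : 2 ≤ m) (hmq : m ≤ q)
    (L : Type*) [Field L]
    (hchar : ringChar L = 0 ∨ (q + 1) * (n - 1) - 1 < ringChar L)
    (c : ℕ → L)
    (hroot : ∀ l, m ≤ l → l ≤ (q + 1) * (n - 1) - 1 →
      MvPolynomial.aeval c (hillarPhi n (hillarPQ l q)) = 0) :
    ∀ j, 1 ≤ j → j ≤ n - 1 → c j = 0 := by
  classical
  intro j0 hj01 hj02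
  by_contra hc0
  -- the substituted point
  set e : ℕ → L := fun j => if j < n then c j else 0 with he
  have hcomp : ∀ P, MvPolynomial.aeval c (hillarPhi n P) = MvPolynomial.aeval e P := by
    intro P
    have h : (MvPolynomial.aeval c).comp (hillarPhi n)
        = (MvPolynomial.aeval e : MvPolynomial ℕ ℤ →ₐ[ℤ] L) := by
      apply MvPolynomial.algHom_ext
      intro i
      by_cases hi : i < n <;> simp [hillarPhi, he, hi]
    exact congrArg (fun f => f P) (congrArg DFunLike.coe h) |>.trans rfl
  have hfacB : ∀ k, k ≤ (q+1)*(n-1)-1 → (k.factorial : L) ≠ 0 :=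
    hillar_fac_ne_zero _ hchar
  -- the polynomial G
  set d : ℕ → L := fun j => if j = 0 then 1 else (j.factorial : L)⁻¹ * e j with hd
  set G : Polynomial L := ∑ j ∈ Finset.range n, Polynomial.monomial j (d j) with hGdef
  have hG : ∀ k, G.coeff k = if k = 0 then 1 else (k.factorial : L)⁻¹ * e k := by
    intro k
    rw [hGdef, Polynomial.finset_sum_coeff]
    simp only [Polynomial.coeff_monomial]
    rw [Finset.sum_ite_eq' (Finset.range n) k d]
    by_cases hk : k < n
    · rw [if_pos (Finset.mem_range.mpr hk), hd]
    · rw [if_neg (by simpa using hk)]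
      have hk0 : ¬ k = 0 := by omega
      simp [he, hk0, hk]
  -- the top nonvanishing index
  set S : Finset ℕ := (Finset.range n).filter (fun j => 1 ≤ j ∧ e j ≠ 0) with hS
  have hj0S : j0 ∈ S := by
    simp only [hS, Finset.mem_filter, Finset.mem_range]
    have hj0n : j0 < n := by omega
    exact ⟨hj0n, hj01, by simpa [he, hj0n] using hc0⟩
  set D : ℕ := S.max' ⟨j0, hj0S⟩ with hDdef
  have hDS : D ∈ S := S.max'_mem _
  obtain ⟨hDn, hD1, hDe⟩ : D < n ∧ 1 ≤ D ∧ e D ≠ 0 := by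
    simpa [hS, Finset.mem_filter] using hDS
  have htop : ∀ k, D < k → G.coeff k = 0 := by
    intro k hk
    rw [hG, if_neg (by omega)]
    have hek : e k = 0 := by
      by_cases hkn : k < n
      · by_contra hek
        have : k ∈ S := by
          simp only [hS, Finset.mem_filter, Finset.mem_range]
          exact ⟨hkn, by omega, hek⟩
        exact absurd (S.le_max' k this) (by omega)
      · simp [he, hkn]
    rw [hek, mul_zero]
  have hcD : G.coeff D ≠ 0 := by
    rw [hG, if_neg (by omega)]
    have hDb : D ≤ (q+1)*(n-1)-1 := by
      have h2 : (q+1)*(n-1) = q*(n-1)+(n-1) := by ring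
      have h3 : n-1 ≤ q*(n-1) := Nat.le_mul_of_pos_left _ (by omega)
      omega
    exact mul_ne_zero (inv_ne_zero (hfacB D hDb)) hDe
  have hdeg : G.natDegree = D :=
    le_antisymm (Polynomial.natDegree_le_iff_coeff_eq_zero.mpr htop)
      (Polynomial.le_natDegree_of_ne_zero hcD)
  have hlead : G.leadingCoeff ≠ 0 := by
    rw [Polynomial.leadingCoeff, hdeg]; exact hcD
  have hcoefpow : (G ^ q).coeff (q * D) ≠ 0 := by
    rw [show q * D = q * G.natDegree by rw [hdeg],
      Polynomial.coeff_pow_mul_natDegree]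
    exact pow_ne_zero _ hlead
  have hqD2 : q * D ≤ (q+1)*(n-1) - 1 := by
    have h1 : q * D ≤ q * (n-1) := Nat.mul_le_mul_left q (by omega)
    have h2 : (q+1)*(n-1) = q*(n-1) + (n-1) := by ring
    omega
  have hqD1 : m ≤ q * D := le_trans hmq (Nat.le_mul_of_pos_right q (by omega))
  have h0 := hroot (q * D) hqD1 hqD2
  rw [hcomp] at h0
  have hkey := hillar_key_s15 e G hG q (by omega) (q * D)
    (fun k hk => hfacB k (le_trans hk hqD2))
  rw [h0] at hkey
  exact hcoefpow ((mul_eq_zero.mp hkey).resolve_left (hfacB (q * D) hqD2))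
end

section
/- Let K be a differential field of characteristic 0, let F be a differential field extension of K, and let N₁, N₂ > 1 be integers. Suppose L₁(Y) and L₂(Y) are nonzero homogeneous linear differential polynomials of orders N₁ and N₂ respectively with coefficients in K. If y ∈ F is nonzero and satisfies L₁(y) = 0 and L₂(1/y) = 0, then for each j = 1, …, N₁ − 1, the element D^j y / y satisfies a nonzero polynomial over K of degree at most binom(N₂ + N₁ − 2, N₁ − 1). -/
namespace HillarAux

open Finset Submodule

variable {K F : Type*} [Field K] [Field F] [Algebra K F]

/-- product of `w i` over a multiset of indices -/
noncomputable def mon (w : ℕ → F) (s : Multiset ℕ) : F := (s.map w).prod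

@[simp] lemma mon_zero (w : ℕ → F) : mon w 0 = 1 := rfl

lemma mon_cons (w : ℕ → F) (a : ℕ) (s : Multiset ℕ) :
    mon w (a ::ₘ s) = w a * mon w s := by
  simp [mon]

lemma mon_add (w : ℕ → F) (s t : Multiset ℕ) :
    mon w (s + t) = mon w s * mon w t := by
  simp [mon]

/-- the universal "inverse series" elements truncated at `q` -/
noncomputable def Af (w : ℕ → F) (q : ℕ) : ℕ → F
  | 0 => 1
  | (N+1) => - ∑ j ∈ (Finset.Icc 1 (min (N+1) q)).attach,
      w j.1 * Af w q (N+1 - j.1)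
  termination_by N => N
  decreasing_by
    have := (Finset.mem_Icc.mp j.2).1
    omega

@[simp] lemma Af_zero (w : ℕ → F) (q : ℕ) : Af w q 0 = 1 := by rw [Af]

lemma Af_succ (w : ℕ → F) (q N : ℕ) :
    Af w q (N+1) = - ∑ j ∈ Finset.Icc 1 (min (N+1) q), w j * Af w q (N+1 - j) := by
  rw [Af]
  congr 1
  exact Finset.sum_attach (Finset.Icc 1 (min (N+1) q)) (fun j => w j * Af w q (N+1 - j))

/-- the defining relation, for `N ≥ 1` -/
lemma Af_rel (w : ℕ → F) (q N : ℕ) (hN : 1 ≤ N) :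
    Af w q N + ∑ j ∈ Finset.Icc 1 (min N q), w j * Af w q (N - j) = 0 := by
  obtain ⟨M, rfl⟩ : ∃ M, N = M + 1 := ⟨N - 1, by omega⟩
  rw [Af_succ]; ring

/-- the key exchange identity: `w q * Af α` in terms of `Af` with higher indices. -/
lemma Af_X (w : ℕ → F) {q : ℕ} (hq : 1 ≤ q) (α : ℕ) :
    w q * Af w q α = - Af w q (α + q) - ∑ j ∈ Finset.Icc 1 (q-1), w j * Af w q (α + q - j) := by
  have h := Af_rel w q (α + q) (by omega)
  have hmin : min (α + q) q = q := by omega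
  rw [hmin] at h
  obtain ⟨q', rfl⟩ : ∃ q', q = q' + 1 := ⟨q - 1, by omega⟩
  rw [Finset.sum_Icc_succ_top (by omega : 1 ≤ q' + 1)] at h
  have : α + (q' + 1) - (q' + 1) = α := by omega
  rw [this] at h
  have hq' : q' + 1 - 1 = q' := by omega
  rw [hq']
  linear_combination h


section Spans

variable (K)

/-- Generators: either `mon ρ * Af q N` with `N ≥ c+1`, or a short monomial. -/
def Gen (w : ℕ → F) (q c W : ℕ) : Set F :=
  {x | ∃ s : Multiset ℕ, ∃ N : ℕ, (∀ i ∈ s, 1 ≤ i ∧ i ≤ q) ∧ c + 1 ≤ N ∧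
        s.sum + N ≤ W ∧ x = mon w s * Af w q N} ∪
  {x | ∃ s : Multiset ℕ, (∀ i ∈ s, 1 ≤ i ∧ i ≤ q) ∧ Multiset.card s ≤ c ∧
        s.sum ≤ W ∧ x = mon w s}

noncomputable def Red (w : ℕ → F) (q c W : ℕ) : Submodule K F :=
  Submodule.span K (Gen w q c W)

lemma Gen_mono (w : ℕ → F) (q c : ℕ) {W W' : ℕ} (h : W ≤ W') :
    Gen w q c W ⊆ Gen w q c W' := by
  rintro x (⟨s, N, h1, h2, h3, rfl⟩ | ⟨s, h1, h2, h3, rfl⟩)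
  · exact Or.inl ⟨s, N, h1, h2, le_trans h3 h, rfl⟩
  · exact Or.inr ⟨s, h1, h2, le_trans h3 h, rfl⟩

lemma Red_mono (w : ℕ → F) (q c : ℕ) {W W' : ℕ} (h : W ≤ W') :
    Red K w q c W ≤ Red K w q c W' :=
  Submodule.span_mono (Gen_mono w q c h)

lemma memI (w : ℕ → F) {q c W : ℕ} {s : Multiset ℕ} {N : ℕ}
    (h1 : ∀ i ∈ s, 1 ≤ i ∧ i ≤ q) (h2 : c + 1 ≤ N) (h3 : s.sum + N ≤ W) :
    mon w s * Af w q N ∈ Red K w q c W :=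
  Submodule.subset_span (Or.inl ⟨s, N, h1, h2, h3, rfl⟩)

lemma memE (w : ℕ → F) {q c W : ℕ} {s : Multiset ℕ}
    (h1 : ∀ i ∈ s, 1 ≤ i ∧ i ≤ q) (h2 : Multiset.card s ≤ c) (h3 : s.sum ≤ W) :
    mon w s ∈ Red K w q c W :=
  Submodule.subset_span (Or.inr ⟨s, h1, h2, h3, rfl⟩)

/-- pushing multiplication through a span -/
lemma mul_mem_of_span {S : Set F} {p : Submodule K F} {c x : F}
    (h : ∀ t ∈ S, c * t ∈ p) (hx : x ∈ Submodule.span K S) : c * x ∈ p := by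
  induction hx using Submodule.span_induction with
  | mem t ht => exact h t ht
  | zero => rw [mul_zero]; exact p.zero_mem
  | add u v _ _ hu hv => rw [mul_add]; exact p.add_mem hu hv
  | smul a u _ hu => rw [mul_smul_comm]; exact p.smul_mem a hu

/-- `w a` itself is in the `c = 0` ideal slice. -/
lemma wk_mem (w : ℕ → F) {q a : ℕ} (ha1 : 1 ≤ a) (haq : a ≤ q) :
    w a ∈ Red K w q 0 a := by
  have h := Af_rel w q a ha1
  have hmin : min a q = a := by omega
  rw [hmin] at h
  obtain ⟨a', rfl⟩ : ∃ a', a = a' + 1 := ⟨a - 1, by omega⟩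
  rw [Finset.sum_Icc_succ_top (by omega : 1 ≤ a' + 1)] at h
  have h0 : a' + 1 - (a' + 1) = 0 := by omega
  rw [h0, Af_zero, mul_one] at h
  have : w (a' + 1) = - Af w q (a' + 1) - ∑ j ∈ Finset.Icc 1 a', w j * Af w q (a' + 1 - j) := by
    linear_combination h
  rw [this]
  refine Submodule.sub_mem _ (Submodule.neg_mem _ ?_) (Submodule.sum_mem _ ?_)
  · have : Af w q (a' + 1) = mon w 0 * Af w q (a' + 1) := by rw [mon_zero, one_mul]
    rw [this]
    exact memI K w (by simp) (by omega) (by simp)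
  · intro j hj
    obtain ⟨hj1, hj2⟩ := Finset.mem_Icc.mp hj
    have : w j * Af w q (a' + 1 - j) = mon w {j} * Af w q (a' + 1 - j) := by
      simp [mon]
    rw [this]
    exact memI K w (by simpa using ⟨hj1, by omega⟩) (by omega) (by simp; omega)

/-- multiplication by `w q` raises the allowed number of factors by one. -/
lemma mulQ (w : ℕ → F) {q c W : ℕ} (hq : 1 ≤ q) {x : F}
    (hx : x ∈ Red K w q c W) : w q * x ∈ Red K w q (c+1) (W + q) := by
  refine mul_mem_of_span K ?_ hx
  rintro t (⟨s, N, h1, h2, h3, rfl⟩ | ⟨s, h1, h2, h3, rfl⟩)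
  · -- t = mon s * Af N with N ≥ c+1
    rcases Nat.lt_or_ge N (c + 2) with hN | hN
    · -- N = c + 1 : use the exchange identity
      have hNc : N = c + 1 := by omega
      subst hNc
      rw [show w q * (mon w s * Af w q (c+1)) = mon w s * (w q * Af w q (c+1)) by ring,
        Af_X w hq (c+1)]
      rw [mul_sub, mul_neg, Finset.mul_sum]
      refine Submodule.sub_mem _ (Submodule.neg_mem _ ?_) (Submodule.sum_mem _ ?_)
      · exact memI K w h1 (by omega) (by omega)
      · intro j hj
        obtain ⟨hj1, hj2⟩ := Finset.mem_Icc.mp hj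
        rw [show mon w s * (w j * Af w q (c + 1 + q - j)) =
          mon w (j ::ₘ s) * Af w q (c + 1 + q - j) by rw [mon_cons]; ring]
        refine memI K w ?_ (by omega) ?_
        · intro i hi
          rcases Multiset.mem_cons.mp hi with rfl | hi
          · exact ⟨hj1, by omega⟩
          · exact h1 i hi
        · rw [Multiset.sum_cons]; omega
    · -- N ≥ c + 2 : absorb w q into the monomial
      rw [show w q * (mon w s * Af w q N) = mon w (q ::ₘ s) * Af w q N by
        rw [mon_cons]; ring]
      refine memI K w ?_ (by omega) ?_
      · intro i hi
        rcases Multiset.mem_cons.mp hi with h' | hi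
        · subst h'; exact ⟨hq, le_refl _⟩
        · exact h1 i hi
      · rw [Multiset.sum_cons]; omega
  · -- t = mon s, short monomial
    rw [show w q * mon w s = mon w (q ::ₘ s) by rw [mon_cons]]
    refine memE K w ?_ ?_ ?_
    · intro i hi
      rcases Multiset.mem_cons.mp hi with h' | hi
      · subst h'; exact ⟨hq, le_refl _⟩
      · exact h1 i hi
    · rw [Multiset.card_cons]; omega
    · rw [Multiset.sum_cons]; omega

/-- `Af` is a combination of monomials of bounded weight. -/
lemma Af_mon (w : ℕ → F) (q : ℕ) : ∀ N : ℕ, Af w q N ∈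
    Submodule.span K {x | ∃ s : Multiset ℕ, (∀ i ∈ s, 1 ≤ i ∧ i ≤ q) ∧ s.sum ≤ N ∧ x = mon w s} := by
  intro N
  induction N using Nat.strong_induction_on with
  | _ N IH =>
    match N with
    | 0 =>
      rw [Af_zero]
      exact Submodule.subset_span ⟨0, by simp, by simp, (mon_zero w).symm⟩
    | (M+1) =>
      rw [Af_succ]
      refine Submodule.neg_mem _ (Submodule.sum_mem _ ?_)
      intro j hj
      obtain ⟨hj1, hj2⟩ := Finset.mem_Icc.mp hj
      refine mul_mem_of_span K ?_ (IH (M+1-j) (by omega))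
      rintro t ⟨s, h1, h2, rfl⟩
      rw [← mon_cons]
      refine Submodule.subset_span ⟨j ::ₘ s, ?_, ?_, rfl⟩
      · intro i hi
        rcases Multiset.mem_cons.mp hi with h' | hi
        · subst h'; exact ⟨hj1, by omega⟩
        · exact h1 i hi
      · rw [Multiset.sum_cons]; omega

/-- difference between consecutive truncations is a multiple of `w q`. -/
lemma Af_delta (w : ℕ → F) {q : ℕ} (hq : 1 ≤ q) : ∀ N : ℕ,
    Af w q N - Af w (q-1) N ∈ Submodule.span K
      {x | ∃ s : Multiset ℕ, (∀ i ∈ s, 1 ≤ i ∧ i ≤ q) ∧ q + s.sum ≤ N ∧ x = w q * mon w s} := by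
  intro N
  induction N using Nat.strong_induction_on with
  | _ N IH =>
    match N with
    | 0 => simp
    | (M+1) =>
      rw [Af_succ w q M, Af_succ w (q-1) M]
      rcases Nat.lt_or_ge M (q - 1) with hM | hM
      · -- M + 1 ≤ q - 1 : same index sets
        have hmin1 : min (M+1) q = M+1 := by omega
        have hmin2 : min (M+1) (q-1) = M+1 := by omega
        rw [hmin1, hmin2]
        have heq : -∑ j ∈ Finset.Icc 1 (M+1), w j * Af w q (M + 1 - j)
              - -∑ j ∈ Finset.Icc 1 (M+1), w j * Af w (q-1) (M + 1 - j)
            = -∑ j ∈ Finset.Icc 1 (M+1), w j * (Af w q (M + 1 - j) - Af w (q-1) (M + 1 - j)) := by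
          simp only [mul_sub]
          rw [Finset.sum_sub_distrib]
          ring
        rw [heq]
        refine Submodule.neg_mem _ (Submodule.sum_mem _ ?_)
        intro j hj
        obtain ⟨hj1, hj2⟩ := Finset.mem_Icc.mp hj
        refine mul_mem_of_span K ?_ (IH (M+1-j) (by omega))
        rintro t ⟨s, h1, h2, rfl⟩
        rw [show w j * (w q * mon w s) = w q * mon w (j ::ₘ s) by rw [mon_cons]; ring]
        refine Submodule.subset_span ⟨j ::ₘ s, ?_, ?_, rfl⟩
        · intro i hi
          rcases Multiset.mem_cons.mp hi with h' | hi
          · subst h'; exact ⟨hj1, by omega⟩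
          · exact h1 i hi
        · rw [Multiset.sum_cons]; omega
      · -- M + 1 > q - 1, i.e. M + 1 ≥ q : extra term with index q
        have hmin1 : min (M+1) q = q := by omega
        have hmin2 : min (M+1) (q-1) = q - 1 := by omega
        rw [hmin1, hmin2]
        obtain ⟨q', rfl⟩ : ∃ q', q = q' + 1 := ⟨q - 1, by omega⟩
        have hq' : q' + 1 - 1 = q' := by omega
        rw [hq', Finset.sum_Icc_succ_top (by omega : 1 ≤ q' + 1)]
        have heq : -(∑ j ∈ Finset.Icc 1 q', w j * Af w (q'+1) (M + 1 - j)
              + w (q'+1) * Af w (q'+1) (M + 1 - (q'+1)))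
              - -∑ j ∈ Finset.Icc 1 q', w j * Af w q' (M + 1 - j)
            = -(∑ j ∈ Finset.Icc 1 q', w j * (Af w (q'+1) (M + 1 - j) - Af w q' (M + 1 - j)))
              - w (q'+1) * Af w (q'+1) (M + 1 - (q'+1)) := by
          simp only [mul_sub]
          rw [Finset.sum_sub_distrib]
          ring
        rw [heq]
        refine Submodule.sub_mem _ (Submodule.neg_mem _ (Submodule.sum_mem _ ?_)) ?_
        · intro j hj
          obtain ⟨hj1, hj2⟩ := Finset.mem_Icc.mp hj
          have IH' := IH (M+1-j) (by omega)
          rw [hq'] at IH'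
          refine mul_mem_of_span K ?_ IH'
          rintro t ⟨s, h1, h2, rfl⟩
          rw [show w j * (w (q'+1) * mon w s) = w (q'+1) * mon w (j ::ₘ s) by
            rw [mon_cons]; ring]
          refine Submodule.subset_span ⟨j ::ₘ s, ?_, ?_, rfl⟩
          · intro i hi
            rcases Multiset.mem_cons.mp hi with h' | hi
            · subst h'; exact ⟨hj1, by omega⟩
            · exact h1 i hi
          · rw [Multiset.sum_cons]; omega
        · refine mul_mem_of_span K ?_ (Af_mon K w (q'+1) (M + 1 - (q'+1)))
          rintro t ⟨s, h1, h2, rfl⟩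
          refine Submodule.subset_span ⟨s, h1, by omega, rfl⟩

/-- the case `c = 0` of the universal lemma. -/
lemma UL0 (w : ℕ → F) (q : ℕ) : ∀ s : Multiset ℕ,
    (∀ i ∈ s, 1 ≤ i ∧ i ≤ q) → mon w s ∈ Red K w q 0 s.sum := by
  intro s
  induction s using Multiset.induction_on with
  | empty => intro _; exact memE K w (by simp) (by simp) (by simp)
  | cons a s IH =>
    intro hs
    have ha := hs a (Multiset.mem_cons_self a s)
    have hs' : ∀ i ∈ s, 1 ≤ i ∧ i ≤ q := fun i hi => hs i (Multiset.mem_cons_of_mem hi)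
    rw [mon_cons]
    have hsum : (a ::ₘ s).sum = a + s.sum := by rw [Multiset.sum_cons]
    rw [hsum]
    refine mul_mem_of_span K ?_ (IH hs')
    rintro t (⟨ρ, N, h1, h2, h3, rfl⟩ | ⟨ρ, h1, h2, h3, rfl⟩)
    · rw [show w a * (mon w ρ * Af w q N) = mon w (a ::ₘ ρ) * Af w q N by
        rw [mon_cons]; ring]
      refine memI K w ?_ h2 ?_
      · intro i hi
        rcases Multiset.mem_cons.mp hi with h' | hi
        · subst h'; exact ha
        · exact h1 i hi
      · rw [Multiset.sum_cons]; omega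
    · have hρ : ρ = 0 := Multiset.card_eq_zero.mp (by omega)
      subst hρ
      rw [mon_zero, mul_one]
      exact Red_mono K w q 0 (by omega) (wk_mem K w ha.1 ha.2)

/-- lifting a membership from truncation level `q - 1` to level `q`. -/
lemma RedLift (w : ℕ → F) {q c : ℕ} (hq : 1 ≤ q)
    (IH : ∀ t : Multiset ℕ, (∀ i ∈ t, 1 ≤ i ∧ i ≤ q) → mon w t ∈ Red K w q c t.sum) :
    ∀ {x : F} {W : ℕ}, x ∈ Red K w (q-1) (c+1) W → x ∈ Red K w q (c+1) W := by
  intro x W hx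
  refine Submodule.span_le.mpr ?_ hx
  rintro t (⟨ρ, N, h1, h2, h3, rfl⟩ | ⟨ρ, h1, h2, h3, rfl⟩)
  · have h1' : ∀ i ∈ ρ, 1 ≤ i ∧ i ≤ q := by
      intro i hi; have := h1 i hi; omega
    have key : mon w ρ * Af w (q-1) N =
        mon w ρ * Af w q N - mon w ρ * (Af w q N - Af w (q-1) N) := by ring
    rw [key]
    refine Submodule.sub_mem _ (memI K w h1' h2 h3) ?_
    refine mul_mem_of_span K ?_ (Af_delta K w hq N)
    rintro u ⟨t', ht'1, ht'2, rfl⟩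
    rw [show mon w ρ * (w q * mon w t') = w q * mon w (ρ + t') by rw [mon_add]; ring]
    have h5 : mon w (ρ + t') ∈ Red K w q c (ρ + t').sum := by
      refine IH _ ?_
      intro i hi
      rcases Multiset.mem_add.mp hi with hi | hi
      · exact h1' i hi
      · exact ht'1 i hi
    have h6 := mulQ K w hq h5
    refine Red_mono K w q (c+1) ?_ h6
    rw [Multiset.sum_add]
    omega
  · refine memE K w ?_ h2 h3
    intro i hi; have := h1 i hi; omega

/-- **The universal spanning lemma.** -/
lemma UL (w : ℕ → F) : ∀ (k q c : ℕ) (s : Multiset ℕ), q + c ≤ k →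
    (∀ i ∈ s, 1 ≤ i ∧ i ≤ q) → mon w s ∈ Red K w q c s.sum := by
  intro k
  induction k with
  | zero =>
    intro q c s hk hs
    have hc : c = 0 := by omega
    subst hc
    exact UL0 K w q s hs
  | succ k ihk =>
    intro q c s hk hs
    match c with
    | 0 => exact UL0 K w q s hs
    | (c+1) =>
      rcases Nat.eq_zero_or_pos q with hq0 | hq1
      · have hs0 : s = 0 := by
          refine Multiset.eq_zero_of_forall_notMem ?_
          intro i hi
          have := hs i hi
          omega
        subst hs0
        exact memE K w (by simp) (by simp) (by simp)
      · by_cases hqs : q ∈ s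
        · obtain ⟨t, rfl⟩ := Multiset.exists_cons_of_mem hqs
          have ht : ∀ i ∈ t, 1 ≤ i ∧ i ≤ q := fun i hi => hs i (Multiset.mem_cons_of_mem hi)
          have h1 : mon w t ∈ Red K w q c t.sum := ihk q c t (by omega) ht
          have h2 := mulQ K w hq1 h1
          rw [mon_cons]
          have hsum : (q ::ₘ t).sum = t.sum + q := by rw [Multiset.sum_cons]; omega
          rw [hsum]
          exact h2
        · have hs' : ∀ i ∈ s, 1 ≤ i ∧ i ≤ q - 1 := by
            intro i hi
            have h' := hs i hi
            have : i ≠ q := fun h => hqs (h ▸ hi)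
            omega
          have h1 : mon w s ∈ Red K w (q-1) (c+1) s.sum := ihk (q-1) (c+1) s (by omega) hs'
          exact RedLift K w hq1 (fun t ht => ihk q c t (by omega) ht) h1

end Spans

section Derivation

variable (D : F → F) (Dadd : ∀ x z : F, D (x + z) = D x + D z)
  (Dmul : ∀ x z : F, D (x * z) = x * D z + z * D x)

include Dadd in
lemma D_zero : D 0 = 0 := by
  have h := Dadd 0 0
  rw [add_zero] at h
  exact (left_eq_add.mp h)

include Dmul in
lemma D_one : D 1 = 0 := by
  have h := Dmul 1 1
  rw [mul_one, one_mul] at h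
  exact (left_eq_add.mp h)

include Dadd Dmul in
lemma D_natCast (n : ℕ) : D (n : F) = 0 := by
  induction n with
  | zero => simpa using D_zero D Dadd
  | succ n IH =>
    push_cast
    rw [Dadd, IH, D_one D Dmul, add_zero]

include Dadd in
lemma D_sum {α : Type*} (s : Finset α) (f : α → F) :
    D (∑ i ∈ s, f i) = ∑ i ∈ s, D (f i) := by
  classical
  induction s using Finset.induction_on with
  | empty => simpa using D_zero D Dadd
  | insert _ _ hx IH =>
    rw [Finset.sum_insert hx, Dadd, IH, Finset.sum_insert hx]

include Dadd Dmul in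
lemma iter_leibniz (a b : F) : ∀ N : ℕ,
    D^[N] (a * b) = ∑ i ∈ Finset.range (N+1), (N.choose i : F) * (D^[i] a * D^[N - i] b) := by
  intro N
  induction N with
  | zero => simp
  | succ N IH =>
    rw [Function.iterate_succ_apply', IH, D_sum D Dadd]
    have hterm : ∀ i ∈ Finset.range (N+1),
        D ((N.choose i : F) * (D^[i] a * D^[N - i] b)) =
        (N.choose i : F) * (D^[i] a * D^[N + 1 - i] b)
          + (N.choose i : F) * (D^[i + 1] a * D^[N - i] b) := by
      intro i hi
      have hiN : i ≤ N := by
        have := Finset.mem_range.mp hi; omega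
      have hsub : N - i + 1 = N + 1 - i := by omega
      rw [Dmul, D_natCast D Dadd Dmul, mul_zero, add_zero, Dmul]
      rw [← Function.iterate_succ_apply' D i a, ← Function.iterate_succ_apply' D (N - i) b]
      simp only [Nat.succ_eq_add_one, hsub]
      ring
    rw [Finset.sum_congr rfl hterm, Finset.sum_add_distrib]
    have key : ∀ f : ℕ → F, ∑ i ∈ Finset.range (N+2), f i
        = f 0 + ∑ i ∈ Finset.range (N+1), f (i+1) := by
      intro f
      rw [Finset.sum_range_succ']
      ring
    rw [key (fun i => (((N+1).choose i : ℕ) : F) * (D^[i] a * D^[N + 1 - i] b))]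
    have e3 : ∑ i ∈ Finset.range (N+1), (N.choose i : F) * (D^[i] a * D^[N + 1 - i] b)
        = (D^[0] a * D^[N + 1] b)
          + ∑ i ∈ Finset.range (N+1), (N.choose (i+1) : F) * (D^[i+1] a * D^[N + 1 - (i+1)] b) := by
      have t1 := key (fun i => ((N.choose i : ℕ) : F) * (D^[i] a * D^[N + 1 - i] b))
      have t2 : ∑ i ∈ Finset.range (N+2), ((N.choose i : ℕ) : F) * (D^[i] a * D^[N + 1 - i] b)
          = ∑ i ∈ Finset.range (N+1), ((N.choose i : ℕ) : F) * (D^[i] a * D^[N + 1 - i] b) := by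
        rw [Finset.sum_range_succ, Nat.choose_succ_self]
        push_cast
        ring
      rw [t2] at t1
      simp only [Nat.choose_zero_right, Nat.cast_one, one_mul, Nat.sub_zero] at t1
      rw [t1]
    rw [e3]
    have e4 : ∀ i ∈ Finset.range (N+1),
        (N.choose i : F) * (D^[i + 1] a * D^[N - i] b)
        = (N.choose i : F) * (D^[i + 1] a * D^[N + 1 - (i+1)] b) := by
      intro i hi
      have : N - i = N + 1 - (i + 1) := by omega
      rw [this]
    rw [Finset.sum_congr rfl e4]
    have e5 : ∀ i ∈ Finset.range (N+1),
        (((N+1).choose (i+1) : ℕ) : F) * (D^[i+1] a * D^[N + 1 - (i+1)] b)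
        = (N.choose (i+1) : F) * (D^[i+1] a * D^[N + 1 - (i+1)] b)
          + (N.choose i : F) * (D^[i+1] a * D^[N + 1 - (i+1)] b) := by
      intro i hi
      rw [Nat.choose_succ_succ']
      push_cast
      ring
    rw [Finset.sum_congr rfl e5, Finset.sum_add_distrib]
    simp only [Nat.choose_zero_right, Nat.cast_one, one_mul, Nat.sub_zero,
      Function.iterate_zero_apply]
    ring

include Dadd Dmul in
/-- All iterated derivatives of a solution of a linear ODE lie in the span of the first `r`. -/
lemma ode_span {DK : K → K} (Dcomp : ∀ x : K, D (algebraMap K F x) = algebraMap K F (DK x))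
    (x : F) (r : ℕ) (cf : ℕ → K) (hcr : cf r ≠ 0) (hr : 1 ≤ r)
    (hode : ∑ i ∈ Finset.range (r+1), algebraMap K F (cf i) * D^[i] x = 0) :
    ∀ i, D^[i] x ∈ Submodule.span K {t | ∃ l, l < r ∧ t = D^[l] x} := by
  set S := Submodule.span K {t | ∃ l, l < r ∧ t = D^[l] x} with hS
  have hgen : ∀ l, l < r → D^[l] x ∈ S := fun l hl => Submodule.subset_span ⟨l, hl, rfl⟩
  have htop : D^[r] x ∈ S := by
    rw [Finset.sum_range_succ] at hode
    have h2 : algebraMap K F (cf r) * D^[r] x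
        = - ∑ i ∈ Finset.range r, algebraMap K F (cf i) * D^[i] x := by
      linear_combination hode
    have h3 : D^[r] x = algebraMap K F (cf r)⁻¹ * (algebraMap K F (cf r) * D^[r] x) := by
      rw [← mul_assoc, ← map_mul, inv_mul_cancel₀ hcr, map_one, one_mul]
    rw [h3, h2, ← Algebra.smul_def]
    refine Submodule.smul_mem _ _ (Submodule.neg_mem _ (Submodule.sum_mem _ ?_))
    intro i hi
    rw [← Algebra.smul_def]
    exact Submodule.smul_mem _ _ (hgen i (Finset.mem_range.mp hi))
  have hstab : ∀ t ∈ S, D t ∈ S := by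
    intro t ht
    induction ht using Submodule.span_induction with
    | mem u hu =>
      obtain ⟨l, hl, rfl⟩ := hu
      rw [← Function.iterate_succ_apply' D l x]
      rcases Nat.lt_or_ge (l+1) r with h | h
      · exact hgen _ h
      · have hlr : l.succ = r := by omega
        rw [hlr]
        exact htop
    | zero => rw [D_zero D Dadd]; exact S.zero_mem
    | add u v _ _ hu hv => rw [Dadd]; exact S.add_mem hu hv
    | smul c u hu hDu =>
      rw [Algebra.smul_def, Dmul, Dcomp]
      refine S.add_mem ?_ ?_
      · rw [← Algebra.smul_def]
        exact Submodule.smul_mem _ _ hDu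
      · rw [mul_comm, ← Algebra.smul_def]
        exact Submodule.smul_mem _ _ hu
  intro i
  induction i with
  | zero => exact hgen 0 hr
  | succ i IH =>
    rw [Function.iterate_succ_apply']
    exact hstab _ IH

end Derivation

section Weighted

variable (K) (w : ℕ → F)

/-- span of monomials of weight at most `W` -/
noncomputable def TwS (q W : ℕ) : Submodule K F :=
  Submodule.span K {x | ∃ s : Multiset ℕ, (∀ i ∈ s, 1 ≤ i ∧ i ≤ q) ∧ s.sum ≤ W ∧ x = mon w s}

/-- span of monomials with at most `c` factors -/
noncomputable def EfS (q c : ℕ) : Submodule K F :=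
  Submodule.span K {x | ∃ s : Multiset ℕ, (∀ i ∈ s, 1 ≤ i ∧ i ≤ q) ∧ Multiset.card s ≤ c ∧ x = mon w s}

lemma mem_TwS {q W : ℕ} {s : Multiset ℕ} (h1 : ∀ i ∈ s, 1 ≤ i ∧ i ≤ q) (h2 : s.sum ≤ W) :
    mon w s ∈ TwS K w q W :=
  Submodule.subset_span ⟨s, h1, h2, rfl⟩

lemma TwS_mono (q : ℕ) {W W' : ℕ} (h : W ≤ W') : TwS K w q W ≤ TwS K w q W' := by
  refine Submodule.span_mono ?_
  rintro x ⟨s, h1, h2, rfl⟩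
  exact ⟨s, h1, le_trans h2 h, rfl⟩

lemma TwS_mul {q a b : ℕ} {x₁ x₂ : F} (hx : x₁ ∈ TwS K w q a) (hy : x₂ ∈ TwS K w q b) :
    x₁ * x₂ ∈ TwS K w q (a + b) := by
  refine mul_mem_of_span K ?_ hy
  rintro t ⟨s, h1, h2, rfl⟩
  rw [mul_comm]
  refine mul_mem_of_span K ?_ hx
  rintro u ⟨s', h1', h2', rfl⟩
  rw [← mon_add]
  refine mem_TwS K w ?_ ?_
  · intro i hi
    rcases Multiset.mem_add.mp hi with hi | hi
    · exact h1 i hi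
    · exact h1' i hi
  · rw [Multiset.sum_add]; omega

lemma one_mem_TwS (q W : ℕ) : (1 : F) ∈ TwS K w q W := by
  have : (1 : F) = mon w 0 := (mon_zero w).symm
  rw [this]
  exact mem_TwS K w (by simp) (by simp)

end Weighted

section Elements

/-- divided iterated logarithmic-type derivatives -/
noncomputable def abarF (D : F → F) (y : F) (i : ℕ) : F :=
  D^[i] y * y⁻¹ / ((i.factorial : ℕ) : F)

noncomputable def bbarF (D : F → F) (y : F) (k : ℕ) : F :=
  D^[k] y⁻¹ * y / ((k.factorial : ℕ) : F)

lemma abarF_zero {D : F → F} {y : F} (hy : y ≠ 0) : abarF D y 0 = 1 := by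
  simp [abarF, mul_inv_cancel₀ hy]

lemma bbarF_zero {D : F → F} {y : F} (hy : y ≠ 0) : bbarF D y 0 = 1 := by
  simp [bbarF, inv_mul_cancel₀ hy]

variable (D : F → F) (Dadd : ∀ x z : F, D (x + z) = D x + D z)
  (Dmul : ∀ x z : F, D (x * z) = x * D z + z * D x)

include Dadd Dmul in
lemma key_rel [CharZero F] {y : F} (hy : y ≠ 0) :
    ∀ N : ℕ, 1 ≤ N → ∑ i ∈ Finset.range (N+1), abarF D y i * bbarF D y (N - i) = 0 := by
  intro N hN
  have hone : ∀ M : ℕ, 1 ≤ M → D^[M] (1 : F) = 0 := by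
    intro M hM
    obtain ⟨M', rfl⟩ : ∃ M', M = M' + 1 := ⟨M - 1, by omega⟩
    have hz : ∀ M'' : ℕ, D^[M''] (0 : F) = 0 := by
      intro M''
      induction M'' with
      | zero => rfl
      | succ M'' IH => rw [Function.iterate_succ_apply', IH, D_zero D Dadd]
    rw [Function.iterate_succ_apply, D_one D Dmul, hz]
  have hlb : D^[N] (y * y⁻¹) = 0 := by
    rw [mul_inv_cancel₀ hy, hone N hN]
  rw [iter_leibniz D Dadd Dmul y y⁻¹ N] at hlb
  have hterm : ∀ i ∈ Finset.range (N+1), abarF D y i * bbarF D y (N - i)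
      = ((N.factorial : ℕ) : F)⁻¹ * ((N.choose i : F) * (D^[i] y * D^[N - i] y⁻¹)) := by
    intro i hi
    have hiN : i ≤ N := by
      have := Finset.mem_range.mp hi; omega
    have hfac : ((N.choose i : ℕ) : F) * ((i.factorial : ℕ) : F) * (((N-i).factorial : ℕ) : F)
        = ((N.factorial : ℕ) : F) := by
      exact_mod_cast congrArg (fun t : ℕ => (t : F)) (Nat.choose_mul_factorial_mul_factorial hiN)
    have h1 : ((i.factorial : ℕ) : F) ≠ 0 := Nat.cast_ne_zero.mpr i.factorial_ne_zero
    have h2 : (((N-i).factorial : ℕ) : F) ≠ 0 := Nat.cast_ne_zero.mpr (N-i).factorial_ne_zero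
    have h3 : ((N.factorial : ℕ) : F) ≠ 0 := Nat.cast_ne_zero.mpr N.factorial_ne_zero
    have e : abarF D y i * bbarF D y (N-i)
        = (D^[i] y * D^[N-i] y⁻¹) * (((i.factorial:ℕ):F)⁻¹ * (((N-i).factorial:ℕ):F)⁻¹) := by
      rw [abarF, bbarF, div_mul_div_comm]
      rw [show D^[i] y * y⁻¹ * (D^[N - i] y⁻¹ * y) = D^[i] y * D^[N - i] y⁻¹ * (y⁻¹ * y) by
        ring]
      rw [inv_mul_cancel₀ hy, mul_one, div_eq_mul_inv, mul_inv]
    have hscal : (((i.factorial:ℕ):F))⁻¹ * ((((N-i).factorial:ℕ):F))⁻¹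
        = (((N.factorial:ℕ):F))⁻¹ * ((N.choose i : ℕ) : F) := by
      field_simp
      linear_combination -hfac
    rw [e, hscal]
    ring
  rw [Finset.sum_congr rfl hterm, ← Finset.mul_sum, hlb, mul_zero]

end Elements

end HillarAux


open HillarAux Finset Submodule in
theorem iter_logderiv_choose_bound_of_inv'
    (K F : Type*) [Field K] [Field F] [Algebra K F]
    (D : F → F)
    (Dadd : ∀ x z : F, D (x + z) = D x + D z)
    (Dmul : ∀ x z : F, D (x * z) = x * D z + z * D x)
    (DK : K → K)
    (DKadd : ∀ x z : K, DK (x + z) = DK x + DK z)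
    (DKmul : ∀ x z : K, DK (x * z) = x * DK z + z * DK x)
    (Dcomp : ∀ x : K, D (algebraMap K F x) = algebraMap K F (DK x))
    [CharZero K]
    (N₁ N₂ : ℕ) (hN₁ : 1 < N₁) (hN₂ : 1 < N₂)
    (a b : ℕ → K) (haN : a N₁ ≠ 0) (hbN : b N₂ ≠ 0)
    (y : F) (hy : y ≠ 0)
    (h₁ : ∑ i ∈ Finset.range (N₁ + 1), algebraMap K F (a i) * D^[i] y = 0)
    (h₂ : ∑ i ∈ Finset.range (N₂ + 1), algebraMap K F (b i) * D^[i] y⁻¹ = 0) :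
    ∀ j : ℕ, 1 ≤ j → j ≤ N₁ - 1 →
      ∃ P : Polynomial K, P ≠ 0 ∧
        P.natDegree ≤ (N₂ + N₁ - 2).choose (N₁ - 1) ∧
        Polynomial.aeval (D^[j] y / y) P = 0 := by
  classical
  intro j hj1 hj2
  haveI hcharF : CharZero F := charZero_of_injective_algebraMap
    (algebraMap K F).injective
  have hfac : ∀ k : ℕ, ((k.factorial : ℕ) : F) ≠ 0 :=
    fun k => Nat.cast_ne_zero.mpr k.factorial_ne_zero
  -- ODE spans
  have hA := ode_span D Dadd Dmul Dcomp y N₁ a haN (by omega) h₁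
  have hB := ode_span D Dadd Dmul Dcomp y⁻¹ N₂ b hbN (by omega) h₂
  -- transported spans
  have habar_span : ∀ N, (abarF D y) N ∈ span K {x | ∃ l, l < N₁ ∧ x = (abarF D y) l} := by
    intro N
    have h5 : D^[N] y * y⁻¹ ∈
        Submodule.map (LinearMap.mulRight K y⁻¹) (span K {t | ∃ l, l < N₁ ∧ t = D^[l] y}) :=
      ⟨_, hA N, rfl⟩
    rw [Submodule.map_span] at h5
    have h7 : span K ((LinearMap.mulRight K y⁻¹) '' {t | ∃ l, l < N₁ ∧ t = D^[l] y})
        ≤ span K {x | ∃ l, l < N₁ ∧ x = (abarF D y) l} := by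
      refine Submodule.span_le.mpr ?_
      rintro x ⟨t, ⟨l, hl, rfl⟩, rfl⟩
      have hx : (LinearMap.mulRight K y⁻¹) (D^[l] y) = ((l.factorial : ℕ) : K) • (abarF D y) l := by
        rw [LinearMap.mulRight_apply, Algebra.smul_def, map_natCast, abarF]
        field_simp
        exact (mul_div_cancel_right₀ _ (hfac l)).symm
      rw [hx]
      exact Submodule.smul_mem _ _ (Submodule.subset_span ⟨l, hl, rfl⟩)
    have h8 : (abarF D y) N = ((N.factorial : ℕ) : K)⁻¹ • (D^[N] y * y⁻¹) := by
      rw [Algebra.smul_def, map_inv₀, map_natCast, abarF, div_eq_mul_inv, mul_comm]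
    rw [h8]
    exact Submodule.smul_mem _ _ (h7 h5)
  have hbbar_span : ∀ N, (bbarF D y) N ∈ span K {x | ∃ l, l < N₂ ∧ x = (bbarF D y) l} := by
    intro N
    have h5 : D^[N] y⁻¹ * y ∈
        Submodule.map (LinearMap.mulRight K y) (span K {t | ∃ l, l < N₂ ∧ t = D^[l] y⁻¹}) :=
      ⟨_, hB N, rfl⟩
    rw [Submodule.map_span] at h5
    have h7 : span K ((LinearMap.mulRight K y) '' {t | ∃ l, l < N₂ ∧ t = D^[l] y⁻¹})
        ≤ span K {x | ∃ l, l < N₂ ∧ x = (bbarF D y) l} := by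
      refine Submodule.span_le.mpr ?_
      rintro x ⟨t, ⟨l, hl, rfl⟩, rfl⟩
      have hx : (LinearMap.mulRight K y) (D^[l] y⁻¹) = ((l.factorial : ℕ) : K) • (bbarF D y) l := by
        rw [LinearMap.mulRight_apply, Algebra.smul_def, map_natCast, bbarF]
        field_simp
        rw [eq_div_iff (hfac l)]
      rw [hx]
      exact Submodule.smul_mem _ _ (Submodule.subset_span ⟨l, hl, rfl⟩)
    have h8 : (bbarF D y) N = ((N.factorial : ℕ) : K)⁻¹ • (D^[N] y⁻¹ * y) := by
      rw [Algebra.smul_def, map_inv₀, map_natCast, bbarF, div_eq_mul_inv, mul_comm]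
    rw [h8]
    exact Submodule.smul_mem _ _ (h7 h5)
  -- weighted span membership of the (bbarF D y)'s
  have hv_small : ∀ k, 1 ≤ k → k ≤ N₂ - 1 → (bbarF D y) k ∈ TwS K (bbarF D y) (N₂ - 1) k := by
    intro k h1 h2
    have : (bbarF D y) k = mon (bbarF D y) {k} := by simp [mon]
    rw [this]
    refine mem_TwS K (bbarF D y) ?_ ?_
    · intro i hi
      rw [Multiset.mem_singleton] at hi
      subst hi; exact ⟨h1, h2⟩
    · simp
  have hv_any : ∀ k, (bbarF D y) k ∈ TwS K (bbarF D y) (N₂ - 1) (N₂ - 1) := by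
    intro k
    refine Submodule.span_le.mpr ?_ (hbbar_span k)
    rintro x ⟨l, hl, rfl⟩
    rcases Nat.eq_zero_or_pos l with h0 | h1
    · subst h0
      rw [bbarF_zero hy]
      exact one_mem_TwS K (bbarF D y) _ _
    · exact TwS_mono K (bbarF D y) _ (by omega) (hv_small l h1 (by omega))
  have hv_min : ∀ k, 1 ≤ k → (bbarF D y) k ∈ TwS K (bbarF D y) (N₂ - 1) (min k (N₂ - 1)) := by
    intro k hk
    rcases le_or_gt k (N₂ - 1) with h | h
    · rw [min_eq_left h]; exact hv_small k hk h
    · rw [min_eq_right (by omega)]; exact hv_any k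
  -- the divided derivatives of y, in terms of weight
  have hkeyrel := key_rel D Dadd Dmul hy
  have habw0 : ∀ N, (abarF D y) N ∈ TwS K (bbarF D y) (N₂ - 1) N := by
    intro N
    induction N using Nat.strong_induction_on with
    | _ N IH =>
      match N with
      | 0 =>
        rw [abarF_zero hy]
        exact one_mem_TwS K (bbarF D y) _ _
      | (M+1) =>
        have hk := hkeyrel (M+1) (by omega)
        rw [Finset.sum_range_succ] at hk
        have hz : M + 1 - (M+1) = 0 := by omega
        rw [hz] at hk
        rw [bbarF_zero hy, mul_one] at hk
        have hM : (abarF D y) (M+1) = - ∑ i ∈ Finset.range (M+1), (abarF D y) i * (bbarF D y) (M + 1 - i) := by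
          linear_combination hk
        rw [hM]
        refine Submodule.neg_mem _ (Submodule.sum_mem _ ?_)
        intro i hi
        have hiM : i ≤ M := by have := Finset.mem_range.mp hi; omega
        have ht1 : (abarF D y) i ∈ TwS K (bbarF D y) (N₂ - 1) i := IH i (by omega)
        have ht2 : (bbarF D y) (M + 1 - i) ∈ TwS K (bbarF D y) (N₂ - 1) (M + 1 - i) :=
          TwS_mono K (bbarF D y) (N₂ - 1) (min_le_left (M + 1 - i) (N₂ - 1))
            (hv_min (M + 1 - i) (by omega))
        have := TwS_mul K (bbarF D y) ht1 ht2
        exact TwS_mono K (bbarF D y) _ (by omega) this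
  have habw : ∀ N, (abarF D y) N ∈ TwS K (bbarF D y) (N₂ - 1) (N₁ - 1) := by
    intro N
    refine Submodule.span_le.mpr ?_ (habar_span N)
    rintro x ⟨l, hl, rfl⟩
    exact TwS_mono K (bbarF D y) _ (by omega) (habw0 l)
  -- Af approximates (abarF D y) modulo lower weight
  have hdelta : ∀ N, Af (bbarF D y) (N₂ - 1) N - (abarF D y) N ∈ TwS K (bbarF D y) (N₂ - 1) (N - 1) := by
    intro N
    induction N using Nat.strong_induction_on with
    | _ N IH =>
      match N with
      | 0 =>
        rw [Af_zero, abarF_zero hy, sub_self]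
        exact Submodule.zero_mem _
      | (M+1) =>
        -- the `(abarF D y)` recursion, reflected
        have hk := hkeyrel (M+1) (by omega)
        have hrefl := Finset.sum_range_reflect (fun i => (abarF D y) i * (bbarF D y) (M + 1 - i)) (M+2)
        have hre : ∀ i ∈ Finset.range (M+2),
            (abarF D y) (M + 2 - 1 - i) * (bbarF D y) (M + 1 - (M + 2 - 1 - i)) = (bbarF D y) i * (abarF D y) (M + 1 - i) := by
          intro i hi
          have hiM : i ≤ M + 1 := by have := Finset.mem_range.mp hi; omega
          have e1 : M + 2 - 1 - i = M + 1 - i := by omega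
          have e2 : M + 1 - (M + 1 - i) = i := by omega
          rw [e1, e2, mul_comm]
        rw [Finset.sum_congr rfl hre] at hrefl
        rw [← hrefl] at hk
        rw [Finset.sum_range_succ'] at hk
        have hb0 : (bbarF D y) 0 = 1 := bbarF_zero hy
        have hz2 : M + 1 - 0 = M + 1 := by omega
        rw [hb0, hz2, one_mul] at hk
        have habrec : (abarF D y) (M+1) = - ∑ i ∈ Finset.range (M+1), (bbarF D y) (i+1) * (abarF D y) (M + 1 - (i+1)) := by
          linear_combination hk
        -- the Af recursion, in range form
        set t := min (M+1) (N₂ - 1) with ht_def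
        have hAfrec : Af (bbarF D y) (N₂ - 1) (M+1)
            = - ∑ i ∈ Finset.range t, (bbarF D y) (i+1) * Af (bbarF D y) (N₂ - 1) (M + 1 - (i+1)) := by
          rw [Af_succ, ← ht_def, ← Finset.Ico_add_one_right_eq_Icc, Finset.sum_Ico_eq_sum_range]
          congr 1
          refine Finset.sum_congr ?_ ?_
          · congr 1
          · intro i _
            rw [add_comm 1 i]
        -- split the (abarF D y) recursion at t
        have htM : t ≤ M + 1 := by omega
        have hsplit : ∑ i ∈ Finset.range (M+1), (bbarF D y) (i+1) * (abarF D y) (M + 1 - (i+1))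
            = ∑ i ∈ Finset.range t, (bbarF D y) (i+1) * (abarF D y) (M + 1 - (i+1))
              + ∑ i ∈ Finset.Ico t (M+1), (bbarF D y) (i+1) * (abarF D y) (M + 1 - (i+1)) := by
          rw [Finset.range_eq_Ico, ← Finset.sum_Ico_consecutive _ (by omega : 0 ≤ t) (by omega : t ≤ M + 1),
            ← Finset.range_eq_Ico]
        have heq : Af (bbarF D y) (N₂ - 1) (M+1) - (abarF D y) (M+1)
            = - ∑ i ∈ Finset.range t, (bbarF D y) (i+1) * (Af (bbarF D y) (N₂ - 1) (M + 1 - (i+1)) - (abarF D y) (M + 1 - (i+1)))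
              + ∑ i ∈ Finset.Ico t (M+1), (bbarF D y) (i+1) * (abarF D y) (M + 1 - (i+1)) := by
          rw [hAfrec, habrec, hsplit]
          simp only [mul_sub]
          rw [Finset.sum_sub_distrib]
          ring
        rw [heq]
        refine Submodule.add_mem _ (Submodule.neg_mem _ (Submodule.sum_mem _ ?_)) (Submodule.sum_mem _ ?_)
        · intro i hi
          have hit : i < t := Finset.mem_range.mp hi
          rcases Nat.eq_zero_or_pos (M - i) with hMi | hMi
          · -- degenerate term : both Af and (abarF D y) are 1
            have e3 : M + 1 - (i+1) = 0 := by omega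
            rw [e3, Af_zero, abarF_zero hy, sub_self, mul_zero]
            exact Submodule.zero_mem _
          · have ht1 : (bbarF D y) (i+1) ∈ TwS K (bbarF D y) (N₂ - 1) (i+1) := hv_small (i+1) (by omega) (by omega)
            have ht2 := IH (M + 1 - (i+1)) (by omega)
            have := TwS_mul K (bbarF D y) ht1 ht2
            refine TwS_mono K (bbarF D y) _ ?_ this
            omega
        · intro i hi
          obtain ⟨hit, hiM⟩ := Finset.mem_Ico.mp hi
          have hqt : t = N₂ - 1 := by omega
          have ht1 : (bbarF D y) (i+1) ∈ TwS K (bbarF D y) (N₂ - 1) (N₂ - 1) := hv_any (i+1)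
          have ht2 : (abarF D y) (M + 1 - (i+1)) ∈ TwS K (bbarF D y) (N₂ - 1) (M + 1 - (i+1)) := habw0 _
          have := TwS_mul K (bbarF D y) ht1 ht2
          refine TwS_mono K (bbarF D y) _ ?_ this
          omega
  -- MAIN : every monomial lies in the span of short monomials
  have hmain : ∀ W : ℕ, ∀ s : Multiset ℕ, (∀ i ∈ s, 1 ≤ i ∧ i ≤ N₂ - 1) → s.sum ≤ W →
      mon (bbarF D y) s ∈ EfS K (bbarF D y) (N₂ - 1) (N₁ - 1) := by
    intro W
    induction W using Nat.strong_induction_on with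
    | _ W IH =>
      intro s hs hsum
      have h1 := UL K (bbarF D y) ((N₂ - 1) + (N₁ - 1)) (N₂ - 1) (N₁ - 1) s le_rfl hs
      refine Submodule.span_le.mpr ?_ h1
      rintro x (⟨ρ, N, hρ, hN, hw, rfl⟩ | ⟨s', h1', h2', _, rfl⟩)
      · have hsplit : mon (bbarF D y) ρ * Af (bbarF D y) (N₂ - 1) N
            = mon (bbarF D y) ρ * (abarF D y) N + mon (bbarF D y) ρ * (Af (bbarF D y) (N₂ - 1) N - (abarF D y) N) := by ring
        have ht0 : mon (bbarF D y) ρ ∈ TwS K (bbarF D y) (N₂ - 1) ρ.sum := mem_TwS K (bbarF D y) hρ le_rfl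
        have ht1 : mon (bbarF D y) ρ * (abarF D y) N ∈ TwS K (bbarF D y) (N₂ - 1) (ρ.sum + (N - 1)) := by
          refine TwS_mono K (bbarF D y) _ ?_ (TwS_mul K (bbarF D y) ht0 (habw N))
          omega
        have ht2 : mon (bbarF D y) ρ * (Af (bbarF D y) (N₂ - 1) N - (abarF D y) N)
            ∈ TwS K (bbarF D y) (N₂ - 1) (ρ.sum + (N - 1)) :=
          TwS_mul K (bbarF D y) ht0 (hdelta N)
        have htot : mon (bbarF D y) ρ * Af (bbarF D y) (N₂ - 1) N ∈ TwS K (bbarF D y) (N₂ - 1) (ρ.sum + (N - 1)) := by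
          rw [hsplit]; exact Submodule.add_mem _ ht1 ht2
        have hle : TwS K (bbarF D y) (N₂ - 1) (ρ.sum + (N - 1)) ≤ EfS K (bbarF D y) (N₂ - 1) (N₁ - 1) := by
          refine Submodule.span_le.mpr ?_
          rintro x ⟨s'', hc'', hs'', rfl⟩
          exact IH (ρ.sum + (N - 1)) (by omega) s'' hc'' hs''
        exact hle htot
      · exact Submodule.subset_span ⟨s', h1', h2', rfl⟩
  have hTE : ∀ W, TwS K (bbarF D y) (N₂ - 1) W ≤ EfS K (bbarF D y) (N₂ - 1) (N₁ - 1) := by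
    intro W
    refine Submodule.span_le.mpr ?_
    rintro x ⟨s, h1, h2, rfl⟩
    exact hmain W s h1 h2
  -- powers of the logarithmic derivative
  have hωab : D^[j] y / y = ((j.factorial : ℕ) : F) * (abarF D y) j := by
    rw [abarF, div_eq_mul_inv]
    field_simp
    exact (mul_div_cancel_right₀ _ (hfac j)).symm
  have habpowT : ∀ r : ℕ, ((abarF D y) j)^r ∈ TwS K (bbarF D y) (N₂ - 1) (r * (N₁ - 1)) := by
    intro r
    induction r with
    | zero => rw [pow_zero]; exact one_mem_TwS K (bbarF D y) _ _
    | succ r IHr =>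
      rw [pow_succ]
      have := TwS_mul K (bbarF D y) IHr (habw j)
      refine TwS_mono K (bbarF D y) _ ?_ this
      ring_nf
      omega
  have hωpow : ∀ r : ℕ, (D^[j] y / y)^r ∈ EfS K (bbarF D y) (N₂ - 1) (N₁ - 1) := by
    intro r
    rw [hωab, mul_pow]
    have hcast : ((j.factorial : ℕ) : F)^r = algebraMap K F (((j.factorial : ℕ) : K)^r) := by
      rw [map_pow, map_natCast]
    rw [hcast, ← Algebra.smul_def]
    exact Submodule.smul_mem _ _ (hTE _ (habpowT r))
  -- the finite spanning set
  let φ : Sym (Fin N₂) (N₁ - 1) → F := fun σ => mon (bbarF D y) (Multiset.map Fin.val σ.1)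
  let FS : Finset F := Finset.image φ Finset.univ
  have hEFS : EfS K (bbarF D y) (N₂ - 1) (N₁ - 1) ≤ span K (FS : Set F) := by
    refine Submodule.span_le.mpr ?_
    rintro x ⟨s, h1, h2, rfl⟩
    set t : Multiset ℕ := s + Multiset.replicate ((N₁ - 1) - Multiset.card s) 0 with ht_def
    have hmont : mon (bbarF D y) t = mon (bbarF D y) s := by
      rw [ht_def, mon_add]
      have : mon (bbarF D y) (Multiset.replicate ((N₁ - 1) - Multiset.card s) 0)
          = ((bbarF D y) 0)^((N₁ - 1) - Multiset.card s) := by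
        rw [mon, Multiset.map_replicate, Multiset.prod_replicate]
      rw [this, bbarF_zero hy, one_pow, mul_one]
    have hcardt : Multiset.card t = N₁ - 1 := by
      rw [ht_def, Multiset.card_add, Multiset.card_replicate]
      omega
    have htlt : ∀ i ∈ t, i < N₂ := by
      intro i hi
      rw [ht_def] at hi
      rcases Multiset.mem_add.mp hi with hi | hi
      · have := h1 i hi; omega
      · have := Multiset.eq_of_mem_replicate hi; omega
    set m : Multiset (Fin N₂) := t.attach.map (fun x => (⟨x.1, htlt x.1 x.2⟩ : Fin N₂)) with hm_def
    have hmmap : Multiset.map Fin.val m = t := by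
      rw [hm_def, Multiset.map_map]
      exact Multiset.attach_map_val t
    have hcm : Multiset.card m = N₁ - 1 := by
      rw [hm_def, Multiset.card_map, Multiset.card_attach]
      exact hcardt
    have hφ : mon (bbarF D y) s = φ ⟨m, hcm⟩ := by
      show mon (bbarF D y) s = mon (bbarF D y) (Multiset.map Fin.val m)
      rw [hmmap, hmont]
    rw [hφ]
    exact Submodule.subset_span (Finset.mem_coe.mpr (Finset.mem_image_of_mem φ (Finset.mem_univ _)))
  have hcard : FS.card ≤ (N₂ + N₁ - 2).choose (N₁ - 1) := by
    refine le_trans Finset.card_image_le ?_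
    rw [Finset.card_univ]
    rw [Sym.card_sym_eq_choose]
    rw [Fintype.card_fin]
    have : N₂ + (N₁ - 1) - 1 = N₂ + N₁ - 2 := by omega
    rw [this]
  -- linear dependence of the powers
  have hωV : ∀ r : ℕ, (D^[j] y / y)^r ∈ span K (FS : Set F) := fun r => hEFS (hωpow r)
  set d := (N₂ + N₁ - 2).choose (N₁ - 1) with hd_def
  have hnli : ¬ LinearIndependent K
      (fun i : Fin (d+1) => (⟨(D^[j] y / y)^(i:ℕ), hωV i⟩ : span K (FS : Set F))) := by
    intro hli
    have hc := hli.fintype_card_le_finrank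
    rw [Fintype.card_fin] at hc
    have hfr : Module.finrank K (span K (FS : Set F)) ≤ d :=
      le_trans (finrank_span_finset_le_card FS) hcard
    omega
  obtain ⟨g, hg, i₀, hgi⟩ := Fintype.not_linearIndependent_iff.mp hnli
  have hsum : ∑ i : Fin (d+1), g i • (D^[j] y / y)^(i:ℕ) = 0 := by
    have hval := congrArg (Subtype.val) hg
    push_cast at hval
    simpa using hval
  refine ⟨∑ i : Fin (d+1), Polynomial.monomial (i : ℕ) (g i), ?_, ?_, ?_⟩
  · intro h0
    have hco : (∑ i : Fin (d+1), Polynomial.monomial (i : ℕ) (g i)).coeff (i₀ : ℕ) = g i₀ := by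
      rw [Polynomial.finset_sum_coeff]
      rw [Finset.sum_eq_single i₀]
      · simp [Polynomial.coeff_monomial]
      · intro b _ hb
        rw [Polynomial.coeff_monomial, if_neg]
        exact fun hh => hb (Fin.ext hh)
      · intro h; exact absurd (Finset.mem_univ i₀) h
    rw [h0] at hco
    simp only [Polynomial.coeff_zero] at hco
    exact hgi hco.symm
  · refine Polynomial.natDegree_sum_le_of_forall_le _ _ ?_
    intro i _
    refine le_trans (Polynomial.natDegree_monomial_le _) ?_
    have := i.isLt
    omega
  · rw [map_sum]
    have : ∀ i : Fin (d+1), (Polynomial.aeval (D^[j] y / y)) (Polynomial.monomial (i:ℕ) (g i))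
        = g i • (D^[j] y / y)^(i:ℕ) := by
      intro i
      rw [Polynomial.aeval_monomial, ← Algebra.smul_def]
    rw [Finset.sum_congr rfl (fun i _ => this i)]
    exact hsum


/-- **Hillar, Theorem 3.1 (1): tighter degree bound in characteristic zero.**
With `K` of characteristic zero, each `Dʲy/y` (`j = 1, …, N₁ − 1`) satisfies a
nonzero polynomial over `K` of degree at most `binom(N₂ + N₁ − 2, N₁ − 1)`. -/
theorem iter_logderiv_choose_bound_of_inv
    (K F : Type*) [Field K] [Field F] [Algebra K F]
    (D : F → F)
    (Dadd : ∀ x z : F, D (x + z) = D x + D z)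
    (Dmul : ∀ x z : F, D (x * z) = x * D z + z * D x)
    (DK : K → K)
    (DKadd : ∀ x z : K, DK (x + z) = DK x + DK z)
    (DKmul : ∀ x z : K, DK (x * z) = x * DK z + z * DK x)
    (Dcomp : ∀ x : K, D (algebraMap K F x) = algebraMap K F (DK x))
    [CharZero K]
    (N₁ N₂ : ℕ) (hN₁ : 1 < N₁) (hN₂ : 1 < N₂)
    (a b : ℕ → K) (haN : a N₁ ≠ 0) (hbN : b N₂ ≠ 0)
    (y : F) (hy : y ≠ 0)
    (h₁ : ∑ i ∈ Finset.range (N₁ + 1), algebraMap K F (a i) * D^[i] y = 0)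
    (h₂ : ∑ i ∈ Finset.range (N₂ + 1), algebraMap K F (b i) * D^[i] y⁻¹ = 0) :
    ∀ j : ℕ, 1 ≤ j → j ≤ N₁ - 1 →
      ∃ P : Polynomial K, P ≠ 0 ∧
        P.natDegree ≤ (N₂ + N₁ - 2).choose (N₁ - 1) ∧
        Polynomial.aeval (D^[j] y / y) P = 0 := by
  exact iter_logderiv_choose_bound_of_inv' K F D Dadd Dmul DK DKadd DKmul Dcomp
    N₁ N₂ hN₁ hN₂ a b haN hbN y hy h₁ h₂
end
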